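/- arXiv:1904.01343 — 6 statements merged into one kernel-verified Lean document; each statement's English description precedes it below -/
import Mathlib

section
/- Let P ⊂ ℝⁿ be an n-dimensional lattice polytope admitting three pairwise distinct lattice projections φ₁, φ₂, φ₃: ℝⁿ → ℝⁿ⁻¹ each of which maps P onto Δₙ₋₁. Then P is equivalent to the unimodular simplex Δₙ. -/
open Set Pointwise Function

/-- The lattice points of `ℝⁿ` (points with integer coordinates). -/
def intLat (n : ℕ) : Set (Fin n → ℝ) := {x | ∀ i, ∃ m : ℤ, x i = (m : ℝ)}

/-- A lattice polytope: the convex hull of finitely many lattice points. -/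
def IsLatticePolytope {n : ℕ} (P : Set (Fin n → ℝ)) : Prop :=
  ∃ V : Finset (Fin n → ℝ), (V : Set (Fin n → ℝ)) ⊆ intLat n ∧
    P = convexHull ℝ (V : Set (Fin n → ℝ))

/-- The standard unimodular simplex `Δₘ = conv(0, e₁, …, eₘ) ⊂ ℝᵐ`. -/
def unimodSimplex (m : ℕ) : Set (Fin m → ℝ) :=
  convexHull ℝ (insert 0 (Set.range fun i : Fin m => Pi.single i (1 : ℝ)))

/-- Equivalence of lattice polytopes: an affine lattice-preserving transformation
maps one onto the other. -/
def PolyEquiv {n : ℕ} (P Q : Set (Fin n → ℝ)) : Prop :=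
  ∃ T : (Fin n → ℝ) ≃ᵃ[ℝ] (Fin n → ℝ),
    (T : (Fin n → ℝ) → (Fin n → ℝ)) '' intLat n = intLat n ∧
    (T : (Fin n → ℝ) → (Fin n → ℝ)) '' P = Q

namespace ThreeProj

/-- vertices of the unimodular simplex -/
noncomputable def vx (m : ℕ) : Option (Fin m) → (Fin m → ℝ) :=
  fun o => o.elim 0 (fun i => Pi.single i 1)

@[simp] lemma vx_none (m : ℕ) : vx m none = 0 := rfl
@[simp] lemma vx_some (m : ℕ) (i : Fin m) : vx m (some i) = Pi.single i 1 := rfl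

lemma vx_injective (m : ℕ) : Function.Injective (vx m) := by
  intro o o' h
  match o, o' with
  | none, none => rfl
  | none, some i =>
      exfalso
      have := congrFun h i
      simp [vx] at this
  | some i, none =>
      exfalso
      have := congrFun h i
      simp [vx] at this
  | some i, some j =>
      have hc := congrFun h i
      simp only [vx_some, Pi.single_apply, if_pos rfl] at hc
      by_cases hij : i = j
      · rw [hij]
      · rw [if_neg hij] at hc; norm_num at hc

lemma range_vx (m : ℕ) :
    insert (0 : Fin m → ℝ) (Set.range fun i : Fin m => Pi.single i (1 : ℝ)) = Set.range (vx m) := by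
  ext x
  constructor
  · rintro (rfl | ⟨i, rfl⟩)
    · exact ⟨none, rfl⟩
    · exact ⟨some i, rfl⟩
  · rintro ⟨o, rfl⟩
    match o with
    | none => exact Or.inl rfl
    | some i => exact Or.inr ⟨i, rfl⟩

lemma unimodSimplex_eq (m : ℕ) : unimodSimplex m = convexHull ℝ (Set.range (vx m)) := by
  rw [unimodSimplex, range_vx]

lemma unimodSimplex_char (m : ℕ) :
    unimodSimplex m = {x | (∀ i, 0 ≤ x i) ∧ ∑ i, x i ≤ 1} := by
  rw [unimodSimplex_eq]
  apply le_antisymm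
  · apply convexHull_min
    swap
    · intro x hx y hy a b ha hb hab
      refine ⟨fun i => ?_, ?_⟩
      · have h1 := hx.1 i; have h2 := hy.1 i
        simp only [Pi.add_apply, Pi.smul_apply, smul_eq_mul]
        positivity
      have : ∑ i, (a • x + b • y) i = a * ∑ i, x i + b * ∑ i, y i := by
        simp [Finset.mul_sum, Finset.sum_add_distrib]
      rw [this]
      calc a * ∑ i, x i + b * ∑ i, y i ≤ a * 1 + b * 1 := by
            gcongr; exacts [hx.2, hy.2]
        _ = 1 := by rw [mul_one, mul_one, hab]
    · rintro x ⟨o, rfl⟩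
      match o with
      | none => simp
      | some i =>
          constructor
          · intro j; simp [Pi.single_apply]; positivity
          · simp
  · intro x hx
    obtain ⟨hx0, hx1⟩ := hx
    have key : (Finset.univ : Finset (Option (Fin m))).centerMass
        (fun o => o.elim (1 - ∑ i, x i) x) (vx m) = x := by
      rw [Finset.centerMass_eq_of_sum_1]
      · rw [Fintype.sum_option]
        simp only [Option.elim, vx_none, smul_zero, zero_add, vx_some]
        have : ∀ i : Fin m, x i • (Pi.single i (1:ℝ) : Fin m → ℝ) = (Pi.single i (x i) : Fin m → ℝ) := by
          intro i; funext j; simp [Pi.single_apply, mul_ite]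
        simp_rw [this]
        exact Finset.univ_sum_single x
      · rw [Fintype.sum_option]; simp
    rw [← key]
    apply Finset.centerMass_mem_convexHull
    · rintro (_ | i) _
      · simpa using hx1
      · exact hx0 i
    · rw [Fintype.sum_option]; simp
    · intro o _; exact ⟨o, rfl⟩

lemma intLat_sub {n : ℕ} {x y : Fin n → ℝ} (hx : x ∈ intLat n) (hy : y ∈ intLat n) :
    x - y ∈ intLat n := by
  intro i
  obtain ⟨a, ha⟩ := hx i; obtain ⟨b, hb⟩ := hy i
  exact ⟨a - b, by simp [ha, hb]⟩

lemma intLat_add {n : ℕ} {x y : Fin n → ℝ} (hx : x ∈ intLat n) (hy : y ∈ intLat n) :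
    x + y ∈ intLat n := by
  intro i
  obtain ⟨a, ha⟩ := hx i; obtain ⟨b, hb⟩ := hy i
  exact ⟨a + b, by simp [ha, hb]⟩

lemma intLat_zsmul {n : ℕ} {x : Fin n → ℝ} (hx : x ∈ intLat n) (s : ℤ) :
    (s : ℝ) • x ∈ intLat n := by
  intro i
  obtain ⟨a, ha⟩ := hx i
  exact ⟨s * a, by simp [ha, Pi.smul_apply]⟩

lemma intLat_zero (n : ℕ) : (0 : Fin n → ℝ) ∈ intLat n := fun i => ⟨0, by simp⟩

lemma vx_mem_intLat (m : ℕ) (o : Option (Fin m)) : vx m o ∈ intLat m := by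
  match o with
  | none => intro i; exact ⟨0, by simp⟩
  | some j =>
      intro i
      by_cases h : i = j
      · exact ⟨1, by simp [h, Pi.single_apply]⟩
      · exact ⟨0, by simp [Pi.single_apply, h]⟩

lemma simplex_lattice_point {m : ℕ} {x : Fin m → ℝ}
    (h1 : (∀ i, 0 ≤ x i) ∧ ∑ i, x i ≤ 1) (h2 : x ∈ intLat m) :
    ∃ o, x = vx m o := by
  obtain ⟨hpos, hsum⟩ := h1
  by_cases hz : ∀ i, x i = 0
  · exact ⟨none, funext fun i => (hz i)⟩
  · push_neg at hz
    obtain ⟨i, hi⟩ := hz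
    have hone : (1 : ℝ) ≤ x i := by
      obtain ⟨k, hk⟩ := h2 i
      have h0 : (0:ℝ) ≤ (k:ℝ) := hk ▸ hpos i
      have hk0 : (k:ℝ) ≠ 0 := hk ▸ hi
      have hk1 : (1:ℤ) ≤ k := by
        have h0' : (0:ℤ) ≤ k := by exact_mod_cast h0
        have hk0' : k ≠ 0 := by exact_mod_cast hk0
        omega
      rw [hk]; exact_mod_cast hk1
    have hle : x i ≤ ∑ j, x j :=
      Finset.single_le_sum (fun j _ => hpos j) (Finset.mem_univ i)
    have hxi : x i = 1 := le_antisymm (hle.trans hsum) hone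
    have hrest : ∀ j, j ≠ i → x j = 0 := by
      have hsplit : x i + ∑ j ∈ Finset.univ.erase i, x j = ∑ j, x j :=
        Finset.add_sum_erase _ _ (Finset.mem_univ i)
      have h0 : ∑ j ∈ Finset.univ.erase i, x j ≤ 0 := by
        have := hsum; rw [← hsplit, hxi] at this; linarith
      have hz : ∑ j ∈ Finset.univ.erase i, x j = 0 :=
        le_antisymm h0 (Finset.sum_nonneg fun j _ => hpos j)
      intro j hj
      exact (Finset.sum_eq_zero_iff_of_nonneg (fun j _ => hpos j)).mp hz j
        (Finset.mem_erase.mpr ⟨hj, Finset.mem_univ j⟩)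
    refine ⟨some i, funext fun j => ?_⟩
    by_cases h : j = i
    · simp [h, hxi, Pi.single_apply]
    · simp [Pi.single_apply, h, hrest j h]

/-- linear lift -/
noncomputable def Lm (m : ℕ) : (Fin m → ℝ) →ₗ[ℝ] (Option (Fin m) → ℝ) where
  toFun x := fun o => o.elim (-∑ i, x i) x
  map_add' x y := by
    funext o
    match o with
    | none => simp [Finset.sum_add_distrib]; ring
    | some j => rfl
  map_smul' c x := by
    funext o
    match o with
    | none => simp [Finset.mul_sum]
    | some j => rfl

lemma Lm_vx (m : ℕ) (o : Option (Fin m)) :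
    Lm m (vx m o) = Pi.single o 1 - Pi.single none 1 := by
  funext o'
  match o with
  | none =>
      match o' with
      | none => simp [Lm, Pi.single_apply]
      | some j => simp [Lm, Pi.single_apply]
  | some i =>
      match o' with
      | none => simp [Lm, Pi.single_apply]
      | some j => simp [Lm, Pi.single_apply]

lemma Lm_vx_sub (m : ℕ) (p q : Option (Fin m)) :
    Lm m (vx m q - vx m p) = Pi.single q 1 - Pi.single p 1 := by
  rw [map_sub, Lm_vx, Lm_vx]
  abel

lemma single_pair_unique {ι : Type*} [DecidableEq ι] {p q r s : ι}
    (h : (Pi.single q 1 : ι → ℝ) - Pi.single p 1 = Pi.single s 1 - Pi.single r 1)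
    (hpq : p ≠ q) : p = r ∧ q = s := by
  have hq := congrFun h q
  simp only [Pi.sub_apply, Pi.single_apply, if_pos rfl] at hq
  rw [if_neg (fun e : q = p => hpq e.symm)] at hq
  by_cases hsq : q = s
  · by_cases hrq : q = r
    · rw [if_pos hsq, if_pos hrq] at hq; norm_num at hq
    · subst hsq
      refine ⟨?_, rfl⟩
      have h' : (Pi.single p 1 : ι → ℝ) = Pi.single r 1 := sub_right_inj.mp h
      have hp := congrFun h' p
      simp only [Pi.single_apply, if_pos rfl] at hp
      by_cases hpr : p = r
      · exact hpr
      · rw [if_neg hpr] at hp; norm_num at hp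
  · by_cases hrq : q = r
    · rw [if_neg hsq, if_pos hrq] at hq; norm_num at hq
    · rw [if_neg hsq, if_neg hrq] at hq; norm_num at hq

lemma single_lambda_pm {ι : Type*} [DecidableEq ι] {p q r s : ι} {c : ℝ}
    (h : (Pi.single q 1 : ι → ℝ) - Pi.single p 1 = c • (Pi.single s 1 - Pi.single r 1))
    (hpq : p ≠ q) (hrs : r ≠ s) : c = 1 ∨ c = -1 := by
  have hq := congrFun h q
  simp only [Pi.sub_apply, Pi.smul_apply, Pi.single_apply, if_pos rfl, smul_eq_mul] at hq
  rw [if_neg (fun e : q = p => hpq e.symm)] at hq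
  by_cases hsq : q = s
  · by_cases hrq : q = r
    · exact absurd (hrq.symm.trans hsq) hrs
    · rw [if_pos hsq, if_neg hrq] at hq; norm_num at hq; left; linarith
  · by_cases hrq : q = r
    · rw [if_neg hsq, if_pos hrq] at hq; norm_num at hq; right; linarith
    · rw [if_neg hsq, if_neg hrq] at hq; norm_num at hq

lemma vx_pair_unique {m : ℕ} {p q r s : Option (Fin m)}
    (h : vx m q - vx m p = vx m s - vx m r) (hpq : p ≠ q) : p = r ∧ q = s := by
  have := congrArg (Lm m) h
  rw [Lm_vx_sub, Lm_vx_sub] at this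
  exact single_pair_unique this hpq

lemma vx_lambda_pm {m : ℕ} {p q r s : Option (Fin m)} {c : ℝ}
    (h : vx m q - vx m p = c • (vx m s - vx m r)) (hpq : p ≠ q) (hrs : r ≠ s) :
    c = 1 ∨ c = -1 := by
  have := congrArg (Lm m) h
  rw [Lm_vx_sub, map_smul, Lm_vx_sub] at this
  exact single_lambda_pm this hpq hrs

lemma hull_exposed {E : Type*} [AddCommGroup E] [Module ℝ E]
    {S : Finset E} {f : E →ₗ[ℝ] ℝ} {c : ℝ} {v : E}
    (hfv : f v = c) (hle : ∀ y ∈ S, f y ≤ c) (heq : ∀ y ∈ S, f y = c → y = v)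
    (h : v ∈ convexHull ℝ (S : Set E)) : v ∈ S := by
  rw [Finset.convexHull_eq] at h
  obtain ⟨w, hw0, hw1, hcm⟩ := h
  rw [Finset.centerMass_eq_of_sum_1 _ _ hw1] at hcm
  simp only [id] at hcm
  have hfs : ∑ y ∈ S, w y * f y = c := by
    rw [← hfv, ← hcm, map_sum]
    simp [map_smul, smul_eq_mul]
  have hzero : ∑ y ∈ S, w y * (c - f y) = 0 := by
    have : ∑ y ∈ S, w y * (c - f y) = (∑ y ∈ S, w y) * c - ∑ y ∈ S, w y * f y := by
      rw [Finset.sum_mul, ← Finset.sum_sub_distrib]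
      congr 1; funext y; ring
    rw [this, hw1, hfs]; ring
  have hterm : ∀ y ∈ S, w y * (c - f y) = 0 :=
    (Finset.sum_eq_zero_iff_of_nonneg
      (fun y hy => mul_nonneg (hw0 y hy) (sub_nonneg.mpr (hle y hy)))).mp hzero
  obtain ⟨y, hyS, hwy⟩ : ∃ y ∈ S, w y ≠ 0 := by
    by_contra hc
    push_neg at hc
    rw [Finset.sum_eq_zero hc] at hw1
    norm_num at hw1
  have := hterm y hyS
  rcases mul_eq_zero.mp this with h' | h'
  · exact absurd h' hwy
  · have : f y = c := by linarith [sub_eq_zero.mp h']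
    exact (heq y hyS this) ▸ hyS

lemma vx_mem_of_hull {m : ℕ} {S : Finset (Fin m → ℝ)}
    (hS : ∀ y ∈ S, (∀ i, 0 ≤ y i) ∧ ∑ i, y i ≤ 1) {o : Option (Fin m)}
    (h : vx m o ∈ convexHull ℝ (S : Set (Fin m → ℝ))) : vx m o ∈ S := by
  match o with
  | none =>
      refine hull_exposed (f := -∑ k : Fin m, LinearMap.proj k) (c := 0) (by simp [vx]) ?_ ?_ h
      · intro y hy
        simp only [LinearMap.neg_apply, LinearMap.coe_sum, Finset.sum_apply,
          LinearMap.proj_apply, neg_nonpos]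
        exact Finset.sum_nonneg fun i _ => (hS y hy).1 i
      · intro y hy hfy
        simp only [LinearMap.neg_apply, LinearMap.coe_sum, Finset.sum_apply,
          LinearMap.proj_apply, neg_eq_zero] at hfy
        have := (Finset.sum_eq_zero_iff_of_nonneg (fun i _ => (hS y hy).1 i)).mp hfy
        exact funext fun i => this i (Finset.mem_univ i)
  | some k =>
      refine hull_exposed (f := LinearMap.proj k) (c := 1) (by simp [vx]) ?_ ?_ h
      · intro y hy
        simp only [LinearMap.proj_apply]
        exact (Finset.single_le_sum (fun i _ => (hS y hy).1 i) (Finset.mem_univ k)).trans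
          (hS y hy).2
      · intro y hy hfy
        simp only [LinearMap.proj_apply] at hfy
        have hsplit : y k + ∑ j ∈ Finset.univ.erase k, y j = ∑ j, y j :=
          Finset.add_sum_erase _ _ (Finset.mem_univ k)
        have h0 : ∑ j ∈ Finset.univ.erase k, y j ≤ 0 := by
          have := (hS y hy).2; rw [← hsplit, hfy] at this; linarith
        have hz : ∑ j ∈ Finset.univ.erase k, y j = 0 :=
          le_antisymm h0 (Finset.sum_nonneg fun j _ => (hS y hy).1 j)
        have hrest := (Finset.sum_eq_zero_iff_of_nonneg
          (fun j _ => (hS y hy).1 j)).mp hz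
        funext j
        by_cases hj : j = k
        · simp [vx, hj, hfy, Pi.single_apply]
        · simp [vx, Pi.single_apply, hj,
            hrest j (Finset.mem_erase.mpr ⟨hj, Finset.mem_univ j⟩)]

section FinDim
variable {E : Type*} [AddCommGroup E] [Module ℝ E] [FiniteDimensional ℝ E]

lemma span_eq_of_finrank_one {K : Submodule ℝ E} (hK : Module.finrank ℝ K = 1)
    {w : E} (hw : w ∈ K) (hw0 : w ≠ 0) : Submodule.span ℝ {w} = K := by
  apply Submodule.eq_of_le_of_finrank_le
  · rw [Submodule.span_le, Set.singleton_subset_iff]; exact hw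
  · rw [hK, finrank_span_singleton hw0]

lemma exists_smul_of_finrank_one {K : Submodule ℝ E} (hK : Module.finrank ℝ K = 1)
    {w v : E} (hw : w ∈ K) (hw0 : w ≠ 0) (hv : v ∈ K) : ∃ c : ℝ, v = c • w := by
  rw [← span_eq_of_finrank_one hK hw hw0] at hv
  obtain ⟨c, hc⟩ := Submodule.mem_span_singleton.mp hv
  exact ⟨c, hc.symm⟩

lemma eq_zero_of_mem_ne {K K' : Submodule ℝ E} (hK : Module.finrank ℝ K = 1)
    (hK' : Module.finrank ℝ K' = 1) (hne : K ≠ K') {x : E} (hx : x ∈ K) (hx' : x ∈ K') :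
    x = 0 := by
  by_contra h0
  exact hne ((span_eq_of_finrank_one hK hx h0).symm.trans
    (span_eq_of_finrank_one hK' hx' h0))

end FinDim

lemma finrank_ker_eq_one {m : ℕ} (ψ : (Fin (m+1) → ℝ) →ᵃ[ℝ] (Fin m → ℝ))
    (hs : Surjective ψ) : Module.finrank ℝ (LinearMap.ker ψ.linear) = 1 := by
  have hsl : Surjective ψ.linear := ψ.linear_surjective_iff.mpr hs
  have h1 := LinearMap.finrank_range_add_finrank_ker ψ.linear
  rw [LinearMap.range_eq_top.mpr hsl, finrank_top] at h1
  simp only [Module.finrank_fin_fun] at h1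
  omega

lemma exists_integral_functional {m : ℕ} {r s : Option (Fin m)} (hrs : r ≠ s) :
    ∃ g : (Fin m → ℝ) →ₗ[ℝ] ℝ, g (vx m s - vx m r) = 1 ∧
      ∀ z ∈ intLat m, ∃ k : ℤ, g z = k := by
  match r, s with
  | none, none => exact absurd rfl hrs
  | none, some i =>
      refine ⟨LinearMap.proj i, by simp [vx], fun z hz => ?_⟩
      obtain ⟨k, hk⟩ := hz i
      exact ⟨k, by simpa using hk⟩
  | some i, none =>
      refine ⟨-LinearMap.proj i, by simp [vx], fun z hz => ?_⟩
      obtain ⟨k, hk⟩ := hz i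
      exact ⟨-k, by simp [hk]⟩
  | some i, some j =>
      have hij : i ≠ j := fun e => hrs (by rw [e])
      refine ⟨LinearMap.proj j, ?_, fun z hz => ?_⟩
      · simp [vx, Pi.single_apply, hij, if_neg (fun e : j = i => hij e.symm)]
      · obtain ⟨k, hk⟩ := hz j
        exact ⟨k, by simpa using hk⟩

end ThreeProj
open ThreeProj in
/-- A lattice polytope with three pairwise distinct lattice projections onto
`Δₙ₋₁` is equivalent to `Δₙ`. -/
theorem three_projections (n : ℕ) (hn : 1 ≤ n) (P : Set (Fin n → ℝ))
    (hP : IsLatticePolytope P) (hdim : affineSpan ℝ P = ⊤)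
    (φ : Fin 3 → ((Fin n → ℝ) →ᵃ[ℝ] (Fin (n - 1) → ℝ)))
    (hs : ∀ j, Surjective (φ j))
    (hl : ∀ j, φ j '' intLat n = intLat (n - 1))
    (hp : ∀ j, φ j '' P = unimodSimplex (n - 1))
    (hdiff : ∀ j j', j ≠ j' →
        LinearMap.ker (φ j).linear ≠ LinearMap.ker (φ j').linear) :
    PolyEquiv P (unimodSimplex n) := by
  obtain ⟨m, rfl⟩ : ∃ m, n = m + 1 := ⟨n - 1, by omega⟩
  clear hn
  -- the degenerate case m = 0
  rcases Nat.eq_zero_or_pos m with rfl | hm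
  · exfalso
    apply hdiff 0 1 (by decide)
    have h0 : ∀ j : Fin 3, LinearMap.ker (φ j).linear = ⊤ := by
      intro j
      apply LinearMap.ker_eq_top.mpr
      apply LinearMap.ext
      intro x
      funext i
      exact absurd i.isLt (by omega)
    rw [h0 0, h0 1]
  obtain ⟨V, hVlat, rfl⟩ := hP
  have hVP : (V : Set (Fin (m+1) → ℝ)) ⊆ convexHull ℝ (V : Set (Fin (m+1) → ℝ)) :=
    subset_convexHull ℝ _
  have lin_sub : ∀ (j : Fin 3) (x y : Fin (m+1) → ℝ),
      (φ j).linear (x - y) = φ j x - φ j y := by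
    intro j x y
    have h := (φ j).map_vadd y (x - y)
    rw [vadd_eq_add, sub_add_cancel, vadd_eq_add] at h
    rw [h]; abel
  have hK1 : ∀ j, Module.finrank ℝ (LinearMap.ker (φ j).linear) = 1 :=
    fun j => finrank_ker_eq_one (φ j) (hs j)
  have hKdisj : ∀ j j' : Fin 3, j ≠ j' → ∀ x, x ∈ LinearMap.ker (φ j).linear →
      x ∈ LinearMap.ker (φ j').linear → x = 0 :=
    fun j j' hjj x hx hx' => eq_zero_of_mem_ne (hK1 j) (hK1 j') (hdiff j j' hjj) hx hx'
  have hφlat : ∀ (j : Fin 3) x, x ∈ intLat (m+1) → φ j x ∈ intLat m := by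
    intro j x hx
    have h : φ j x ∈ φ j '' intLat (m+1) := ⟨x, hx, rfl⟩
    rw [hl j] at h
    exact h
  have hlinlat : ∀ (j : Fin 3) x, x ∈ intLat (m+1) → (φ j).linear x ∈ intLat m := by
    intro j x hx
    have h1 : (φ j).linear x = φ j x - φ j 0 := by
      rw [← lin_sub j x 0, sub_zero]
    rw [h1]
    exact intLat_sub (hφlat j x hx) (hφlat j 0 (intLat_zero _))
  have hcls : ∀ (j : Fin 3) v, v ∈ (V : Set (Fin (m+1) → ℝ)) → ∃ o, φ j v = vx m o := by
    intro j v hv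
    have h1 : φ j v ∈ unimodSimplex m := by
      have : φ j v ∈ φ j '' (convexHull ℝ (V : Set (Fin (m+1) → ℝ))) := ⟨v, hVP hv, rfl⟩
      rw [hp j] at this
      exact this
    rw [unimodSimplex_char] at h1
    exact simplex_lattice_point h1 (hφlat j v (hVlat hv))
  -- a representative vertex of V over each vertex of the simplex
  have hrep : ∀ o : Option (Fin m), ∃ v, v ∈ (V : Set (Fin (m+1) → ℝ)) ∧ φ 0 v = vx m o := by
    intro o
    have himg : φ 0 '' (convexHull ℝ (V : Set (Fin (m+1) → ℝ)))
        = convexHull ℝ ((V.image (φ 0) : Finset (Fin m → ℝ)) : Set (Fin m → ℝ)) := by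
      rw [AffineMap.image_convexHull, Finset.coe_image]
    have hmem : vx m o ∈ convexHull ℝ ((V.image (φ 0) : Finset (Fin m → ℝ)) : Set (Fin m → ℝ)) := by
      rw [← himg]
      have h2 : vx m o ∈ unimodSimplex m := by
        rw [unimodSimplex_eq]
        exact subset_convexHull ℝ _ ⟨o, rfl⟩
      rw [hp 0]
      exact h2
    have hS : ∀ y ∈ V.image (φ 0), (∀ i, 0 ≤ y i) ∧ ∑ i, y i ≤ 1 := by
      intro y hy
      obtain ⟨v, hvV, rfl⟩ := Finset.mem_image.mp hy
      have : φ 0 v ∈ unimodSimplex m := by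
        have h : φ 0 v ∈ φ 0 '' (convexHull ℝ (V : Set (Fin (m+1) → ℝ))) :=
          ⟨v, hVP hvV, rfl⟩
        rw [hp 0] at h
        exact h
      rw [unimodSimplex_char] at this
      exact this
    have := vx_mem_of_hull hS hmem
    obtain ⟨v, hvV, hveq⟩ := Finset.mem_image.mp this
    exact ⟨v, hvV, hveq⟩
  choose a haV haφ using hrep
  -- lattice surjectivity of the linear part of φ 0
  have hsur0 : ∀ y, y ∈ intLat m → ∃ z, z ∈ intLat (m+1) ∧ (φ 0).linear z = y := by
    intro y hy
    have h2 : (fun t => y t + φ 0 0 t : Fin m → ℝ) ∈ φ 0 '' intLat (m+1) := by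
      rw [hl 0]
      intro i
      obtain ⟨k1, hk1⟩ := hy i
      obtain ⟨k2, hk2⟩ := hφlat 0 0 (intLat_zero _) i
      exact ⟨k1 + k2, by show y i + φ 0 0 i = ((k1 + k2 : ℤ) : ℝ); rw [hk1, hk2]; push_cast; ring⟩
    obtain ⟨z, hz, hz2⟩ := h2
    refine ⟨z, hz, ?_⟩
    have h3 : (φ 0).linear z = φ 0 z - φ 0 0 := by rw [← lin_sub 0 z 0, sub_zero]
    rw [h3, hz2]
    funext t
    simp
  -- the core combinatorial rigidity
  have core : ∀ p p' q q' : Fin (m+1) → ℝ,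
      p ∈ (V : Set (Fin (m+1) → ℝ)) → p' ∈ (V : Set (Fin (m+1) → ℝ)) →
      q ∈ (V : Set (Fin (m+1) → ℝ)) → q' ∈ (V : Set (Fin (m+1) → ℝ)) →
      φ 0 p = φ 0 p' → φ 0 q = φ 0 q' → p ≠ p' → q ≠ q' →
      (p = q ∧ p' = q') ∨ (p = q' ∧ p' = q) := by
    intro p p' q q' hpV hp'V hqV hq'V hcp hcq hpp hqq
    have hker0 : ∀ u u' : Fin (m+1) → ℝ, φ 0 u = φ 0 u' →
        u' - u ∈ LinearMap.ker (φ 0).linear := by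
      intro u u' hc
      rw [LinearMap.mem_ker, lin_sub, hc, sub_self]
    -- indices under φ j, j ≠ 0
    have hidx : ∀ j : Fin 3, j ≠ 0 → ∀ u u', u ∈ (V : Set (Fin (m+1) → ℝ)) →
        u' ∈ (V : Set (Fin (m+1) → ℝ)) → φ 0 u = φ 0 u' → u ≠ u' →
        ∃ o o', o ≠ o' ∧ φ j u = vx m o ∧ φ j u' = vx m o' := by
      intro j hj u u' hu hu' hc hne
      obtain ⟨o, ho⟩ := hcls j u hu
      obtain ⟨o', ho'⟩ := hcls j u' hu'
      refine ⟨o, o', ?_, ho, ho'⟩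
      rintro rfl
      apply hne
      have h2 : u' - u ∈ LinearMap.ker (φ j).linear := by
        rw [LinearMap.mem_ker, lin_sub, ho', ho, sub_self]
      have h3 := hKdisj j 0 hj _ h2 (hker0 u u' hc)
      have := sub_eq_zero.mp h3
      exact this.symm
    have hw₁K := hker0 p p' hcp
    have hw₂K := hker0 q q' hcq
    have hw₁0 : p' - p ≠ 0 := sub_ne_zero.mpr (Ne.symm hpp)
    have hw₂0 : q' - q ≠ 0 := sub_ne_zero.mpr (Ne.symm hqq)
    obtain ⟨c, hc⟩ := exists_smul_of_finrank_one (hK1 0) hw₂K hw₂0 hw₁K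
    -- compute with φ 1
    obtain ⟨op, op', hnep, hop, hop'⟩ := hidx 1 (by decide) p p' hpV hp'V hcp hpp
    obtain ⟨oq, oq', hneq, hoq, hoq'⟩ := hidx 1 (by decide) q q' hqV hq'V hcq hqq
    have heq1 : vx m op' - vx m op = c • (vx m oq' - vx m oq) := by
      have e1 : (φ 1).linear (p' - p) = vx m op' - vx m op := by
        rw [lin_sub, hop', hop]
      have e2 : (φ 1).linear (q' - q) = vx m oq' - vx m oq := by
        rw [lin_sub, hoq', hoq]
      rw [← e1, ← e2, hc, map_smul]
    have hker12 : ∀ u u' : Fin (m+1) → ℝ, φ 1 u = φ 1 u' → φ 2 u = φ 2 u' → u = u' := by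
      intro u u' h1 h2
      have k1 : u' - u ∈ LinearMap.ker (φ 1).linear := by
        rw [LinearMap.mem_ker, lin_sub, h1, sub_self]
      have k2 : u' - u ∈ LinearMap.ker (φ 2).linear := by
        rw [LinearMap.mem_ker, lin_sub, h2, sub_self]
      have h3 := hKdisj 1 2 (by decide) _ k1 k2
      exact (sub_eq_zero.mp h3).symm
    obtain ⟨op2, op2', hnep2, hop2, hop2'⟩ := hidx 2 (by decide) p p' hpV hp'V hcp hpp
    obtain ⟨oq2, oq2', hneq2, hoq2, hoq2'⟩ := hidx 2 (by decide) q q' hqV hq'V hcq hqq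
    rcases vx_lambda_pm heq1 hnep hneq with rfl | rfl
    · -- c = 1 : w₁ = w₂
      rw [one_smul] at hc
      left
      have hφ1 : φ 1 p = φ 1 q := by
        have h := vx_pair_unique (heq1.trans (one_smul ℝ _)) hnep
        rw [hop, hoq, h.1]
      have hφ2 : φ 2 p = φ 2 q := by
        have e1 : (φ 2).linear (p' - p) = vx m op2' - vx m op2 := by
          rw [lin_sub, hop2', hop2]
        have e2 : (φ 2).linear (q' - q) = vx m oq2' - vx m oq2 := by
          rw [lin_sub, hoq2', hoq2]
        have h := vx_pair_unique (e1.symm.trans (by rw [hc, e2])) hnep2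
        rw [hop2, hoq2, h.1]
      have hpq : p = q := hker12 p q hφ1 hφ2
      refine ⟨hpq, ?_⟩
      have h5 : p' - p = q' - q := hc
      rw [hpq] at h5
      exact sub_left_inj.mp h5
    · -- c = -1 : w₁ = q - q'
      rw [neg_one_smul] at hc
      right
      have hcc : p' - p = q - q' := by rw [hc]; abel
      have hφ1 : φ 1 p = φ 1 q' := by
        have e1 : (φ 1).linear (p' - p) = vx m op' - vx m op := by
          rw [lin_sub, hop', hop]
        have e2 : (φ 1).linear (q - q') = vx m oq - vx m oq' := by
          rw [lin_sub, hoq, hoq']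
        have h := vx_pair_unique ((e1.symm.trans (by rw [hcc, e2]))) hnep
        rw [hop, hoq', h.1]
      have hφ2 : φ 2 p = φ 2 q' := by
        have e1 : (φ 2).linear (p' - p) = vx m op2' - vx m op2 := by
          rw [lin_sub, hop2', hop2]
        have e2 : (φ 2).linear (q - q') = vx m oq2 - vx m oq2' := by
          rw [lin_sub, hoq2, hoq2']
        have h := vx_pair_unique ((e1.symm.trans (by rw [hcc, e2]))) hnep2
        rw [hop2, hoq2', h.1]
      have hpq : p = q' := hker12 p q' hφ1 hφ2
      refine ⟨hpq, ?_⟩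
      have h5 : p' = p + (q - q') := by rw [← hcc]; abel
      rw [h5, hpq]; abel
  -- there is a lattice point of V outside the chosen representatives
  have hspan : affineSpan ℝ (V : Set (Fin (m+1) → ℝ)) = ⊤ := by
    rw [← affineSpan_convexHull]; exact hdim
  have hbex : ¬ ((V : Set (Fin (m+1) → ℝ)) ⊆ Set.range a) := by
    intro hsub
    have h1 : affineSpan ℝ (Set.range a) = ⊤ :=
      top_unique (hspan ▸ affineSpan_mono ℝ hsub)
    have h2 : vectorSpan ℝ (Set.range a) = ⊤ := by
      rw [← direction_affineSpan, h1]
      exact AffineSubspace.direction_top ℝ _ _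
    have h3 := finrank_vectorSpan_range_le ℝ a
      (by simp : Fintype.card (Option (Fin m)) = m + 1)
    rw [h2, finrank_top] at h3
    rw [Module.finrank_fin_fun] at h3
    omega
  obtain ⟨b, hbV, hbnr⟩ := Set.not_subset.mp hbex
  obtain ⟨cI, hcI⟩ := hcls 0 b hbV
  have hbac : b ≠ a cI := fun e => hbnr ⟨cI, e.symm⟩
  have hwK : b - a cI ∈ LinearMap.ker (φ 0).linear := by
    rw [LinearMap.mem_ker, lin_sub, hcI, haφ, sub_self]
  have hw0 : b - a cI ≠ 0 := sub_ne_zero.mpr hbac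
  have hwlat : b - a cI ∈ intLat (m+1) := intLat_sub (hVlat hbV) (hVlat (haV cI))
  -- structure of V
  have hVstruct : (V : Set (Fin (m+1) → ℝ)) ⊆ insert b (Set.range a) := by
    intro v hv
    obtain ⟨o, ho⟩ := hcls 0 v hv
    by_cases hva : v = a o
    · exact Set.mem_insert_iff.mpr (Or.inr ⟨o, hva.symm⟩)
    · have hco := core (a o) v (a cI) b (haV o) hv (haV cI) hbV
        (by rw [haφ o, ho]) (by rw [haφ cI, hcI]) (fun e => hva e.symm) (fun e => hbac e.symm)
      rcases hco with ⟨_, h2⟩ | ⟨h1, _⟩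
      · exact Set.mem_insert_iff.mpr (Or.inl h2)
      · exact absurd ⟨o, h1⟩ hbnr
  have hAP : insert b (Set.range a) ⊆ convexHull ℝ (V : Set (Fin (m+1) → ℝ)) := by
    rintro x (rfl | ⟨o, rfl⟩)
    · exact hVP hbV
    · exact hVP (haV o)
  have hPA : convexHull ℝ (V : Set (Fin (m+1) → ℝ)) = convexHull ℝ (insert b (Set.range a)) :=
    le_antisymm (convexHull_mono hVstruct)
      (convexHull_min hAP (convex_convexHull ℝ _))
  -- integral functional equal to 1 on b - a cI
  obtain ⟨r, hr⟩ := hcls 1 (a cI) (haV cI)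
  obtain ⟨sII, hsII⟩ := hcls 1 b hbV
  have hlw1 : (φ 1).linear (b - a cI) = vx m sII - vx m r := by
    rw [lin_sub, hsII, hr]
  have hrs : r ≠ sII := by
    rintro rfl
    apply hw0
    refine hKdisj 1 0 (by decide) _ ?_ hwK
    rw [LinearMap.mem_ker, hlw1, sub_self]
  obtain ⟨g, hg1, hgint⟩ := exists_integral_functional hrs
  obtain ⟨h, hh1, hhint⟩ :
      ∃ h : (Fin (m+1) → ℝ) →ₗ[ℝ] ℝ, h (b - a cI) = 1 ∧
        ∀ z, z ∈ intLat (m+1) → ∃ k : ℤ, h z = k :=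
    ⟨g.comp (φ 1).linear, (congrArg g hlw1).trans hg1,
      fun z hz => hgint _ (hlinlat 1 z hz)⟩
  have hmkex : ∀ k : Fin m, ∃ z : ℤ, h (a (some k) - a none) = z :=
    fun k => hhint _ (intLat_sub (hVlat (haV _)) (hVlat (haV none)))
  choose mk hmk using hmkex
  obtain ⟨μ, hμs, hμint⟩ :
      ∃ μ : (Fin m → ℝ) →ₗ[ℝ] ℝ,
        (∀ k, μ (Pi.single k 1) = mk k) ∧ (∀ y, y ∈ intLat m → ∃ z : ℤ, μ y = z) := by
    refine ⟨∑ k : Fin m, (mk k : ℝ) • LinearMap.proj k, ?_, ?_⟩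
    · intro k
      simp [LinearMap.sum_apply, LinearMap.smul_apply, LinearMap.proj_apply,
        smul_eq_mul, Pi.single_apply, mul_ite]
    · intro y hy
      choose ky hky using hy
      refine ⟨∑ k, mk k * ky k, ?_⟩
      simp only [LinearMap.sum_apply, LinearMap.smul_apply, LinearMap.proj_apply, smul_eq_mul]
      push_cast
      exact Finset.sum_congr rfl fun k _ => by rw [hky k]
  have hμvx : μ (vx m cI) = h (a cI - a none) := by
    rcases cI with _ | k
    · rw [vx_none, map_zero, sub_self, map_zero]
    · rw [vx_some, hμs, hmk]
  -- the linear map F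
  obtain ⟨F, hFcs, hFlast⟩ :
      ∃ F : (Fin (m+1) → ℝ) →ₗ[ℝ] (Fin (m+1) → ℝ),
        (∀ v j, F v (Fin.castSucc j)
            = (φ 0).linear v j - vx m cI j * (h v - μ ((φ 0).linear v))) ∧
        (∀ v, F v (Fin.last m) = h v - μ ((φ 0).linear v)) := by
    refine ⟨LinearMap.pi (Fin.snoc
        (fun j => (LinearMap.proj j).comp (φ 0).linear
          - vx m cI j • (h - μ.comp (φ 0).linear))
        (h - μ.comp (φ 0).linear)), fun v j => ?_, fun v => ?_⟩
    · rw [LinearMap.pi_apply, Fin.snoc_castSucc]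
      simp [LinearMap.sub_apply, LinearMap.smul_apply, LinearMap.comp_apply,
        LinearMap.proj_apply, smul_eq_mul]
    · rw [LinearMap.pi_apply, Fin.snoc_last]
      simp [LinearMap.sub_apply, LinearMap.comp_apply]
  have hl0a : ∀ o, (φ 0).linear (a o - a none) = vx m o := by
    intro o; rw [lin_sub, haφ, haφ, vx_none, sub_zero]
  have htk : ∀ k : Fin m,
      h (a (some k) - a none) - μ ((φ 0).linear (a (some k) - a none)) = 0 := by
    intro k; rw [hl0a, vx_some, hμs, hmk, sub_self]
  have hFsome : ∀ k : Fin m, F (a (some k) - a none) = Pi.single (Fin.castSucc k) 1 := by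
    intro k
    funext idx
    induction idx using Fin.lastCases with
    | last =>
        rw [hFlast, htk, Pi.single_apply, if_neg (Fin.castSucc_lt_last k).ne']
    | cast j =>
        rw [hFcs, htk, mul_zero, sub_zero, hl0a, vx_some]
        rw [Pi.single_apply, Pi.single_apply]
        by_cases hjk : j = k
        · rw [if_pos hjk, if_pos (by rw [hjk])]
        · rw [if_neg hjk, if_neg (fun e => hjk (Fin.castSucc_inj.mp e))]
  have hFnone : F (a none - a none) = 0 := by rw [sub_self, map_zero]
  have hbw : b - a none = (b - a cI) + (a cI - a none) := by abel
  have hl0b : (φ 0).linear (b - a none) = vx m cI := by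
    rw [hbw, map_add, hl0a, LinearMap.mem_ker.mp hwK, zero_add]
  have htb : h (b - a none) - μ ((φ 0).linear (b - a none)) = 1 := by
    rw [hl0b, hμvx, hbw, map_add, hh1]
    ring
  have hFb : F (b - a none) = Pi.single (Fin.last m) 1 := by
    funext idx
    induction idx using Fin.lastCases with
    | last => rw [hFlast, htb, Pi.single_eq_same]
    | cast j =>
        rw [hFcs, htb, mul_one, hl0b]
        rw [Pi.single_apply, if_neg (Fin.castSucc_lt_last j).ne]
        exact sub_self _
  -- injectivity and surjectivity
  have hFker : ∀ v, F v = 0 → v = 0 := by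
    intro v hv
    have ht0 : h v - μ ((φ 0).linear v) = 0 := by
      rw [← hFlast v, hv]; rfl
    have hl0v : (φ 0).linear v = 0 := by
      funext j
      have hj := congrFun hv (Fin.castSucc j)
      rw [hFcs, ht0, mul_zero, sub_zero] at hj
      exact hj
    have hvK : v ∈ LinearMap.ker (φ 0).linear := LinearMap.mem_ker.mpr hl0v
    obtain ⟨cv, hcv⟩ := exists_smul_of_finrank_one (hK1 0) hwK hw0 hvK
    rw [hl0v, map_zero, sub_zero] at ht0
    have hhv : h v = cv := by rw [hcv, map_smul, smul_eq_mul, hh1, mul_one]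
    rw [hhv] at ht0
    rw [hcv, ht0, zero_smul]
  have hFinj : Injective F := LinearMap.ker_eq_bot.mp (LinearMap.ker_eq_bot'.mpr hFker)
  have hFsurj : Surjective F := LinearMap.injective_iff_surjective.mp hFinj
  -- F preserves the lattice
  have hFlat : ∀ v, v ∈ intLat (m+1) → F v ∈ intLat (m+1) := by
    intro v hv idx
    obtain ⟨k1, hk1⟩ := hhint v hv
    obtain ⟨k2, hk2⟩ := hμint _ (hlinlat 0 v hv)
    induction idx using Fin.lastCases with
    | last =>
        refine ⟨k1 - k2, ?_⟩
        rw [hFlast, hk1, hk2]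
        push_cast; ring
    | cast j =>
        obtain ⟨k3, hk3⟩ := hlinlat 0 v hv j
        obtain ⟨k4, hk4⟩ := vx_mem_intLat m cI j
        refine ⟨k3 - k4 * (k1 - k2), ?_⟩
        rw [hFcs, hk3, hk4, hk1, hk2]
        push_cast; ring
  have hFlat' : ∀ z, z ∈ intLat (m+1) → ∃ v, v ∈ intLat (m+1) ∧ F v = z := by
    intro z hz
    obtain ⟨v, hveq⟩ := hFsurj z
    have htint : ∃ k : ℤ, h v - μ ((φ 0).linear v) = k := by
      obtain ⟨k, hk⟩ := hz (Fin.last m)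
      exact ⟨k, by rw [← hFlast v, hveq, hk]⟩
    have hl0int : (φ 0).linear v ∈ intLat m := by
      intro j
      obtain ⟨k1, hk1⟩ := hz (Fin.castSucc j)
      obtain ⟨k2, hk2⟩ := vx_mem_intLat m cI j
      obtain ⟨k3, hk3⟩ := htint
      refine ⟨k1 + k2 * k3, ?_⟩
      have hj := congrFun hveq (Fin.castSucc j)
      rw [hFcs, hk1, hk2, hk3] at hj
      push_cast
      linarith
    obtain ⟨y, hylat, hyl⟩ := hsur0 _ hl0int
    have hvyK : v - y ∈ LinearMap.ker (φ 0).linear := by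
      rw [LinearMap.mem_ker, map_sub, hyl, sub_self]
    obtain ⟨cv, hcv⟩ := exists_smul_of_finrank_one (hK1 0) hwK hw0 hvyK
    have hcvval : h v - h y = cv := by
      have hx : h (v - y) = cv := by rw [hcv, map_smul, smul_eq_mul, hh1, mul_one]
      rw [← hx, map_sub]
    have hcvint : ∃ k : ℤ, cv = k := by
      obtain ⟨k1, hk1⟩ := hhint y hylat
      obtain ⟨k2, hk2⟩ := hμint _ hl0int
      obtain ⟨k3, hk3⟩ := htint
      refine ⟨k3 + k2 - k1, ?_⟩
      rw [← hcvval]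
      push_cast
      rw [← hk1, ← hk2, ← hk3]
      ring
    obtain ⟨kc, hkc⟩ := hcvint
    refine ⟨v, ?_, hveq⟩
    have hvy : v = y + (kc : ℝ) • (b - a cI) := by
      rw [← hkc, ← hcv]; abel
    rw [hvy]
    exact intLat_add hylat (intLat_zsmul hwlat kc)
  -- assemble the affine equivalence
  have hbij : Function.Bijective F := ⟨hFinj, hFsurj⟩
  obtain ⟨T, hT⟩ : ∃ T : (Fin (m+1) → ℝ) ≃ᵃ[ℝ] (Fin (m+1) → ℝ),
      ∀ x, T x = F (x - a none) := by
    refine ⟨(AffineEquiv.constVAdd ℝ (Fin (m+1) → ℝ) (-(a none))).trans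
      (LinearEquiv.ofBijective F hbij).toAffineEquiv, fun x => ?_⟩
    simp only [AffineEquiv.trans_apply, AffineEquiv.constVAdd_apply,
      LinearEquiv.coe_toAffineEquiv, LinearEquiv.ofBijective_apply, vadd_eq_add]
    rw [neg_add_eq_sub]
  refine ⟨T, ?_, ?_⟩
  · ext z
    simp only [Set.mem_image]
    constructor
    · rintro ⟨x, hx, rfl⟩
      rw [hT]
      exact hFlat _ (intLat_sub hx (hVlat (haV none)))
    · intro hz
      obtain ⟨v, hvlat, hveq⟩ := hFlat' z hz
      refine ⟨v + a none, intLat_add hvlat (hVlat (haV none)), ?_⟩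
      rw [hT, add_sub_cancel_right, hveq]
  · rw [hPA]
    have himg : ⇑T '' convexHull ℝ (insert b (Set.range a))
        = convexHull ℝ (⇑T '' insert b (Set.range a)) := by
      have hi := AffineMap.image_convexHull (𝕜 := ℝ) T.toAffineMap (insert b (Set.range a))
      simpa using hi
    rw [himg]
    have hTA : ⇑T '' insert b (Set.range a)
        = insert (0 : Fin (m+1) → ℝ) (Set.range fun i : Fin (m+1) => Pi.single i (1:ℝ)) := by
      ext x
      simp only [Set.mem_image, Set.mem_insert_iff, Set.mem_range]
      constructor
      · rintro ⟨y, (rfl | ⟨o, rfl⟩), rfl⟩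
        · right; exact ⟨Fin.last m, by rw [hT, hFb]⟩
        · rcases o with _ | k
          · left; rw [hT, sub_self, map_zero]
          · right; exact ⟨Fin.castSucc k, by rw [hT, hFsome]⟩
      · rintro (rfl | ⟨i, rfl⟩)
        · exact ⟨a none, Or.inr ⟨none, rfl⟩, by rw [hT, sub_self, map_zero]⟩
        · induction i using Fin.lastCases with
          | last => exact ⟨b, Or.inl rfl, by rw [hT, hFb]⟩
          | cast k => exact ⟨a (some k), Or.inr ⟨some k, rfl⟩, by rw [hT, hFsome]⟩
    rw [hTA]
    rfl
end

section
/- Let S₁, S₂ ⊂ ℝⁿ be unimodular n-dimensional simplices, u₁, u₂ ∈ ℤⁿ linearly independent edge directions of S₁ and S₂ respectively, and set C₁ = S₁ + ℝu₁, C₂ = S₂ + ℝu₂. For z ∈ ℤⁿ let P_z = conv(C₁ ∩ (C₂ + z) ∩ ℤⁿ). If v, w ∈ ℤⁿ are such that P_v and P_w are both n-dimensional, then P_v and P_w differ by a lattice translation. -/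
open Set Pointwise

/-- A (nonempty) face of a polytope: the set of maximizers of a linear functional. -/
def IsFaceOf {E : Type*} [AddCommGroup E] [Module ℝ E] (F P : Set E) : Prop :=
  ∃ f : E →ₗ[ℝ] ℝ, F = {x ∈ P | ∀ y ∈ P, f y ≤ f x}

/-- `u ∈ ℤⁿ` is an edge direction of `S` if it is parallel to an edge of `S`. -/
def IsEdgeDirection {n : ℕ} (u : Fin n → ℤ) (S : Set (Fin n → ℝ)) : Prop :=
  ∃ v w : Fin n → ℝ, v ≠ w ∧ IsFaceOf (segment ℝ v w) S ∧
    ∃ c : ℝ, c ≠ 0 ∧ w - v = c • fun i => (u i : ℝ)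

set_option linter.unnecessarySeqFocus false
set_option linter.deprecated false

namespace Scratch
variable {n : ℕ}

def zc (x : Fin n → ℤ) : Fin n → ℝ := fun i => (x i : ℝ)

lemma zc_add (x y : Fin n → ℤ) : zc (x + y) = zc x + zc y := by
  funext i; simp [zc]
lemma zc_sub (x y : Fin n → ℤ) : zc (x - y) = zc x - zc y := by
  funext i; simp [zc]
lemma zc_zero : zc (0 : Fin n → ℤ) = 0 := by funext i; simp [zc]
lemma zc_smul (c : ℤ) (x : Fin n → ℤ) : zc (c • x) = (c : ℝ) • zc x := by
  funext i; simp [zc]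
lemma zc_inj : Function.Injective (zc (n := n)) := by
  intro x y h
  funext i
  have := congrFun h i
  simpa [zc] using this
lemma zc_single (i : Fin n) : zc (Pi.single i (1:ℤ)) = Pi.single i (1:ℝ) := by
  funext j
  by_cases h : j = i
  · subst h; simp [zc]
  · simp [zc, Pi.single_eq_of_ne h]
lemma intLat_sub {x y : Fin n → ℝ} (hx : x ∈ intLat n) (hy : y ∈ intLat n) :
    x - y ∈ intLat n := by
  intro i
  obtain ⟨a, ha⟩ := hx i; obtain ⟨b, hb⟩ := hy i
  exact ⟨a - b, by simp [ha, hb]⟩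

open Classical in
noncomputable def intVec (x : Fin n → ℝ) : Fin n → ℤ :=
  fun i => if h : ∃ m : ℤ, x i = (m : ℝ) then h.choose else 0

lemma zc_intVec {x : Fin n → ℝ} (hx : x ∈ intLat n) : zc (intVec x) = x := by
  classical
  funext i
  have h := hx i
  simp only [zc, intVec, dif_pos h]
  exact h.choose_spec.symm

lemma mem_intLat_iff {x : Fin n → ℝ} : x ∈ intLat n ↔ ∃ k : Fin n → ℤ, x = zc k := by
  constructor
  · intro h; choose k hk using h; exact ⟨k, funext hk⟩
  · rintro ⟨k, rfl⟩; exact fun i => ⟨k i, rfl⟩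
lemma zc_mem_intLat (k : Fin n → ℤ) : zc k ∈ intLat n := fun i => ⟨k i, rfl⟩
/-- base points of lattice lines of the standard prism in direction `e_m` -/
def pstd (m j : Fin n) : Fin n → ℤ := if j = m then 0 else Pi.single j 1

lemma delta_sub : unimodSimplex n ⊆ {y | (∀ i, 0 ≤ y i) ∧ ∑ i, y i ≤ 1} := by
  apply convexHull_min
  · rintro y (rfl | ⟨i, rfl⟩)
    · simp
    · constructor
      · intro j
        by_cases h : j = i
        · subst h; simp
        · simp [Pi.single_eq_of_ne h]
      · simp
  · rintro x ⟨hx1, hx2⟩ y ⟨hy1, hy2⟩ a b ha hb hab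
    constructor
    · intro i
      have := hx1 i; have := hy1 i
      simp only [Pi.add_apply, Pi.smul_apply, smul_eq_mul]
      nlinarith
    · simp only [Pi.add_apply, Pi.smul_apply, smul_eq_mul, Finset.sum_add_distrib,
        ← Finset.mul_sum]
      nlinarith

lemma vert_mem_delta (k : Fin n → ℤ) (hk : k = 0 ∨ ∃ i, k = Pi.single i 1) :
    zc k ∈ unimodSimplex n := by
  apply subset_convexHull
  rcases hk with rfl | ⟨i, rfl⟩
  · left; funext j; simp [zc]
  · right
    refine ⟨i, ?_⟩
    funext j
    by_cases h : j = i
    · subst h; simp [zc]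
    · simp [zc, Pi.single_eq_of_ne h]

lemma prism_lattice (m : Fin n) :
    (unimodSimplex n + Set.range (fun c : ℝ => c • (Pi.single m (1:ℝ) : Fin n → ℝ))) ∩ intLat n
    = ⋃ j : Fin n, {x | ∃ a : ℤ, x = zc (pstd m j + a • Pi.single m (1:ℤ))} := by
  ext x
  constructor
  · rintro ⟨hxp, hxl⟩
    obtain ⟨k, rfl⟩ := mem_intLat_iff.1 hxl
    obtain ⟨y, hy, -, ⟨c, rfl⟩, hsum⟩ := hxp
    have hyd := delta_sub hy
    have hcoord : ∀ i, i ≠ m → y i = (k i : ℝ) := by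
      intro i him
      have := congrFun hsum i
      simp only [Pi.add_apply, Pi.smul_apply, smul_eq_mul, Pi.single_eq_of_ne him,
        mul_zero, add_zero] at this
      simpa [zc] using this
    set s : Finset (Fin n) := Finset.univ.erase m with hs
    have hknn : ∀ i ∈ s, 0 ≤ k i := by
      intro i hi
      have him : i ≠ m := Finset.ne_of_mem_erase hi
      have := hyd.1 i
      rw [hcoord i him] at this
      exact_mod_cast this
    have hksum : ∑ i ∈ s, k i ≤ 1 := by
      have h1 : ∑ i ∈ s, y i ≤ 1 := by
        have : ∑ i ∈ s, y i ≤ ∑ i, y i := by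
          have := Finset.sum_erase_add Finset.univ y (Finset.mem_univ m)
          have hym := hyd.1 m
          rw [hs]; linarith [this, hyd.2]
        linarith [hyd.2, this]
      have h2 : ((∑ i ∈ s, k i : ℤ) : ℝ) = ∑ i ∈ s, y i := by
        push_cast
        exact (Finset.sum_congr rfl fun i hi => (hcoord i (Finset.ne_of_mem_erase hi)).symm)
      rw [← h2] at h1
      exact_mod_cast h1
    by_cases hall : ∀ i ∈ s, k i = 0
    · refine mem_iUnion.2 ⟨m, k m, ?_⟩
      funext i
      by_cases him : i = m
      · subst him; simp [pstd, zc]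
      · have : k i = 0 := hall i (Finset.mem_erase.2 ⟨him, Finset.mem_univ i⟩)
        simp [pstd, zc, this, Pi.single_eq_of_ne him]
    · push_neg at hall
      obtain ⟨i₀, hi₀s, hi₀⟩ := hall
      have hi₀m : i₀ ≠ m := Finset.ne_of_mem_erase hi₀s
      have hi₀1 : 1 ≤ k i₀ := lt_of_le_of_ne (hknn i₀ hi₀s) (Ne.symm hi₀)
      have hrest : ∀ i ∈ s.erase i₀, k i = 0 := by
        have hadd : k i₀ + ∑ i ∈ s.erase i₀, k i = ∑ i ∈ s, k i :=
          Finset.add_sum_erase s k hi₀s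
        have hnn : 0 ≤ ∑ i ∈ s.erase i₀, k i :=
          Finset.sum_nonneg fun i hi => hknn i (Finset.mem_of_mem_erase hi)
        have : ∑ i ∈ s.erase i₀, k i ≤ 0 := by omega
        intro i hi
        have := (Finset.sum_eq_zero_iff_of_nonneg
          (fun i hi => hknn i (Finset.mem_of_mem_erase hi))).1 (le_antisymm this hnn) i hi
        exact this
      have hk1 : k i₀ = 1 := by
        have hadd : k i₀ + ∑ i ∈ s.erase i₀, k i = ∑ i ∈ s, k i :=
          Finset.add_sum_erase s k hi₀s
        have hnn : 0 ≤ ∑ i ∈ s.erase i₀, k i :=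
          Finset.sum_nonneg fun i hi => hknn i (Finset.mem_of_mem_erase hi)
        omega
      refine mem_iUnion.2 ⟨i₀, k m, ?_⟩
      funext i
      by_cases him : i = m
      · subst him
        simp [pstd, zc, if_neg hi₀m, Pi.single_eq_of_ne (Ne.symm hi₀m)]
      · by_cases hii : i = i₀
        · subst hii
          simp [pstd, zc, if_neg hi₀m, hk1, Pi.single_eq_of_ne him]
        · have : k i = 0 := hrest i (Finset.mem_erase.2 ⟨hii,
            Finset.mem_erase.2 ⟨him, Finset.mem_univ i⟩⟩)
          simp [pstd, zc, this, if_neg hi₀m, Pi.single_eq_of_ne him,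
            Pi.single_eq_of_ne hii]
  · intro hx
    obtain ⟨j, a, rfl⟩ := mem_iUnion.1 hx
    refine ⟨⟨zc (pstd m j), ?_, (a:ℝ) • (Pi.single m (1:ℝ) : Fin n → ℝ), ⟨a, rfl⟩, ?_⟩, zc_mem_intLat _⟩
    · apply vert_mem_delta
      by_cases h : j = m
      · left; simp [pstd, h]
      · right; exact ⟨j, by simp [pstd, h]⟩
    · funext i
      by_cases h : i = m
      · subst h; simp [zc]
      · simp [zc, Pi.single_eq_of_ne h]
def Vert (n : ℕ) : Set (Fin n → ℝ) := insert 0 (Set.range fun i : Fin n => Pi.single i (1 : ℝ))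

lemma vert_finite : (Vert n).Finite := (Set.finite_range _).insert 0

lemma seg_face_delta {v w : Fin n → ℝ} (hvw : v ≠ w)
    (hface : IsFaceOf (segment ℝ v w) (unimodSimplex n)) :
    ∃ a b : Fin n → ℝ, a ∈ Vert n ∧ b ∈ Vert n ∧ a ≠ b ∧
      ∃ r : ℝ, r ≠ 0 ∧ b - a = r • (w - v) := by
  classical
  obtain ⟨f, hf⟩ := hface
  -- maximum of f on vertices
  obtain ⟨u₀, hu₀v, hu₀max⟩ : ∃ u₀ ∈ Vert n, ∀ u ∈ Vert n, f u ≤ f u₀ := by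
    obtain ⟨u₀, h1, h2⟩ := Set.Finite.exists_maximalFor f (Vert n) vert_finite
      ⟨0, Set.mem_insert _ _⟩
    refine ⟨u₀, h1, fun u hu => ?_⟩
    rcases le_total (f u) (f u₀) with h | h
    · exact h
    · exact h2 hu h
  have hΔle : ∀ x ∈ unimodSimplex n, f x ≤ f u₀ := by
    intro x hx
    have : unimodSimplex n ⊆ {y | f y ≤ f u₀} :=
      convexHull_min hu₀max (convex_halfSpace_le f.isLinear (f u₀))
    exact this hx
  have hu₀Δ : u₀ ∈ unimodSimplex n := subset_convexHull ℝ _ hu₀v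
  -- maximizing vertices lie in the segment
  have hmaxseg : ∀ u ∈ Vert n, f u = f u₀ → u ∈ segment ℝ v w := by
    intro u hu hfu
    rw [hf]
    exact ⟨subset_convexHull ℝ _ hu, fun y hy => (hΔle y hy).trans_eq hfu.symm⟩
  -- v and w are maximizers
  have hvseg : v ∈ segment ℝ v w := left_mem_segment ℝ v w
  have hwseg : w ∈ segment ℝ v w := right_mem_segment ℝ v w
  have hvmax : f v = f u₀ := by
    rw [hf] at hvseg
    exact le_antisymm (hΔle v hvseg.1) (hvseg.2 u₀ hu₀Δ)
  have hwmax : f w = f u₀ := by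
    rw [hf] at hwseg
    exact le_antisymm (hΔle w hwseg.1) (hwseg.2 u₀ hu₀Δ)
  -- there exist two distinct maximizing vertices
  set Vmax : Set (Fin n → ℝ) := {u ∈ Vert n | f u = f u₀} with hVmax
  have hsub : ∀ x ∈ unimodSimplex n, f x = f u₀ → x ∈ convexHull ℝ Vmax := by
    intro x hx hfx
    set VF : Finset (Fin n → ℝ) := vert_finite.toFinset with hVF
    have hΔ : unimodSimplex n = convexHull ℝ (VF : Set (Fin n → ℝ)) := by
      rw [hVF]; rw [Set.Finite.coe_toFinset]; rfl
    rw [hΔ, Finset.convexHull_eq] at hx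
    obtain ⟨lam, hlam0, hlam1, hx⟩ := hx
    rw [Finset.centerMass_eq_of_sum_1 _ _ hlam1] at hx
    -- f x = sum lam * f u
    have hfx2 : ∑ u ∈ VF, lam u * f u = f u₀ := by
      rw [← hfx, ← hx]
      simp [map_sum, map_smul, smul_eq_mul]
    have hzero : ∑ u ∈ VF, lam u * (f u₀ - f u) = 0 := by
      simp only [mul_sub]
      rw [Finset.sum_sub_distrib, ← Finset.sum_mul, hlam1, one_mul, hfx2, sub_self]
    have hterm : ∀ u ∈ VF, lam u * (f u₀ - f u) = 0 := by
      intro u hu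
      have hnn : ∀ u ∈ VF, 0 ≤ lam u * (f u₀ - f u) := by
        intro u' hu'
        apply mul_nonneg (hlam0 u' hu')
        have : u' ∈ Vert n := by rwa [hVF, Set.Finite.mem_toFinset] at hu'
        linarith [hu₀max u' this]
      exact (Finset.sum_eq_zero_iff_of_nonneg hnn).1 hzero u hu
    -- x is a convex combination of Vmax vertices
    have hlamz : ∀ u ∈ VF, u ∉ VF.filter (fun u => f u = f u₀) → lam u = 0 := by
      intro u hu hnu
      have := hterm u hu
      have hfu : f u ≠ f u₀ := fun h => hnu (Finset.mem_filter.2 ⟨hu, h⟩)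
      rcases mul_eq_zero.1 this with h | h
      · exact h
      · exfalso; apply hfu; linarith
    have hsum1 : ∑ y ∈ VF.filter (fun u => f u = f u₀), lam y = 1 := by
      rw [← hlam1]
      exact Finset.sum_subset (Finset.filter_subset _ _) hlamz
    have : x ∈ convexHull ℝ (VF.filter (fun u => f u = f u₀) : Set (Fin n → ℝ)) := by
      rw [Finset.convexHull_eq]
      refine ⟨lam, ?_, hsum1, ?_⟩
      · intro u hu; exact hlam0 u (Finset.mem_of_mem_filter u hu)
      · rw [Finset.centerMass_eq_of_sum_1 _ _ hsum1, ← hx]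
        exact Finset.sum_subset (Finset.filter_subset _ _)
          (fun u hu hnu => by simp [hlamz u hu hnu])
    apply convexHull_mono _ this
    intro u hu
    rw [Finset.coe_filter] at hu
    obtain ⟨hu1, hu2⟩ := hu
    exact ⟨by rwa [hVF, Set.Finite.mem_toFinset] at hu1, hu2⟩
  -- if Vmax were a subsingleton, v = w
  by_cases hss : ∃ a b, a ∈ Vmax ∧ b ∈ Vmax ∧ a ≠ b
  · obtain ⟨a, b, ha, hb, hab⟩ := hss
    have haseg := hmaxseg a ha.1 ha.2
    have hbseg := hmaxseg b hb.1 hb.2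
    rw [segment_eq_image'] at haseg hbseg
    obtain ⟨s, -, rfl⟩ := haseg
    obtain ⟨t, -, rfl⟩ := hbseg
    refine ⟨_, _, ha.1, hb.1, hab, t - s, ?_, by
      show v + t • (w - v) - (v + s • (w - v)) = (t - s) • (w - v)
      rw [sub_smul]; abel⟩
    intro h
    apply hab
    have : t = s := by linarith [sub_eq_zero.1 h]
    rw [this]
  · push_neg at hss
    exfalso
    have hvM := hsub v (by rw [hf] at hvseg; exact hvseg.1) hvmax
    have hwM := hsub w (by rw [hf] at hwseg; exact hwseg.1) hwmax
    have hVsub : Vmax ⊆ {u₀} := by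
      intro u hu
      exact hss u u₀ hu ⟨hu₀v, rfl⟩
    have : convexHull ℝ Vmax ⊆ {u₀} := by
      have := convexHull_mono hVsub (𝕜 := ℝ)
      rwa [convexHull_singleton] at this
    exact hvw ((this hvM).trans (this hwM).symm)
/-- the linear reflection swapping `0` and `e_k` on the simplex -/
def reflFun (k : Fin n) (x : Fin n → ℝ) : Fin n → ℝ :=
  fun i => if i = k then -∑ j, x j else x i

def reflLin (k : Fin n) : (Fin n → ℝ) →ₗ[ℝ] (Fin n → ℝ) where
  toFun := reflFun k
  map_add' x y := by
    funext i
    by_cases h : i = k <;> simp [reflFun, h, Finset.sum_add_distrib] <;> ring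
  map_smul' c x := by
    funext i
    by_cases h : i = k <;> simp [reflFun, h, Finset.mul_sum]

lemma sum_ite_eq' (k : Fin n) (A : ℝ) (x : Fin n → ℝ) :
    ∑ j, (if j = k then A else x j) = A + ∑ j ∈ Finset.univ.erase k, x j := by
  rw [← Finset.add_sum_erase _ _ (Finset.mem_univ k), if_pos rfl]
  congr 1
  exact Finset.sum_congr rfl fun j hj => if_neg (Finset.ne_of_mem_erase hj)

lemma sum_split (k : Fin n) (x : Fin n → ℝ) :
    ∑ j, x j = x k + ∑ j ∈ Finset.univ.erase k, x j :=
  (Finset.add_sum_erase _ _ (Finset.mem_univ k)).symm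

lemma reflFun_invol (k : Fin n) (x : Fin n → ℝ) : reflFun k (reflFun k x) = x := by
  funext i
  by_cases h : i = k
  · subst h
    simp [reflFun]
    rw [sum_ite_eq' i _ x, sum_split i x]
    ring
  · simp [reflFun, h]

noncomputable def reflEquiv (k : Fin n) : (Fin n → ℝ) ≃ₗ[ℝ] (Fin n → ℝ) :=
  LinearEquiv.ofLinear (reflLin k) (reflLin k)
    (LinearMap.ext fun x => reflFun_invol k x)
    (LinearMap.ext fun x => reflFun_invol k x)

noncomputable def sigmaAff (k : Fin n) : (Fin n → ℝ) ≃ᵃ[ℝ] (Fin n → ℝ) :=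
  (reflEquiv k).toAffineEquiv.trans (AffineEquiv.constVAdd ℝ (Fin n → ℝ) (Pi.single k 1))

lemma sigmaAff_apply (k : Fin n) (x : Fin n → ℝ) :
    sigmaAff k x = fun i => if i = k then 1 - ∑ j, x j else x i := by
  have h0 : sigmaAff k x = Pi.single k 1 + reflFun k x := rfl
  rw [h0]
  funext i
  simp only [Pi.add_apply]
  by_cases h : i = k
  · subst h; simp [reflFun]; ring
  · simp [reflFun, h, Pi.single_eq_of_ne h]

lemma sigmaAff_invol (k : Fin n) (x : Fin n → ℝ) : sigmaAff k (sigmaAff k x) = x := by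
  rw [sigmaAff_apply, sigmaAff_apply]
  funext i
  by_cases h : i = k
  · subst h
    rw [if_pos rfl, sum_ite_eq', sum_split i x]
    ring
  · simp [h]

lemma sigmaAff_symm_eq (k : Fin n) (x : Fin n → ℝ) : (sigmaAff k).symm x = sigmaAff k x := by
  have := sigmaAff_invol k x
  calc (sigmaAff k).symm x = (sigmaAff k).symm (sigmaAff k (sigmaAff k x)) := by rw [this]
    _ = sigmaAff k x := (sigmaAff k).symm_apply_apply _

lemma sigmaAff_zero (k : Fin n) : sigmaAff k 0 = Pi.single k 1 := by
  rw [sigmaAff_apply]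
  funext i
  by_cases h : i = k
  · subst h; simp
  · simp [h, Pi.single_eq_of_ne h]

lemma sigmaAff_single_self (k : Fin n) : sigmaAff k (Pi.single k 1) = 0 := by
  rw [sigmaAff_apply]
  funext i
  by_cases h : i = k
  · subst h; simp [Finset.sum_pi_single']
  · simp [h, Pi.single_eq_of_ne h]

lemma sigmaAff_single_other (k i : Fin n) (hik : i ≠ k) :
    sigmaAff k (Pi.single i 1) = Pi.single i 1 := by
  rw [sigmaAff_apply]
  funext j
  by_cases h : j = k
  · subst h
    simp [Finset.sum_pi_single', Pi.single_eq_of_ne (Ne.symm hik)]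
  · simp [h]

lemma sigmaAff_vert (k : Fin n) {x : Fin n → ℝ} (hx : x ∈ Vert n) : sigmaAff k x ∈ Vert n := by
  rcases hx with rfl | ⟨i, rfl⟩
  · rw [sigmaAff_zero]; exact Or.inr ⟨k, rfl⟩
  · by_cases h : i = k
    · subst h; rw [sigmaAff_single_self]; exact Or.inl rfl
    · rw [sigmaAff_single_other k i h]; exact Or.inr ⟨i, rfl⟩

lemma sigmaAff_vert_image (k : Fin n) : sigmaAff k '' Vert n = Vert n := by
  apply Set.Subset.antisymm
  · rintro x ⟨y, hy, rfl⟩; exact sigmaAff_vert k hy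
  · intro x hx
    exact ⟨sigmaAff k x, sigmaAff_vert k hx, sigmaAff_invol k x⟩

lemma sigmaAff_delta (k : Fin n) : sigmaAff k '' unimodSimplex n = unimodSimplex n := by
  show (sigmaAff k).toAffineMap '' convexHull ℝ (Vert n) = unimodSimplex n
  rw [AffineMap.image_convexHull]
  show convexHull ℝ (sigmaAff k '' Vert n) = _
  rw [sigmaAff_vert_image]
  rfl

lemma sigmaAff_lat (k : Fin n) {x : Fin n → ℝ} (hx : x ∈ intLat n) :
    sigmaAff k x ∈ intLat n := by
  obtain ⟨m, rfl⟩ := mem_intLat_iff.1 hx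
  rw [sigmaAff_apply]
  intro i
  by_cases h : i = k
  · subst h
    refine ⟨1 - ∑ j, m j, ?_⟩
    simp [zc]
  · exact ⟨m i, by simp [zc, h]⟩

lemma sigmaAff_lat_image (k : Fin n) : sigmaAff k '' intLat n = intLat n := by
  apply Set.Subset.antisymm
  · rintro x ⟨y, hy, rfl⟩; exact sigmaAff_lat k hy
  · intro x hx
    exact ⟨sigmaAff k x, sigmaAff_lat k hx, sigmaAff_invol k x⟩

/-! ### affine equivalences preserving the lattice -/

lemma latp_of_image {T : (Fin n → ℝ) ≃ᵃ[ℝ] (Fin n → ℝ)}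
    (hT : (T : (Fin n → ℝ) → (Fin n → ℝ)) '' intLat n = intLat n) :
    ∀ x, T x ∈ intLat n ↔ x ∈ intLat n := by
  intro x
  constructor
  · intro h
    rw [← hT] at h
    obtain ⟨y, hy, hxy⟩ := h
    rwa [← T.injective hxy]
  · intro h
    rw [← hT]
    exact ⟨x, h, rfl⟩

lemma image_inter_lat {T : (Fin n → ℝ) ≃ᵃ[ℝ] (Fin n → ℝ)}
    (hT : ∀ x, T x ∈ intLat n ↔ x ∈ intLat n) (A : Set (Fin n → ℝ)) :
    ((T : (Fin n → ℝ) → (Fin n → ℝ)) '' A) ∩ intLat n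
      = (T : (Fin n → ℝ) → (Fin n → ℝ)) '' (A ∩ intLat n) := by
  ext x
  constructor
  · rintro ⟨⟨y, hy, rfl⟩, hl⟩
    exact ⟨y, ⟨hy, (hT y).1 hl⟩, rfl⟩
  · rintro ⟨y, ⟨hy, hl⟩, rfl⟩
    exact ⟨⟨y, hy, rfl⟩, (hT y).2 hl⟩

lemma linear_apply (T : (Fin n → ℝ) ≃ᵃ[ℝ] (Fin n → ℝ)) (x : Fin n → ℝ) :
    T.linear x = T x - T 0 := by
  have := (T : (Fin n → ℝ) →ᵃ[ℝ] (Fin n → ℝ)).linearMap_vsub x 0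
  simpa [vsub_eq_sub] using this

lemma linear_sub (T : (Fin n → ℝ) ≃ᵃ[ℝ] (Fin n → ℝ)) (x y : Fin n → ℝ) :
    T x - T y = T.linear (x - y) := by
  have := (T : (Fin n → ℝ) →ᵃ[ℝ] (Fin n → ℝ)).linearMap_vsub x y
  simpa [vsub_eq_sub] using this.symm

lemma range_smul_line {x y : Fin n → ℝ} {ρ : ℝ} (hρ : ρ ≠ 0) (h : y = ρ • x) :
    Set.range (fun t : ℝ => t • x) = Set.range (fun t : ℝ => t • y) := by
  subst h
  ext z
  constructor
  · rintro ⟨t, rfl⟩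
    refine ⟨t / ρ, ?_⟩
    show (t / ρ) • ρ • x = t • x
    rw [smul_smul, div_mul_cancel₀ _ hρ]
  · rintro ⟨t, rfl⟩
    refine ⟨t * ρ, ?_⟩
    show (t * ρ) • x = t • ρ • x
    rw [smul_smul]

/-- Main structure lemma: the lattice points of the prism `S + ℝu` form `n`
lattice lines whose data is unimodular. -/
theorem latDesc {S : Set (Fin n → ℝ)} {u : Fin n → ℤ}
    (h : PolyEquiv (unimodSimplex n) S) (hu : IsEdgeDirection u S) :
    ∃ (ε : Fin n → ℤ) (p : Fin n → (Fin n → ℤ)) (m : Fin n)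
      (b : Module.Basis (Fin n) ℤ (Fin n → ℤ)),
      (∀ j, b j = if j = m then ε else p j - p m) ∧
      Set.range (fun c : ℝ => c • zc u) = Set.range (fun c : ℝ => c • zc ε) ∧
      (S + Set.range (fun c : ℝ => c • zc u)) ∩ intLat n
        = ⋃ j : Fin n, {x | ∃ a : ℤ, x = zc (p j + a • ε)} := by
  classical
  obtain ⟨T₀, hT₀lat, hT₀S⟩ := h
  have hT₀iff := latp_of_image hT₀lat
  obtain ⟨v, w, hvw, hface, c, hc, hwv⟩ := hu
  set v' : Fin n → ℝ := T₀.symm v with hv'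
  set w' : Fin n → ℝ := T₀.symm w with hw'
  have hv'w' : v' ≠ w' := fun hh => hvw (by
    have := congrArg (⇑T₀) hh
    rwa [T₀.apply_symm_apply, T₀.apply_symm_apply] at this)
  -- pull the face back to the standard simplex
  have hface' : IsFaceOf (segment ℝ v' w') (unimodSimplex n) := by
    obtain ⟨f, hf⟩ := hface
    refine ⟨f.comp (T₀.linear : (Fin n → ℝ) →ₗ[ℝ] (Fin n → ℝ)), ?_⟩
    have hseg : segment ℝ v' w' = ⇑T₀.symm '' segment ℝ v w := by
      have := image_segment (𝕜 := ℝ) (T₀.symm : (Fin n → ℝ) →ᵃ[ℝ] (Fin n → ℝ)) v w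
      simpa using this.symm
    have hTf : ∀ z : Fin n → ℝ, f (T₀ z) = f (T₀.linear z) + f (T₀ 0) := by
      intro z
      rw [linear_apply, map_sub]
      ring
    ext x
    simp only [hseg, Set.mem_image, Set.mem_setOf_eq, LinearMap.coe_comp,
      Function.comp_apply, LinearEquiv.coe_coe]
    constructor
    · rintro ⟨y, hy, rfl⟩
      rw [hf] at hy
      obtain ⟨hyS, hymax⟩ := hy
      constructor
      · rw [← hT₀S] at hyS
        obtain ⟨x', hx', rfl⟩ := hyS
        rwa [T₀.symm_apply_apply]
      · intro z hz
        have hz' : T₀ z ∈ S := by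
          rw [← hT₀S]; exact ⟨z, hz, rfl⟩
        have := hymax (T₀ z) hz'
        have h2 : f (T₀ (T₀.symm y)) = f y := by rw [T₀.apply_symm_apply]
        have h3 := hTf z
        have h4 := hTf (T₀.symm y)
        rw [h2] at h4
        linarith
    · rintro ⟨hxΔ, hxmax⟩
      refine ⟨T₀ x, ?_, T₀.symm_apply_apply x⟩
      rw [hf]
      constructor
      · rw [← hT₀S]; exact ⟨x, hxΔ, rfl⟩
      · intro z hz
        rw [← hT₀S] at hz
        obtain ⟨z', hz', rfl⟩ := hz
        have := hxmax z' hz'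
        have h3 := hTf z'
        have h4 := hTf x
        linarith
  obtain ⟨a, b, haV, hbV, hab, r, hr, hba⟩ := seg_face_delta hv'w' hface'
  -- normalize the edge to (0, e_m) by a lattice symmetry of the simplex
  obtain ⟨σ, m, hσΔ, hσlat, hσa, hσb⟩ :
      ∃ (σ : (Fin n → ℝ) ≃ᵃ[ℝ] (Fin n → ℝ)) (m : Fin n),
        ⇑σ '' unimodSimplex n = unimodSimplex n ∧
        (∀ x, σ x ∈ intLat n ↔ x ∈ intLat n) ∧
        σ a = 0 ∧ σ b = Pi.single m 1 := by
    rcases haV with rfl | ⟨k, rfl⟩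
    · rcases hbV with rfl | ⟨i, rfl⟩
      · exact absurd rfl hab
      · exact ⟨AffineEquiv.refl ℝ _, i, by simp, fun x => by simp, rfl, rfl⟩
    · refine ⟨sigmaAff k, ?_⟩
      have hiff : ∀ x, sigmaAff k x ∈ intLat n ↔ x ∈ intLat n := by
        intro x
        constructor
        · intro hx
          have := sigmaAff_lat k hx
          rwa [sigmaAff_invol] at this
        · exact sigmaAff_lat k
      rcases hbV with rfl | ⟨i, rfl⟩
      · exact ⟨k, sigmaAff_delta k, hiff, sigmaAff_single_self k, sigmaAff_zero k⟩
      · have hik : i ≠ k := fun hh => hab (by rw [hh])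
        exact ⟨i, sigmaAff_delta k, hiff, sigmaAff_single_self k,
          sigmaAff_single_other k i hik⟩
  set T : (Fin n → ℝ) ≃ᵃ[ℝ] (Fin n → ℝ) := σ.symm.trans T₀ with hT
  have hTx : ∀ x, T x = T₀ (σ.symm x) := fun _ => rfl
  have hTiff : ∀ x, T x ∈ intLat n ↔ x ∈ intLat n := by
    intro x
    rw [hTx, hT₀iff]
    have := hσlat (σ.symm x)
    rw [σ.apply_symm_apply] at this
    exact this.symm
  have hTS : (⇑T) '' unimodSimplex n = S := by
    have h1 : ⇑σ.symm '' unimodSimplex n = unimodSimplex n := by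
      conv_lhs => rw [← hσΔ]
      rw [← Set.image_comp]
      simp
    calc (⇑T) '' unimodSimplex n = ⇑T₀ '' (⇑σ.symm '' unimodSimplex n) := by
          rw [← Set.image_comp]; rfl
      _ = S := by rw [h1, hT₀S]
  have hT0 : T 0 = T₀ a := by
    rw [hTx]
    congr 1
    rw [← hσa, σ.symm_apply_apply]
  have hTm : T (Pi.single m 1) = T₀ b := by
    rw [hTx]
    congr 1
    rw [← hσb, σ.symm_apply_apply]
  -- the edge vector
  have hεreal : T (Pi.single m 1) - T 0 = (r * c) • zc u := by
    rw [hTm, hT0]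
    rw [linear_sub T₀ b a, hba, map_smul]
    have h3 : T₀.linear (w' - v') = w - v := by
      rw [← linear_sub T₀ w' v', hv', hw', T₀.apply_symm_apply, T₀.apply_symm_apply]
    rw [h3, hwv]
    show r • (c • zc u) = (r * c) • zc u
    rw [smul_smul]
  have hrc : r * c ≠ 0 := mul_ne_zero hr hc
  have hεlat : T (Pi.single m 1) - T 0 ∈ intLat n := by
    apply intLat_sub
    · rw [(hTiff _), ← zc_single]
      exact zc_mem_intLat _
    · rw [show (0 : Fin n → ℝ) = zc 0 from zc_zero.symm, (hTiff _)]
      exact zc_mem_intLat _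
  set ε : Fin n → ℤ := intVec (T (Pi.single m 1) - T 0) with hε
  have hζε : zc ε = T (Pi.single m 1) - T 0 := zc_intVec hεlat
  have hζε' : zc ε = (r * c) • zc u := by rw [hζε, hεreal]
  -- base points
  have hplat : ∀ j : Fin n, T (zc (pstd m j)) ∈ intLat n := by
    intro j
    rw [hTiff]
    exact zc_mem_intLat _
  set p : Fin n → (Fin n → ℤ) := fun j => intVec (T (zc (pstd m j))) with hp
  have hζp : ∀ j, zc (p j) = T (zc (pstd m j)) := fun j => zc_intVec (hplat j)
  -- key translation computation
  have hTkey : ∀ (y : Fin n → ℝ) (t : ℝ),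
      T (y + t • (Pi.single m (1:ℝ) : Fin n → ℝ))
        = T y + t • (T (Pi.single m 1) - T 0) := by
    intro y t
    have h1 : T (t • (Pi.single m (1:ℝ) : Fin n → ℝ) + y)
        = T.linear (t • (Pi.single m (1:ℝ) : Fin n → ℝ)) + T y := by
      have := (T : (Fin n → ℝ) →ᵃ[ℝ] (Fin n → ℝ)).map_vadd y
        (t • (Pi.single m (1:ℝ) : Fin n → ℝ))
      simpa [vadd_eq_add] using this
    rw [add_comm y (t • _), h1, map_smul, linear_apply, add_comm]
  -- the induced integer linear equivalence and the basis
  have hTsymm_iff : ∀ x, T.symm x ∈ intLat n ↔ x ∈ intLat n := by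
    intro x
    have := hTiff (T.symm x)
    rw [T.apply_symm_apply] at this
    exact this.symm
  have hlat0 : (0 : Fin n → ℝ) ∈ intLat n := by
    rw [← zc_zero]; exact zc_mem_intLat _
  have hTlin_lat : ∀ k : Fin n → ℤ, T.linear (zc k) ∈ intLat n := by
    intro k
    rw [linear_apply]
    exact intLat_sub ((hTiff _).2 (zc_mem_intLat _)) ((hTiff 0).2 hlat0)
  have hTslin_lat : ∀ k : Fin n → ℤ, T.symm.linear (zc k) ∈ intLat n := by
    intro k
    rw [linear_apply]
    exact intLat_sub ((hTsymm_iff _).2 (zc_mem_intLat _)) ((hTsymm_iff 0).2 hlat0)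
  set F : (Fin n → ℤ) → (Fin n → ℤ) := fun k => intVec (T.linear (zc k)) with hF
  set G : (Fin n → ℤ) → (Fin n → ℤ) := fun k => intVec (T.symm.linear (zc k)) with hG
  have zcF : ∀ k, zc (F k) = T.linear (zc k) := fun k => zc_intVec (hTlin_lat k)
  have zcG : ∀ k, zc (G k) = T.symm.linear (zc k) := fun k => zc_intVec (hTslin_lat k)
  have hFadd : ∀ k k', F (k + k') = F k + F k' := by
    intro k k'
    apply zc_inj
    rw [zc_add, zcF, zcF, zcF, zc_add, map_add]
  have hGadd : ∀ k k', G (k + k') = G k + G k' := by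
    intro k k'
    apply zc_inj
    rw [zc_add, zcG, zcG, zcG, zc_add, map_add]
  have hF0 : F 0 = 0 := by
    apply zc_inj
    rw [zcF, zc_zero, map_zero]
  have hG0 : G 0 = 0 := by
    apply zc_inj
    rw [zcG, zc_zero, map_zero]
  set Flin : (Fin n → ℤ) →ₗ[ℤ] (Fin n → ℤ) :=
    AddMonoidHom.toIntLinearMap ⟨⟨F, hF0⟩, hFadd⟩ with hFlin
  set Glin : (Fin n → ℤ) →ₗ[ℤ] (Fin n → ℤ) :=
    AddMonoidHom.toIntLinearMap ⟨⟨G, hG0⟩, hGadd⟩ with hGlin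
  have hsymm_lin : T.symm.linear = T.linear.symm := AffineEquiv.linear_symm T
  have hFG : ∀ k, F (G k) = k := by
    intro k
    apply zc_inj
    rw [zcF, zcG, hsymm_lin]
    exact T.linear.apply_symm_apply (zc k)
  have hGF : ∀ k, G (F k) = k := by
    intro k
    apply zc_inj
    rw [zcG, zcF, hsymm_lin]
    exact T.linear.symm_apply_apply (zc k)
  set eqv : (Fin n → ℤ) ≃ₗ[ℤ] (Fin n → ℤ) :=
    LinearEquiv.ofLinear Flin Glin (LinearMap.ext hFG) (LinearMap.ext hGF) with heqv
  set bZ : Module.Basis (Fin n) ℤ (Fin n → ℤ) := (Pi.basisFun ℤ (Fin n)).map eqv with hbZ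
  have hbj : ∀ j, bZ j = if j = m then ε else p j - p m := by
    intro j
    have hb1 : bZ j = F (Pi.single j 1) := by
      rw [hbZ, Module.Basis.map_apply, Pi.basisFun_apply]
      rfl
    apply zc_inj
    rw [hb1, zcF, zc_single, linear_apply]
    by_cases hjm : j = m
    · subst hjm
      rw [if_pos rfl, hζε]
    · rw [if_neg hjm, zc_sub, hζp, hζp]
      have h1 : pstd m j = Pi.single j 1 := if_neg hjm
      have h2 : pstd m m = 0 := if_pos rfl
      rw [h1, h2, zc_single, zc_zero]
  refine ⟨ε, p, m, bZ, hbj, range_smul_line hrc hζε', ?_⟩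
  · -- the prism description
    have hCT : S + Set.range (fun c' : ℝ => c' • zc u)
        = (⇑T) '' (unimodSimplex n
            + Set.range (fun c' : ℝ => c' • (Pi.single m (1:ℝ) : Fin n → ℝ))) := by
      ext x
      constructor
      · rintro ⟨s, hs, -, ⟨t, rfl⟩, rfl⟩
        rw [← hTS] at hs
        obtain ⟨y, hy, rfl⟩ := hs
        refine ⟨y + (t / (r * c)) • (Pi.single m (1:ℝ) : Fin n → ℝ),
          ⟨y, hy, _, ⟨t / (r * c), rfl⟩, rfl⟩, ?_⟩
        rw [hTkey, hεreal, smul_smul, div_mul_cancel₀ _ hrc]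
      · rintro ⟨z, ⟨y, hy, -, ⟨t, rfl⟩, rfl⟩, rfl⟩
        rw [hTkey, hεreal, smul_smul]
        refine ⟨T y, ?_, _, ⟨t * (r * c), rfl⟩, rfl⟩
        rw [← hTS]
        exact ⟨y, hy, rfl⟩
    rw [hCT, image_inter_lat hTiff, prism_lattice m, Set.image_iUnion]
    apply Set.iUnion_congr
    intro j
    ext x
    constructor
    · rintro ⟨y, ⟨aa, rfl⟩, rfl⟩
      refine ⟨aa, ?_⟩
      rw [zc_add, zc_smul, zc_single, hTkey, ← hζε, ← hζp, zc_add, zc_smul]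
    · rintro ⟨aa, rfl⟩
      refine ⟨zc (pstd m j + aa • Pi.single m 1), ⟨aa, rfl⟩, ?_⟩
      rw [zc_add, zc_smul, zc_single, hTkey, ← hζε, ← hζp, zc_add, zc_smul]

/-! ### the torsion argument modulo a prime -/

def modp (p : ℕ) : (Fin n → ℤ) →+ (Fin n → ZMod p) where
  toFun := fun x i => ((x i : ℤ) : ZMod p)
  map_zero' := by funext i; simp
  map_add' := by intro x y; funext i; simp

set_option maxHeartbeats 1000000 in
lemma key_torsion {ε₁ ε₂ : Fin n → ℤ} {q : Fin n → Fin n → ℤ} {m₂ : Fin n} {d : Fin n → ℤ}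
    (hprim1 : ∀ (c : ℤ) (e : Fin n → ℤ), ε₁ = c • e → IsUnit c)
    (hprim2 : ∀ (c : ℤ) (e : Fin n → ℤ), ε₂ = c • e → IsUnit c)
    (hqspan : (⊤ : Submodule ℤ (Fin n → ℤ)) ≤ Submodule.span ℤ
      ({ε₂} ∪ Set.range (fun i : Fin n => q i - q m₂)))
    (hcol : ∃ i i' : Fin n, i ≠ i' ∧
      q i - q i' ∈ Submodule.span ℤ ({ε₁, ε₂} : Set (Fin n → ℤ)))
    (k : ℕ) (hk : 0 < k)
    (hkd : (k : ℤ) • d ∈ Submodule.span ℤ ({ε₁, ε₂} : Set (Fin n → ℤ))) :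
    d ∈ Submodule.span ℤ ({ε₁, ε₂} : Set (Fin n → ℤ)) := by
  classical
  set Λ : Submodule ℤ (Fin n → ℤ) := Submodule.span ℤ ({ε₁, ε₂} : Set (Fin n → ℤ)) with hΛ
  have hex : ∃ k : ℕ, 0 < k ∧ (k : ℤ) • d ∈ Λ := ⟨k, hk, hkd⟩
  obtain ⟨hk₀pos, hk₀mem⟩ := Nat.find_spec hex
  by_cases hk₀1 : Nat.find hex = 1
  · rw [hk₀1] at hk₀mem
    simpa using hk₀mem
  -- otherwise derive a contradiction using a prime factor of k₀
  exfalso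
  set p := (Nat.find hex).minFac with hpdef
  have hp : p.Prime := Nat.minFac_prime hk₀1
  haveI : Fact p.Prime := ⟨hp⟩
  set q' := (Nat.find hex) / p with hq'def
  have hq'pos : 0 < q' := Nat.div_pos (Nat.minFac_le hk₀pos) hp.pos
  have hq'lt : q' < Nat.find hex := Nat.div_lt_self hk₀pos hp.one_lt
  set d₁ : Fin n → ℤ := (q' : ℤ) • d with hd₁def
  have hd₁notin : d₁ ∉ Λ := by
    intro hmem
    exact Nat.find_min hex hq'lt ⟨hq'pos, hmem⟩
  have hpd₁ : (p : ℤ) • d₁ ∈ Λ := by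
    have : (p : ℤ) • d₁ = ((Nat.find hex : ℕ) : ℤ) • d := by
      rw [hd₁def, smul_smul]
      norm_cast
      rw [Nat.mul_div_cancel' (Nat.minFac_dvd _)]
    rwa [this]
  -- move to V = (ZMod p)^n
  set ρ : (Fin n → ℤ) →+ (Fin n → ZMod p) := modp p with hρ
  have hρsmul : ∀ (z : ℤ) (x : Fin n → ℤ), ρ (z • x) = (z : ZMod p) • ρ x := by
    intro z x
    funext i
    show ((z * x i : ℤ) : ZMod p) = ((z : ZMod p) * ((x i : ℤ) : ZMod p))
    push_cast
    ring
  have hρzero_iff : ∀ x : Fin n → ℤ, ρ x = 0 → ∃ e : Fin n → ℤ, x = (p : ℤ) • e := by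
    intro x hx
    refine ⟨fun i => x i / p, ?_⟩
    funext i
    have : ((x i : ℤ) : ZMod p) = 0 := congrFun hx i
    have hdvd : (p : ℤ) ∣ x i := (ZMod.intCast_zmod_eq_zero_iff_dvd _ _).1 this
    simp only [Pi.smul_apply, smul_eq_mul]
    exact (Int.mul_ediv_cancel' hdvd).symm
  have hprimρ1 : ρ ε₁ ≠ 0 := by
    intro h
    obtain ⟨e, he⟩ := hρzero_iff ε₁ h
    have := hprim1 (p : ℤ) e he
    rw [Int.isUnit_iff] at this
    have h2 := hp.two_le
    rcases this with h1 | h1 <;> omega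
  have hprimρ2 : ρ ε₂ ≠ 0 := by
    intro h
    obtain ⟨e, he⟩ := hρzero_iff ε₂ h
    have := hprim2 (p : ℤ) e he
    rw [Int.isUnit_iff] at this
    have h2 := hp.two_le
    rcases this with h1 | h1 <;> omega
  -- dependence of ε₁ ε₂ mod p
  obtain ⟨A, B, hAB⟩ := Submodule.mem_span_pair.1 hpd₁
  have hABmodp : (A : ZMod p) • ρ ε₁ + (B : ZMod p) • ρ ε₂ = 0 := by
    have h1 : ρ (A • ε₁ + B • ε₂) = ρ ((p:ℤ) • d₁) := by rw [hAB]
    rw [map_add, hρsmul, hρsmul, hρsmul] at h1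
    rw [h1]
    simp
  have hBne : (B : ZMod p) ≠ 0 := by
    intro hB0
    rw [hB0, zero_smul, add_zero] at hABmodp
    by_cases hA0 : (A : ZMod p) = 0
    · -- then p ∣ A and p ∣ B, contradicting d₁ ∉ Λ
      have hdA : (p:ℤ) ∣ A := (ZMod.intCast_zmod_eq_zero_iff_dvd _ _).1 hA0
      have hdB : (p:ℤ) ∣ B := (ZMod.intCast_zmod_eq_zero_iff_dvd _ _).1 hB0
      obtain ⟨A', rfl⟩ := hdA
      obtain ⟨B', rfl⟩ := hdB
      apply hd₁notin
      have hinj : Function.Injective (fun x : Fin n → ℤ => (p:ℤ) • x) := by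
        apply smul_right_injective
        exact_mod_cast hp.ne_zero
      have heq : (p:ℤ) • d₁ = (p:ℤ) • (A' • ε₁ + B' • ε₂) := by
        rw [← hAB]
        module
      have := hinj heq
      rw [this]
      exact Submodule.add_mem _
        (Submodule.smul_mem _ _ (Submodule.subset_span (Or.inl rfl)))
        (Submodule.smul_mem _ _ (Submodule.subset_span (Or.inr rfl)))
    · apply hprimρ1
      have h3 : (A : ZMod p)⁻¹ • ((A:ZMod p) • ρ ε₁) = 0 := by rw [hABmodp, smul_zero]
      rwa [smul_smul, inv_mul_cancel₀ hA0, one_smul] at h3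
  have hBinv : (B : ZMod p) • ρ ε₂ = -((A : ZMod p) • ρ ε₁) := by
    linear_combination (norm := module) hABmodp
  have hdep : ρ ε₂ = ((B:ZMod p)⁻¹ * (-(A:ZMod p))) • ρ ε₁ := by
    calc ρ ε₂ = (B:ZMod p)⁻¹ • ((B:ZMod p) • ρ ε₂) := by
          rw [smul_smul, inv_mul_cancel₀ hBne, one_smul]
      _ = (B:ZMod p)⁻¹ • (-((A:ZMod p) • ρ ε₁)) := by rw [hBinv]
      _ = ((B:ZMod p)⁻¹ * (-(A:ZMod p))) • ρ ε₁ := by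
          rw [smul_neg, smul_smul, ← neg_smul]
          congr 1
          ring
  -- the line U = span(ρ ε₁) and the quotient V/U
  set U : Submodule (ZMod p) (Fin n → ZMod p) := Submodule.span (ZMod p) {ρ ε₁} with hU
  have hρΛ : ∀ x ∈ Λ, ρ x ∈ U := by
    intro x hx
    obtain ⟨a, b, hab⟩ := Submodule.mem_span_pair.1 hx
    have h1 : ρ x = (a : ZMod p) • ρ ε₁ + (b : ZMod p) • ρ ε₂ := by
      rw [← hab, map_add, hρsmul, hρsmul]
    rw [h1, hdep, smul_smul]
    exact Submodule.add_mem _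
      (Submodule.smul_mem _ _ (Submodule.mem_span_singleton_self _))
      (Submodule.smul_mem _ _ (Submodule.mem_span_singleton_self _))
  have hfinU : Module.finrank (ZMod p) U = 1 := finrank_span_singleton hprimρ1
  have hfinV : Module.finrank (ZMod p) (Fin n → ZMod p) = n := Module.finrank_fin_fun _
  have hfinQ : Module.finrank (ZMod p) ((Fin n → ZMod p) ⧸ U) = n - 1 := by
    have h1 := Submodule.finrank_quotient_add_finrank U
    omega
  set ψ : (Fin n → ZMod p) →ₗ[ZMod p] ((Fin n → ZMod p) ⧸ U) := U.mkQ with hψ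
  have hψ0 : ∀ x ∈ Λ, ψ (ρ x) = 0 := by
    intro x hx
    rw [hψ, Submodule.mkQ_apply, Submodule.Quotient.mk_eq_zero]
    exact hρΛ x hx
  set g : {i : Fin n // i ≠ m₂} → ((Fin n → ZMod p) ⧸ U) :=
    fun i => ψ (ρ (q i.1 - q m₂)) with hg
  -- ρ is surjective
  have hρsur : ∀ y : Fin n → ZMod p, ∃ x : Fin n → ℤ, ρ x = y := by
    intro y
    refine ⟨fun i => (ZMod.cast (y i) : ℤ), ?_⟩
    funext i
    exact ZMod.intCast_zmod_cast (y i)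
  -- the image family spans the quotient
  have hgspan : ⊤ ≤ Submodule.span (ZMod p) (Set.range g) := by
    intro y _hy
    obtain ⟨x', rfl⟩ := Submodule.mkQ_surjective U y
    obtain ⟨x, rfl⟩ := hρsur x'
    have hx : x ∈ Submodule.span ℤ ({ε₂} ∪ Set.range (fun i : Fin n => q i - q m₂)) :=
      hqspan Submodule.mem_top
    have claim : ∀ z, z ∈ Submodule.span ℤ ({ε₂} ∪ Set.range (fun i : Fin n => q i - q m₂)) →
        ψ (ρ z) ∈ Submodule.span (ZMod p) (Set.range g) := by
      intro z hz
      induction hz using Submodule.span_induction with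
      | mem z hmem =>
        rcases hmem with rfl | ⟨i, rfl⟩
        · have : ψ (ρ z) = 0 := by
            rw [hψ, Submodule.mkQ_apply, Submodule.Quotient.mk_eq_zero]
            rw [hdep]
            exact Submodule.smul_mem _ _ (Submodule.mem_span_singleton_self _)
          rw [this]
          exact Submodule.zero_mem _
        · by_cases him : i = m₂
          · subst him
            show ψ (ρ (q i - q i)) ∈ _
            rw [sub_self, map_zero, map_zero]
            exact Submodule.zero_mem _
          · exact Submodule.subset_span ⟨⟨i, him⟩, rfl⟩
      | zero =>
        rw [map_zero, map_zero]
        exact Submodule.zero_mem _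
      | add x' y' hx' hy' ihx ihy =>
        rw [map_add, map_add]
        exact Submodule.add_mem _ ihx ihy
      | smul a x' hx' ih =>
        rw [hρsmul, map_smul]
        exact Submodule.smul_mem _ _ ih
    exact claim x hx
  have hcard : Fintype.card {i : Fin n // i ≠ m₂} = n - 1 := by
    have h1 : Fintype.card {i : Fin n // i = m₂} = 1 := Fintype.card_subtype_eq m₂
    have h2 := Fintype.card_subtype_compl (fun i : Fin n => i = m₂)
    simp only [Fintype.card_fin] at h2 ⊢
    rw [h2, h1]
  have hcoe := coe_basisOfTopLeSpanOfCardEqFinrank g hgspan (by rw [hcard, hfinQ])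
  have hginj : Function.Injective g := by
    rw [← hcoe]
    exact Module.Basis.injective _
  have hgne : ∀ ii, g ii ≠ 0 := by
    intro ii
    rw [← hcoe]
    exact Module.Basis.ne_zero _ ii
  -- contradiction with the collision
  obtain ⟨i, i', hii, hmem⟩ := hcol
  have hdiff0 : ψ (ρ (q i - q i')) = 0 := hψ0 _ hmem
  have harith : ψ (ρ (q i - q m₂)) - ψ (ρ (q i' - q m₂)) = ψ (ρ (q i - q i')) := by
    rw [← map_sub, ← map_sub]
    congr 1
    abel
  by_cases him : i = m₂
  · subst him
    apply hgne ⟨i', Ne.symm hii⟩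
    show ψ (ρ (q i' - q i)) = 0
    have : ψ (ρ (q i' - q i)) = - ψ (ρ (q i - q i')) := by
      rw [← map_neg, ← map_neg]
      congr 1
      abel
    rw [this, hdiff0, neg_zero]
  · by_cases him' : i' = m₂
    · subst him'
      apply hgne ⟨i, him⟩
      show ψ (ρ (q i - q i')) = 0
      exact hdiff0
    · have hinj := hginj
      have : g ⟨i, him⟩ = g ⟨i', him'⟩ := by
        have := harith
        rw [hdiff0] at this
        have h5 : ψ (ρ (q i - q m₂)) = ψ (ρ (q i' - q m₂)) := by
          have := sub_eq_zero.1 this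
          exact this
        exact h5
      have := hinj this
      exact hii (by injection this)

/-! ### full-dimensionality forces occupied lines -/

lemma affineSpan_ne_top {X : Set (Fin n → ℝ)} {x₀ : Fin n → ℝ} {s : Set (Fin n → ℝ)}
    (hfin : s.Finite) (hcard : s.ncard < n)
    (hX : ∀ x ∈ X, x - x₀ ∈ Submodule.span ℝ s) : affineSpan ℝ X ≠ ⊤ := by
  intro htop
  have h1 : vectorSpan ℝ X = ⊤ := by
    rw [← direction_affineSpan, htop]
    exact AffineSubspace.direction_top ℝ _ _
  have h2 : vectorSpan ℝ X ≤ Submodule.span ℝ s := by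
    rw [vectorSpan_def]
    apply Submodule.span_le.2
    rintro z ⟨x, hx, y, hy, rfl⟩
    have hxy : (x - x₀) - (y - x₀) ∈ Submodule.span ℝ s :=
      Submodule.sub_mem _ (hX x hx) (hX y hy)
    have heq : (x - x₀) - (y - x₀) = x - y := by abel
    rw [heq] at hxy
    exact hxy
  rw [h1] at h2
  have hsp : Submodule.span ℝ s = ⊤ := top_unique h2
  haveI := hfin.fintype
  have h3 : Module.finrank ℝ (Submodule.span ℝ s) ≤ s.ncard := by
    have h4 := finrank_span_le_card (R := ℝ) s
    rwa [← Set.ncard_eq_toFinset_card' s] at h4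
  rw [hsp] at h3
  have h5 : Module.finrank ℝ (⊤ : Submodule ℝ (Fin n → ℝ)) = n := by
    rw [finrank_top, Module.finrank_fin_fun]
  omega

lemma all_lines_occupied (hn : 2 ≤ n) {X : Set (Fin n → ℤ)}
    {r : Fin n → (Fin n → ℤ)} {ε : Fin n → ℤ}
    (hX : ∀ k ∈ X, ∃ (i : Fin n) (b : ℤ), k = r i + b • ε)
    (hspan : affineSpan ℝ (zc '' X) = ⊤) (i₀ : Fin n) :
    ∃ k ∈ X, ∃ b : ℤ, k = r i₀ + b • ε := by
  by_contra hno
  push_neg at hno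
  haveI : Nontrivial (Fin n) := Fin.nontrivial_iff_two_le.2 hn
  obtain ⟨i₁, hi₁⟩ := exists_ne i₀
  set s : Set (Fin n → ℝ) :=
    ((fun i : Fin n => zc (r i - r i₁)) '' {i | i ≠ i₀ ∧ i ≠ i₁}) ∪ {zc ε} with hs
  have hsetfin : ({i : Fin n | i ≠ i₀ ∧ i ≠ i₁}).Finite := Set.toFinite _
  have hfin : s.Finite := (hsetfin.image _).union (Set.finite_singleton _)
  have hcard : s.ncard < n := by
    have h1 : {i : Fin n | i ≠ i₀ ∧ i ≠ i₁} = Set.univ \ {i₀, i₁} := by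
      ext i
      simp [not_or]
    have h2 : ({i : Fin n | i ≠ i₀ ∧ i ≠ i₁}).ncard = n - 2 := by
      rw [h1, Set.ncard_diff (Set.subset_univ _), Set.ncard_univ,
        Nat.card_eq_fintype_card, Fintype.card_fin, Set.ncard_pair hi₁.symm]
    calc s.ncard ≤ ((fun i : Fin n => zc (r i - r i₁)) '' {i | i ≠ i₀ ∧ i ≠ i₁}).ncard
          + ({zc ε} : Set (Fin n → ℝ)).ncard := Set.ncard_union_le _ _
      _ ≤ (n - 2) + 1 := by
          gcongr
          · calc _ ≤ ({i : Fin n | i ≠ i₀ ∧ i ≠ i₁}).ncard := Set.ncard_image_le hsetfin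
              _ = n - 2 := h2
          · exact le_of_eq (Set.ncard_singleton _)
      _ < n := by omega
  refine affineSpan_ne_top (x₀ := zc (r i₁)) hfin hcard ?_ hspan
  rintro x ⟨k, hk, rfl⟩
  obtain ⟨i, b, rfl⟩ := hX k hk
  have hi : i ≠ i₀ := by
    rintro rfl
    exact hno _ hk b rfl
  have hxe : zc (r i + b • ε) - zc (r i₁) = zc (r i - r i₁) + (b:ℝ) • zc ε := by
    rw [← zc_smul, ← zc_add, ← zc_sub]
    congr 1
    abel
  rw [hxe]
  by_cases hii : i = i₁
  · subst hii
    have h0 : zc (r i - r i) = (0 : Fin n → ℝ) := by rw [sub_self, zc_zero]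
    rw [h0, zero_add]
    exact Submodule.smul_mem _ _ (Submodule.subset_span (Or.inr rfl))
  · exact Submodule.add_mem _
      (Submodule.subset_span (Or.inl ⟨i, ⟨hi, hii⟩, rfl⟩))
      (Submodule.smul_mem _ _ (Submodule.subset_span (Or.inr rfl)))

set_option maxHeartbeats 1600000 in
theorem main_translate (n : ℕ) (S₁ S₂ : Set (Fin n → ℝ))
    (h₁ : PolyEquiv (unimodSimplex n) S₁) (h₂ : PolyEquiv (unimodSimplex n) S₂)
    (u₁ u₂ : Fin n → ℤ)
    (hu₁ : IsEdgeDirection u₁ S₁) (hu₂ : IsEdgeDirection u₂ S₂)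
    (hind : LinearIndependent ℝ
      ![(fun i => (u₁ i : ℝ)), (fun i => (u₂ i : ℝ))])
    (C₁ : Set (Fin n → ℝ)) (hC₁ : C₁ = S₁ + Set.range (fun c : ℝ => c • fun i => (u₁ i : ℝ)))
    (C₂ : Set (Fin n → ℝ)) (hC₂ : C₂ = S₂ + Set.range (fun c : ℝ => c • fun i => (u₂ i : ℝ)))
    (Pz : (Fin n → ℤ) → Set (Fin n → ℝ))
    (hPz : ∀ z, Pz z =
      convexHull ℝ (C₁ ∩ (C₂ + {fun i => (z i : ℝ)}) ∩ intLat n))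
    (v w : Fin n → ℤ)
    (hv : affineSpan ℝ (Pz v) = ⊤) (hw : affineSpan ℝ (Pz w) = ⊤) :
    ∃ t : Fin n → ℤ, Pz w = Pz v + {fun i => (t i : ℝ)} := by
  classical
  have hn2 : 2 ≤ n := by
    have h := hind.fintype_card_le_finrank
    rw [Module.finrank_fin_fun] at h
    simpa using h
  obtain ⟨ε₁, p, m₁, b₁, hb₁, hru₁, hC₁lat⟩ := latDesc h₁ hu₁
  obtain ⟨ε₂, q, m₂, b₂, hb₂, hru₂, hC₂lat⟩ := latDesc h₂ hu₂
  have hC₁' : C₁ = S₁ + Set.range (fun c : ℝ => c • zc u₁) := hC₁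
  have hC₂' : C₂ = S₂ + Set.range (fun c : ℝ => c • zc u₂) := hC₂
  rw [← hC₁'] at hC₁lat
  rw [← hC₂'] at hC₂lat
  -- scaling between u and ε
  have hε₁m : b₁ m₁ = ε₁ := by rw [hb₁ m₁, if_pos rfl]
  have hε₂m : b₂ m₂ = ε₂ := by rw [hb₂ m₂, if_pos rfl]
  have hε₁ne : ε₁ ≠ 0 := hε₁m ▸ b₁.ne_zero m₁
  have hε₂ne : ε₂ ≠ 0 := hε₂m ▸ b₂.ne_zero m₂
  obtain ⟨ρ₁, hρ₁⟩ : ∃ ρ : ℝ, ρ • zc u₁ = zc ε₁ := by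
    have h1 : zc ε₁ ∈ Set.range (fun c : ℝ => c • zc ε₁) := ⟨1, one_smul _ _⟩
    rw [← hru₁] at h1
    exact h1
  obtain ⟨ρ₂, hρ₂⟩ : ∃ ρ : ℝ, ρ • zc u₂ = zc ε₂ := by
    have h1 : zc ε₂ ∈ Set.range (fun c : ℝ => c • zc ε₂) := ⟨1, one_smul _ _⟩
    rw [← hru₂] at h1
    exact h1
  have hρ₁ne : ρ₁ ≠ 0 := by
    intro h
    rw [h, zero_smul] at hρ₁
    exact hε₁ne (zc_inj (by rw [← hρ₁, zc_zero]))
  have hρ₂ne : ρ₂ ≠ 0 := by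
    intro h
    rw [h, zero_smul] at hρ₂
    exact hε₂ne (zc_inj (by rw [← hρ₂, zc_zero]))
  have hindZ : ∀ a c : ℤ, a • ε₁ = c • ε₂ → a = 0 := by
    intro a c hac
    by_contra ha
    have h1 : (a:ℝ) • zc ε₁ = (c:ℝ) • zc ε₂ := by rw [← zc_smul, ← zc_smul, hac]
    rw [← hρ₁, ← hρ₂, smul_smul, smul_smul] at h1
    have h2 := (linearIndependent_fin2.1 hind).2
    simp only [Matrix.cons_val_one, Matrix.head_cons, Matrix.cons_val_zero] at h2
    have haρ : (a:ℝ) * ρ₁ ≠ 0 := mul_ne_zero (Int.cast_ne_zero.2 ha) hρ₁ne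
    apply h2 (((c:ℝ) * ρ₂) / ((a:ℝ) * ρ₁))
    show (((c:ℝ) * ρ₂) / ((a:ℝ) * ρ₁)) • zc u₂ = zc u₁
    rw [div_eq_mul_inv, mul_comm, mul_smul, ← h1, smul_smul, inv_mul_cancel₀ haρ, one_smul]
  -- the lattice intersection sets
  set Λ : Submodule ℤ (Fin n → ℤ) := Submodule.span ℤ ({ε₁, ε₂} : Set (Fin n → ℤ)) with hΛ
  set XZ : (Fin n → ℤ) → Set (Fin n → ℤ) := fun z =>
    {k | (∃ (j : Fin n) (a : ℤ), k = p j + a • ε₁) ∧ (∃ (i : Fin n) (b : ℤ), k = q i + z + b • ε₂)} with hXZ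
  have hXzeq : ∀ z : Fin n → ℤ, C₁ ∩ (C₂ + {zc z}) ∩ intLat n = zc '' XZ z := by
    intro z
    ext x
    constructor
    · rintro ⟨⟨hx1, hx2⟩, hxl⟩
      have hxc1 : x ∈ ⋃ j, {x | ∃ a : ℤ, x = zc (p j + a • ε₁)} := by
        rw [← hC₁lat]
        exact ⟨hx1, hxl⟩
      obtain ⟨j, hj'⟩ := Set.mem_iUnion.1 hxc1
      obtain ⟨a, hja⟩ := hj'
      obtain ⟨y, hy, t, ht, hyt⟩ := hx2
      rw [Set.mem_singleton_iff] at ht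
      subst ht
      have hyt' : y + zc z = x := hyt
      have hylat : y ∈ intLat n := by
        have h3 : y = x - zc z := by rw [← hyt']; abel
        rw [h3]
        exact intLat_sub hxl (zc_mem_intLat z)
      have hyc2 : y ∈ ⋃ i, {x | ∃ b : ℤ, x = zc (q i + b • ε₂)} := by
        rw [← hC₂lat]
        exact ⟨hy, hylat⟩
      obtain ⟨i, hi'⟩ := Set.mem_iUnion.1 hyc2
      obtain ⟨b, hib⟩ := hi'
      refine ⟨p j + a • ε₁, ⟨⟨j, a, rfl⟩, ⟨i, b, ?_⟩⟩, hja.symm⟩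
      apply zc_inj
      rw [← hja]
      have h4 : q i + z + b • ε₂ = (q i + b • ε₂) + z := by abel
      rw [h4, zc_add, ← hib, hyt']
    · rintro ⟨k, ⟨⟨j, a, hk1⟩, ⟨i, b, hk2⟩⟩, rfl⟩
      refine ⟨⟨?_, ?_⟩, zc_mem_intLat k⟩
      · have h5 : zc k ∈ C₁ ∩ intLat n := by
          rw [hC₁lat]
          exact Set.mem_iUnion.2 ⟨j, a, by rw [hk1]⟩
        exact h5.1
      · refine ⟨zc (q i + b • ε₂), ?_, zc z, rfl, ?_⟩
        · have h6 : zc (q i + b • ε₂) ∈ C₂ ∩ intLat n := by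
            rw [hC₂lat]
            exact Set.mem_iUnion.2 ⟨i, b, rfl⟩
          exact h6.1
        · show zc (q i + b • ε₂) + zc z = zc k
          rw [← zc_add]
          congr 1
          rw [hk2]
          abel
  have hPz' : ∀ z, Pz z = convexHull ℝ (zc '' XZ z) := by
    intro z
    rw [hPz z]
    exact congrArg _ (hXzeq z)
  have hvX : affineSpan ℝ (zc '' XZ v) = ⊤ := by
    rw [hPz' v, affineSpan_convexHull] at hv
    exact hv
  have hwX : affineSpan ℝ (zc '' XZ w) = ⊤ := by
    rw [hPz' w, affineSpan_convexHull] at hw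
    exact hw
  -- matchings
  have hmatchM : ∀ (z : Fin n → ℤ), affineSpan ℝ (zc '' XZ z) = ⊤ →
      ∀ i, ∃ j, ∃ a b : ℤ, p j + a • ε₁ = q i + z + b • ε₂ := by
    intro z hsp i
    have hXprop : ∀ k ∈ XZ z, ∃ (i' : Fin n) (b : ℤ), k = (q i' + z) + b • ε₂ := by
      intro k hk
      obtain ⟨i', b', h⟩ := hk.2
      exact ⟨i', b', by rw [h]⟩
    obtain ⟨k, hkX, b, hkb⟩ := all_lines_occupied hn2 hXprop hsp i
    obtain ⟨j, a, hja⟩ := hkX.1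
    exact ⟨j, a, b, by rw [← hja, hkb]⟩
  have hmatchL : ∀ (z : Fin n → ℤ), affineSpan ℝ (zc '' XZ z) = ⊤ →
      ∀ j, ∃ i, ∃ a b : ℤ, p j + a • ε₁ = q i + z + b • ε₂ := by
    intro z hsp j
    have hXprop : ∀ k ∈ XZ z, ∃ (j' : Fin n) (a : ℤ), k = p j' + a • ε₁ := fun k hk => hk.1
    obtain ⟨k, hkX, a, hka⟩ := all_lines_occupied hn2 hXprop hsp j
    obtain ⟨i, b, hib⟩ := hkX.2
    exact ⟨i, a, b, by rw [← hka, hib]⟩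
  -- the collision
  have hcol : ∃ i i' : Fin n, i ≠ i' ∧ q i - q i' ∈ Λ := by
    by_contra hnc
    push_neg at hnc
    have huniq : ∀ (j : Fin n), ∀ k ∈ XZ v, ∀ k' ∈ XZ v,
        (∃ a : ℤ, k = p j + a • ε₁) → (∃ a : ℤ, k' = p j + a • ε₁) → k = k' := by
      rintro j k hk k' hk' ⟨a, ha⟩ ⟨a', ha'⟩
      obtain ⟨i, b, hb⟩ := hk.2
      obtain ⟨i', b', hb'⟩ := hk'.2
      by_cases hii : i = i'
      · subst hii
        have h1 : (a - a') • ε₁ = (b - b') • ε₂ := by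
          have e1 : k - k' = (a - a') • ε₁ := by
            rw [ha, ha']
            module
          have e2 : k - k' = (b - b') • ε₂ := by
            rw [hb, hb']
            module
          rw [← e1, e2]
        have h2 := hindZ _ _ h1
        have h3 : a = a' := by omega
        rw [ha, ha', h3]
      · exfalso
        apply hnc i i' hii
        have h4 : q i - q i' = (a - a') • ε₁ + (b' - b) • ε₂ := by
          have e1 : p j + a • ε₁ = q i + v + b • ε₂ := by rw [← ha, hb]
          have e2 : p j + a' • ε₁ = q i' + v + b' • ε₂ := by rw [← ha', hb']
          linear_combination (norm := module) e2 - e1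
        rw [h4]
        exact Submodule.add_mem _
          (Submodule.smul_mem _ _ (Submodule.subset_span (Or.inl rfl)))
          (Submodule.smul_mem _ _ (Submodule.subset_span (Or.inr rfl)))
    set y : Fin n → (Fin n → ℤ) := fun j =>
      if h : ∃ k, k ∈ XZ v ∧ ∃ a : ℤ, k = p j + a • ε₁ then h.choose else 0 with hy
    have hycov : ∀ k ∈ XZ v, ∃ j, k = y j := by
      intro k hk
      obtain ⟨j, a, hja⟩ := hk.1
      refine ⟨j, ?_⟩
      have hex : ∃ k', k' ∈ XZ v ∧ ∃ a : ℤ, k' = p j + a • ε₁ := ⟨k, hk, a, hja⟩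
      rw [hy]
      simp only [dif_pos hex]
      obtain ⟨hc1, hc2⟩ := hex.choose_spec
      exact huniq j k hk _ hc1 ⟨a, hja⟩ hc2
    have hfin : (((fun j => zc (y j) - zc (y m₁)) '' {j : Fin n | j ≠ m₁})).Finite :=
      (Set.toFinite _).image _
    have hcard : (((fun j => zc (y j) - zc (y m₁)) '' {j : Fin n | j ≠ m₁})).ncard < n := by
      have h1 : {j : Fin n | j ≠ m₁} = Set.univ \ {m₁} := by
        ext j; simp
      have h2 : ({j : Fin n | j ≠ m₁}).ncard = n - 1 := by
        rw [h1, Set.ncard_diff (Set.subset_univ _), Set.ncard_univ,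
          Nat.card_eq_fintype_card, Fintype.card_fin, Set.ncard_singleton]
      calc _ ≤ ({j : Fin n | j ≠ m₁}).ncard := Set.ncard_image_le (Set.toFinite _)
        _ = n - 1 := h2
        _ < n := by omega
    refine affineSpan_ne_top (x₀ := zc (y m₁)) hfin hcard ?_ hvX
    rintro x ⟨k, hk, rfl⟩
    obtain ⟨j, rfl⟩ := hycov k hk
    by_cases hjm : j = m₁
    · subst hjm
      have h0 : zc (y j) - zc (y j) = 0 := sub_self _
      rw [h0]
      exact Submodule.zero_mem _
    · exact Submodule.subset_span ⟨j, hjm, rfl⟩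
  -- invariance of the class set and torsion
  have hmeq : ∀ x y : Fin n → ℤ, x - y ∈ Λ → Λ.mkQ x = Λ.mkQ y := by
    intro x y h
    rw [Submodule.mkQ_apply, Submodule.mkQ_apply]
    exact (Submodule.Quotient.eq Λ).2 h
  have hstep : ∀ x ∈ Set.range (fun j => Λ.mkQ (p j)),
      x + (Λ.mkQ w - Λ.mkQ v) ∈ Set.range (fun j => Λ.mkQ (p j)) := by
    rintro x ⟨j, rfl⟩
    obtain ⟨i, a, bb, hab⟩ := hmatchL v hvX j
    obtain ⟨j', a', bb', hab'⟩ := hmatchM w hwX i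
    have h1 : Λ.mkQ (p j) = Λ.mkQ (q i + v) := by
      apply hmeq
      have hd : p j - (q i + v) = (-a) • ε₁ + bb • ε₂ := by
        linear_combination (norm := module) hab
      rw [hd]
      exact Submodule.add_mem _
        (Submodule.smul_mem _ _ (Submodule.subset_span (Or.inl rfl)))
        (Submodule.smul_mem _ _ (Submodule.subset_span (Or.inr rfl)))
    have h2 : Λ.mkQ (p j') = Λ.mkQ (q i + w) := by
      apply hmeq
      have hd : p j' - (q i + w) = (-a') • ε₁ + bb' • ε₂ := by
        linear_combination (norm := module) hab'
      rw [hd]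
      exact Submodule.add_mem _
        (Submodule.smul_mem _ _ (Submodule.subset_span (Or.inl rfl)))
        (Submodule.smul_mem _ _ (Submodule.subset_span (Or.inr rfl)))
    refine ⟨j', ?_⟩
    show Λ.mkQ (p j') = Λ.mkQ (p j) + (Λ.mkQ w - Λ.mkQ v)
    rw [h1, h2, map_add, map_add]
    abel
  have hiter : ∀ t : ℕ, Λ.mkQ (p m₁) + t • (Λ.mkQ w - Λ.mkQ v)
      ∈ Set.range (fun j => Λ.mkQ (p j)) := by
    intro t
    induction t with
    | zero => simpa using ⟨m₁, rfl⟩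
    | succ t ih =>
      have h3 := hstep _ ih
      rw [succ_nsmul, ← add_assoc]
      exact h3
  obtain ⟨t, -, t', -, htne, hteq⟩ := Set.Infinite.exists_ne_map_eq_of_mapsTo
    (Set.infinite_univ (α := ℕ))
    (fun t _ => hiter t) (Set.finite_range _)
  have hts : t • (Λ.mkQ w - Λ.mkQ v) = t' • (Λ.mkQ w - Λ.mkQ v) := add_left_cancel hteq
  have hcanc : ∀ s s' : ℕ, s' < s → s • (Λ.mkQ w - Λ.mkQ v) = s' • (Λ.mkQ w - Λ.mkQ v) →
      ∃ k : ℕ, 0 < k ∧ (k : ℤ) • (w - v) ∈ Λ := by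
    intro s s' hlt hss
    refine ⟨s - s', by omega, ?_⟩
    have h4 : (s - s' + s') • (Λ.mkQ w - Λ.mkQ v) = s' • (Λ.mkQ w - Λ.mkQ v) := by
      rw [Nat.sub_add_cancel hlt.le]
      exact hss
    rw [add_nsmul] at h4
    have h5 : (s - s') • (Λ.mkQ w - Λ.mkQ v) + s' • (Λ.mkQ w - Λ.mkQ v)
        = 0 + s' • (Λ.mkQ w - Λ.mkQ v) := by
      rw [zero_add]
      exact h4
    have h6 : (s - s') • (Λ.mkQ w - Λ.mkQ v) = 0 := add_right_cancel h5
    have h7 : Λ.mkQ (((s - s' : ℕ) : ℤ) • (w - v)) = 0 := by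
      rw [map_smul, map_sub]
      rw [natCast_zsmul]
      exact h6
    rwa [Submodule.mkQ_apply, Submodule.Quotient.mk_eq_zero] at h7
  have hkey : ∃ k : ℕ, 0 < k ∧ (k : ℤ) • (w - v) ∈ Λ := by
    rcases htne.lt_or_gt with hlt | hlt
    · exact hcanc t' t hlt hts.symm
    · exact hcanc t t' hlt hts
  obtain ⟨k, hk0, hkmem⟩ := hkey
  -- primitivity and spanning for the torsion lemma
  have hprim1 : ∀ (c : ℤ) (e : Fin n → ℤ), ε₁ = c • e → IsUnit c := by
    intro c e hce
    have h1 : b₁.repr ε₁ m₁ = 1 := by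
      rw [← hε₁m, b₁.repr_self]
      simp
    have h2 : b₁.repr ε₁ m₁ = c * b₁.repr e m₁ := by
      rw [hce, map_smul]
      simp
    exact IsUnit.of_mul_eq_one _ (by rw [← h2, h1])
  have hprim2 : ∀ (c : ℤ) (e : Fin n → ℤ), ε₂ = c • e → IsUnit c := by
    intro c e hce
    have h1 : b₂.repr ε₂ m₂ = 1 := by
      rw [← hε₂m, b₂.repr_self]
      simp
    have h2 : b₂.repr ε₂ m₂ = c * b₂.repr e m₂ := by
      rw [hce, map_smul]
      simp
    exact IsUnit.of_mul_eq_one _ (by rw [← h2, h1])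
  have hqspan : (⊤ : Submodule ℤ (Fin n → ℤ)) ≤ Submodule.span ℤ
      ({ε₂} ∪ Set.range (fun i : Fin n => q i - q m₂)) := by
    intro x _hx
    have hx := Module.Basis.sum_repr b₂ x
    rw [← hx]
    apply Submodule.sum_mem
    intro i _
    apply Submodule.smul_mem
    apply Submodule.subset_span
    by_cases him : i = m₂
    · subst him
      rw [hb₂ i, if_pos rfl]
      exact Or.inl rfl
    · rw [hb₂ i, if_neg him]
      exact Or.inr ⟨i, rfl⟩
  have hdΛ : w - v ∈ Λ := key_torsion hprim1 hprim2 hqspan hcol k hk0 hkmem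
  obtain ⟨α, β, hαβ⟩ := Submodule.mem_span_pair.1 hdΛ
  -- conclusion: translation by α • ε₁
  refine ⟨α • ε₁, ?_⟩
  have hsets : zc '' XZ w = (zc '' XZ v) + {zc (α • ε₁)} := by
    ext x
    constructor
    · rintro ⟨k', ⟨⟨j, a, hk1⟩, ⟨i, b, hk2⟩⟩, rfl⟩
      refine ⟨zc (k' - α • ε₁), ⟨k' - α • ε₁, ⟨⟨j, a - α, ?_⟩, ⟨i, b + β, ?_⟩⟩, rfl⟩,
        zc (α • ε₁), rfl, ?_⟩
      · rw [hk1]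
        module
      · linear_combination (norm := module) hk2 - hαβ
      · show zc (k' - α • ε₁) + zc (α • ε₁) = zc k'
        rw [← zc_add]
        exact congrArg zc (by abel)
    · rintro ⟨x', ⟨k', ⟨⟨j, a, hk1⟩, ⟨i, b, hk2⟩⟩, rfl⟩, t'', ht'', rfl⟩
      rw [Set.mem_singleton_iff] at ht''
      subst ht''
      refine ⟨k' + α • ε₁, ⟨⟨j, a + α, ?_⟩, ⟨i, b - β, ?_⟩⟩, ?_⟩
      · rw [hk1]
        module
      · linear_combination (norm := module) hk2 + hαβ
      · show zc (k' + α • ε₁) = zc k' + zc (α • ε₁)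
        rw [← zc_add]
  rw [hPz' w, hPz' v, hsets, convexHull_add, convexHull_singleton]
  rfl

end Scratch

/-- Any two full-dimensional lattice intersections of translates of two infinite
prisms over unimodular simplices coincide up to a lattice translation. -/
theorem prism_intersections_translate (n : ℕ) (S₁ S₂ : Set (Fin n → ℝ))
    (h₁ : PolyEquiv (unimodSimplex n) S₁) (h₂ : PolyEquiv (unimodSimplex n) S₂)
    (u₁ u₂ : Fin n → ℤ)
    (hu₁ : IsEdgeDirection u₁ S₁) (hu₂ : IsEdgeDirection u₂ S₂)
    (hind : LinearIndependent ℝ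
      ![(fun i => (u₁ i : ℝ)), (fun i => (u₂ i : ℝ))])
    (C₁ : Set (Fin n → ℝ)) (hC₁ : C₁ = S₁ + Set.range (fun c : ℝ => c • fun i => (u₁ i : ℝ)))
    (C₂ : Set (Fin n → ℝ)) (hC₂ : C₂ = S₂ + Set.range (fun c : ℝ => c • fun i => (u₂ i : ℝ)))
    (Pz : (Fin n → ℤ) → Set (Fin n → ℝ))
    (hPz : ∀ z, Pz z =
      convexHull ℝ (C₁ ∩ (C₂ + {fun i => (z i : ℝ)}) ∩ intLat n))
    (v w : Fin n → ℤ)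
    (hv : affineSpan ℝ (Pz v) = ⊤) (hw : affineSpan ℝ (Pz w) = ⊤) :
    ∃ t : Fin n → ℤ, Pz w = Pz v + {fun i => (t i : ℝ)} :=
  Scratch.main_translate n S₁ S₂ h₁ h₂ u₁ u₂ hu₁ hu₂ hind C₁ hC₁ C₂ hC₂ Pz hPz v w hv hw
end

section
/- The intersection of the two infinite prisms C₁ = conv(0, e₂, …, eₙ) + ℝe₁ and C₂ = conv(0, e₁, e₃, …, eₙ) + ℝe₂ in ℝⁿ equals the (n−2)-fold lattice pyramid over the unit square, i.e. C₁ ∩ C₂ = conv(0, e₁, e₂, e₁+e₂, e₃, …, eₙ). -/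
open Set Pointwise

lemma prism_subset_halfspace (n : ℕ) (k : Fin (n + 2)) :
    (convexHull ℝ
        (insert (0 : Fin (n + 2) → ℝ)
          {x | ∃ i : Fin (n + 2), i ≠ k ∧ x = Pi.single i (1 : ℝ)}) +
      Set.range (fun c : ℝ => c • (Pi.single k 1 : Fin (n + 2) → ℝ))) ⊆
    {x : Fin (n + 2) → ℝ |
      (∀ i, i ≠ k → 0 ≤ x i) ∧ ∑ i ∈ Finset.univ.erase k, x i ≤ 1} := by
  have hconv : Convex ℝ {x : Fin (n + 2) → ℝ |
      (∀ i, i ≠ k → 0 ≤ x i) ∧ ∑ i ∈ Finset.univ.erase k, x i ≤ 1} := by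
    intro x hx y hy a b ha hb hab
    refine ⟨fun i hi => ?_, ?_⟩
    · have h1 := hx.1 i hi
      have h2 := hy.1 i hi
      simp only [Pi.add_apply, Pi.smul_apply, smul_eq_mul]
      exact add_nonneg (mul_nonneg ha h1) (mul_nonneg hb h2)
    · have hsum : ∑ i ∈ Finset.univ.erase k, (a • x + b • y) i
        = a * ∑ i ∈ Finset.univ.erase k, x i + b * ∑ i ∈ Finset.univ.erase k, y i := by
        calc ∑ i ∈ Finset.univ.erase k, (a • x + b • y) i
            = ∑ i ∈ Finset.univ.erase k, (a * x i + b * y i) := by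
              refine Finset.sum_congr rfl fun i _ => ?_
              simp [smul_eq_mul]
          _ = a * ∑ i ∈ Finset.univ.erase k, x i + b * ∑ i ∈ Finset.univ.erase k, y i := by
              rw [Finset.sum_add_distrib, ← Finset.mul_sum, ← Finset.mul_sum]
      have hx2 := hx.2
      have hy2 := hy.2
      show ∑ i ∈ Finset.univ.erase k, (a • x + b • y) i ≤ 1
      rw [hsum]
      nlinarith
  have hgen : insert (0 : Fin (n + 2) → ℝ)
      {x | ∃ i : Fin (n + 2), i ≠ k ∧ x = Pi.single i (1 : ℝ)} ⊆
      {x : Fin (n + 2) → ℝ |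
        (∀ i, i ≠ k → 0 ≤ x i) ∧ ∑ i ∈ Finset.univ.erase k, x i ≤ 1} := by
    rintro y (rfl | ⟨i, hik, rfl⟩)
    · exact ⟨fun i _ => le_refl 0, by simp⟩
    · refine ⟨fun j hj => ?_, ?_⟩
      · rcases eq_or_ne j i with rfl | h
        · simp
        · rw [Pi.single_eq_of_ne h]
      · rw [Finset.sum_pi_single']
        split <;> norm_num
  rintro x ⟨y, hy, _, ⟨c, rfl⟩, rfl⟩
  have hyH := convexHull_min hgen hconv hy
  constructor
  · intro i hi
    have := hyH.1 i hi
    simpa [Pi.single_eq_of_ne hi] using this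
  · have heq : ∑ i ∈ Finset.univ.erase k, (y + c • (Pi.single k 1 : Fin (n + 2) → ℝ)) i
      = ∑ i ∈ Finset.univ.erase k, y i := by
      refine Finset.sum_congr rfl fun i hi => ?_
      have hik : i ≠ k := (Finset.mem_erase.mp hi).1
      simp [Pi.single_eq_of_ne hik]
    show ∑ i ∈ Finset.univ.erase k, (y + c • (Pi.single k 1 : Fin (n + 2) → ℝ)) i ≤ 1
    rw [heq]
    exact hyH.2

lemma mem_pyramid (n : ℕ) (x : Fin (n + 2) → ℝ)
    (h0 : ∀ i, 0 ≤ x i)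
    (h1 : ∑ i ∈ Finset.univ.erase 0, x i ≤ 1)
    (h2 : ∑ i ∈ Finset.univ.erase 1, x i ≤ 1) :
    x ∈ convexHull ℝ
      (insert ((Pi.single 0 1 : Fin (n + 2) → ℝ) + (Pi.single 1 1 : Fin (n + 2) → ℝ))
        (insert 0 (Set.range fun i : Fin (n + 2) => Pi.single i (1 : ℝ)))) := by
  have h01 : (0 : Fin (n + 2)) ≠ 1 := zero_ne_one
  have h10 : (1 : Fin (n + 2)) ≠ 0 := Ne.symm h01
  set S := ∑ i ∈ (Finset.univ.erase 0).erase 1, x i with hSdef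
  have hmem1 : (1 : Fin (n + 2)) ∈ Finset.univ.erase 0 := by
    simp [Finset.mem_erase, h10]
  have hmem0 : (0 : Fin (n + 2)) ∈ Finset.univ.erase 1 := by
    simp [Finset.mem_erase, h01]
  have hS1 : x 1 + S ≤ 1 := by
    rw [hSdef, Finset.add_sum_erase _ _ hmem1]; exact h1
  have hS0 : x 0 + S ≤ 1 := by
    rw [hSdef, Finset.erase_right_comm, Finset.add_sum_erase _ _ hmem0]; exact h2
  have hSnn : 0 ≤ S := Finset.sum_nonneg fun i _ => h0 i
  set l := min (x 0) (x 1) with hldef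
  set f : Fin (n + 2) → ℝ :=
    fun i => if i = 0 then x 0 - l else if i = 1 then x 1 - l else x i with hfdef
  set w : Fin (n + 2) ⊕ Fin 2 → ℝ :=
    Sum.elim f (fun j => if j = 0 then 1 - (x 0 + x 1 - l + S) else l) with hwdef
  set z : Fin (n + 2) ⊕ Fin 2 → (Fin (n + 2) → ℝ) :=
    Sum.elim (fun i => Pi.single i (1 : ℝ))
      (fun j => if j = 0 then 0 else
        (Pi.single 0 1 : Fin (n + 2) → ℝ) + (Pi.single 1 1 : Fin (n + 2) → ℝ)) with hzdef
  have hlnn : 0 ≤ l := le_min (h0 0) (h0 1)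
  have hl0 : l ≤ x 0 := min_le_left _ _
  have hl1 : l ≤ x 1 := min_le_right _ _
  have hmax : x 0 + x 1 - l + S ≤ 1 := by
    have hmm : l + max (x 0) (x 1) = x 0 + x 1 := min_add_max _ _
    have : max (x 0) (x 1) + S ≤ 1 := by
      rcases max_cases (x 0) (x 1) with ⟨h, _⟩ | ⟨h, _⟩ <;> rw [h] <;> linarith
    linarith
  have hfnn : ∀ i, 0 ≤ f i := by
    intro i
    simp only [hfdef]
    split_ifs
    · linarith
    · linarith
    · exact h0 i
  have hf0 : f 0 = x 0 - l := by simp [hfdef]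
  have hf1 : f 1 = x 1 - l := by simp [hfdef, h10]
  have hfsum : ∑ i, f i = (x 0 - l) + ((x 1 - l) + S) := by
    have e1 : ∑ i, f i = f 0 + ∑ i ∈ Finset.univ.erase 0, f i :=
      (Finset.add_sum_erase _ f (Finset.mem_univ 0)).symm
    have e2 : ∑ i ∈ Finset.univ.erase 0, f i
        = f 1 + ∑ i ∈ (Finset.univ.erase 0).erase 1, f i :=
      (Finset.add_sum_erase _ f hmem1).symm
    have e3 : ∑ i ∈ (Finset.univ.erase 0).erase 1, f i = S := by
      refine Finset.sum_congr rfl fun i hi => ?_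
      have hi1 : i ≠ 1 := (Finset.mem_erase.mp hi).1
      have hi0 : i ≠ 0 := (Finset.mem_erase.mp (Finset.mem_erase.mp hi).2).1
      simp [hfdef, hi0, hi1]
    rw [e1, e2, e3, hf0, hf1]
  have h120 : ¬((1 : Fin 2) = 0) := by decide
  have hwnn : ∀ i ∈ Finset.univ, 0 ≤ w i := by
    rintro (i | j) _
    · exact hfnn i
    · simp only [hwdef, Sum.elim_inr]
      split_ifs
      · linarith
      · exact hlnn
  have hwsum : ∑ i, w i = 1 := by
    rw [Fintype.sum_sum_type]
    have hl : ∑ i : Fin (n + 2), w (Sum.inl i) = (x 0 - l) + ((x 1 - l) + S) := by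
      simp only [hwdef, Sum.elim_inl]
      exact hfsum
    have hr : ∑ j : Fin 2, w (Sum.inr j) = (1 - (x 0 + x 1 - l + S)) + l := by
      rw [Fin.sum_univ_two]
      simp only [hwdef, Sum.elim_inr]
      simp [h120]
    rw [hl, hr]
    ring
  have hsingle : ∀ i : Fin (n + 2),
      f i • (Pi.single i (1 : ℝ) : Fin (n + 2) → ℝ) = (Pi.single i (f i) : Fin (n + 2) → ℝ) := by
    intro i
    funext j
    rcases eq_or_ne j i with rfl | h
    · simp
    · simp [Pi.single_eq_of_ne h]
  have hinl : ∑ i : Fin (n + 2), w (Sum.inl i) • z (Sum.inl i) = f := by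
    simp only [hwdef, hzdef, Sum.elim_inl]
    rw [Finset.sum_congr rfl fun i _ => hsingle i]
    exact Finset.univ_sum_single f
  have hinr : ∑ j : Fin 2, w (Sum.inr j) • z (Sum.inr j)
      = l • ((Pi.single 0 1 : Fin (n + 2) → ℝ) + (Pi.single 1 1 : Fin (n + 2) → ℝ)) := by
    rw [Fin.sum_univ_two]
    simp only [hwdef, hzdef, Sum.elim_inr]
    simp [h120]
  have hx : Finset.univ.centerMass w z = x := by
    rw [Finset.centerMass_eq_of_sum_1 _ _ hwsum, Fintype.sum_sum_type, hinl, hinr]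
    funext j
    simp only [Pi.add_apply, Pi.smul_apply, smul_eq_mul]
    rcases eq_or_ne j 0 with rfl | hj0
    · rw [Pi.single_eq_same, Pi.single_eq_of_ne h01, hf0]
      ring
    rcases eq_or_ne j 1 with rfl | hj1
    · rw [Pi.single_eq_same, Pi.single_eq_of_ne h10, hf1]
      ring
    · have hfj : f j = x j := by simp [hfdef, hj0, hj1]
      rw [Pi.single_eq_of_ne hj0, Pi.single_eq_of_ne hj1, hfj]
      ring
  rw [← hx]
  refine Finset.centerMass_mem_convexHull _ hwnn (by rw [hwsum]; norm_num) ?_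
  rintro (i | j) _
  · exact Set.mem_insert_of_mem _ (Set.mem_insert_of_mem _ ⟨i, rfl⟩)
  · simp only [hzdef, Sum.elim_inr]
    split_ifs
    · exact Set.mem_insert_of_mem _ (Set.mem_insert _ _)
    · exact Set.mem_insert _ _

/-- The intersection of the prisms `conv(0,e₂,…,eₙ) + ℝe₁` and
`conv(0,e₁,e₃,…,eₙ) + ℝe₂` is `conv(0,e₁,e₂,e₁+e₂,e₃,…,eₙ)`, the
`(n-2)`-fold lattice pyramid over the unit square. -/
theorem prisms_intersection_sq_pyramid (n : ℕ) :
    (convexHull ℝ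
        (insert (0 : Fin (n + 2) → ℝ)
          {x | ∃ i : Fin (n + 2), i ≠ 0 ∧ x = Pi.single i (1 : ℝ)}) +
      Set.range (fun c : ℝ => c • (Pi.single 0 1 : Fin (n + 2) → ℝ))) ∩
    (convexHull ℝ
        (insert (0 : Fin (n + 2) → ℝ)
          {x | ∃ i : Fin (n + 2), i ≠ 1 ∧ x = Pi.single i (1 : ℝ)}) +
      Set.range (fun c : ℝ => c • (Pi.single 1 1 : Fin (n + 2) → ℝ))) =
    convexHull ℝ
      (insert ((Pi.single 0 1 : Fin (n + 2) → ℝ) + (Pi.single 1 1 : Fin (n + 2) → ℝ))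
        (insert 0 (Set.range fun i : Fin (n + 2) => Pi.single i (1 : ℝ)))) := by
  have h01 : (0 : Fin (n + 2)) ≠ 1 := zero_ne_one
  have h10 : (1 : Fin (n + 2)) ≠ 0 := Ne.symm h01
  have hrange : ∀ v : Fin (n + 2) → ℝ, Convex ℝ (Set.range fun c : ℝ => c • v) := by
    intro v
    rintro _ ⟨c, rfl⟩ _ ⟨d, rfl⟩ a b ha hb hab
    exact ⟨a * c + b * d, by simp [add_smul, mul_smul]⟩
  apply Set.Subset.antisymm
  · rintro x ⟨hx1, hx2⟩
    have H1 := prism_subset_halfspace n 0 hx1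
    have H2 := prism_subset_halfspace n 1 hx2
    refine mem_pyramid n x ?_ H1.2 H2.2
    intro i
    rcases eq_or_ne i 0 with rfl | hi
    · exact H2.1 0 h01
    · exact H1.1 i hi
  · apply subset_inter
    · apply convexHull_min _ (Convex.add (convex_convexHull ℝ _) (hrange _))
      rintro y (rfl | rfl | ⟨i, rfl⟩)
      · exact ⟨Pi.single 1 1,
          subset_convexHull ℝ _ (Set.mem_insert_of_mem _ ⟨1, h10, rfl⟩),
          Pi.single 0 1, ⟨1, one_smul _ _⟩, by abel⟩
      · exact ⟨0, subset_convexHull ℝ _ (Set.mem_insert _ _), 0, ⟨0, zero_smul _ _⟩,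
          by simp⟩
      · rcases eq_or_ne i 0 with rfl | hi
        · exact ⟨0, subset_convexHull ℝ _ (Set.mem_insert _ _),
            Pi.single 0 1, ⟨1, one_smul _ _⟩, by simp⟩
        · exact ⟨Pi.single i 1,
            subset_convexHull ℝ _ (Set.mem_insert_of_mem _ ⟨i, hi, rfl⟩),
            0, ⟨0, zero_smul _ _⟩, by simp⟩
    · apply convexHull_min _ (Convex.add (convex_convexHull ℝ _) (hrange _))
      rintro y (rfl | rfl | ⟨i, rfl⟩)
      · exact ⟨Pi.single 0 1,
          subset_convexHull ℝ _ (Set.mem_insert_of_mem _ ⟨0, h01, rfl⟩),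
          Pi.single 1 1, ⟨1, one_smul _ _⟩, rfl⟩
      · exact ⟨0, subset_convexHull ℝ _ (Set.mem_insert _ _), 0, ⟨0, zero_smul _ _⟩,
          by simp⟩
      · rcases eq_or_ne i 1 with rfl | hi
        · exact ⟨0, subset_convexHull ℝ _ (Set.mem_insert _ _),
            Pi.single 1 1, ⟨1, one_smul _ _⟩, by simp⟩
        · exact ⟨Pi.single i 1,
            subset_convexHull ℝ _ (Set.mem_insert_of_mem _ ⟨i, hi, rfl⟩),
            0, ⟨0, zero_smul _ _⟩, by simp⟩
end

section
/- The intersection of the two infinite prisms C₁ = conv(0, e₂, …, eₙ) + ℝe₁ and C₂ = conv(0, e₁, e₃, …, eₙ) + ℝ(e₂ − e₃) in ℝⁿ (n ≥ 3) equals the standard unimodular simplex Δₙ = conv(0, e₁, …, eₙ). -/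
open Set Pointwise


lemma single_smul' (N : ℕ) (i : Fin N) (c : ℝ) :
    c • (Pi.single i (1:ℝ) : Fin N → ℝ) = Pi.single i c := by
  funext j; by_cases h : j = i
  · subst h; simp
  · simp [h, Pi.single_eq_of_ne h]

lemma conv_char {N : ℕ} (p : Fin N → Prop) [DecidablePred p] :
    convexHull ℝ (insert (0 : Fin N → ℝ) {x | ∃ i, p i ∧ x = Pi.single i 1}) =
    {x : Fin N → ℝ | (∀ i, 0 ≤ x i) ∧ (∀ i, ¬ p i → x i = 0) ∧ ∑ i, x i ≤ 1} := by
  classical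
  apply Subset.antisymm
  · apply convexHull_min
    · rintro y (rfl | ⟨i, hpi, rfl⟩)
      · exact ⟨fun i => le_refl 0, fun i _ => rfl, by simp⟩
      · refine ⟨fun j => ?_, fun j hj => ?_, ?_⟩
        · by_cases h : j = i
          · subst h; simp
          · simp [Pi.single_eq_of_ne h]
        · have : j ≠ i := fun h => hj (h ▸ hpi)
          simp [Pi.single_eq_of_ne this]
        · simp [Finset.sum_pi_single']
    · rintro x ⟨hx0, hxp, hxs⟩ y ⟨hy0, hyp, hys⟩ a b ha hb hab
      refine ⟨fun i => ?_, fun i hi => ?_, ?_⟩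
      · have := add_nonneg (mul_nonneg ha (hx0 i)) (mul_nonneg hb (hy0 i))
        simpa using this
      · simp [hxp i hi, hyp i hi]
      · have : ∑ i, (a • x + b • y) i = a * ∑ i, x i + b * ∑ i, y i := by
          simp [Finset.mul_sum, Finset.sum_add_distrib]
        rw [this]
        calc a * ∑ i, x i + b * ∑ i, y i ≤ a * 1 + b * 1 :=
              add_le_add (mul_le_mul_of_nonneg_left hxs ha)
                (mul_le_mul_of_nonneg_left hys hb)
          _ = 1 := by rw [mul_one, mul_one, hab]
  · rintro x ⟨h0, hp, hs⟩
    have hconv : Convex ℝ (convexHull ℝ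
        (insert (0 : Fin N → ℝ) {x | ∃ i, p i ∧ x = Pi.single i 1})) :=
      convex_convexHull ℝ _
    have key := hconv.sum_mem (t := (Finset.univ : Finset (Option (Fin N))))
      (w := fun o => o.elim (1 - ∑ i, x i) x)
      (z := fun o => o.elim 0 (fun i => if p i then Pi.single i (1:ℝ) else 0))
      (fun o _ => by cases o with
        | none => simpa using hs
        | some i => exact h0 i)
      (by rw [Fintype.sum_option]; simp)
      (fun o _ => by cases o with
        | none => exact subset_convexHull ℝ _ (mem_insert _ _)
        | some i =>
            by_cases h : p i
            · simp only [Option.elim, if_pos h]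
              exact subset_convexHull ℝ _ (mem_insert_of_mem _ ⟨i, h, rfl⟩)
            · simp only [Option.elim, if_neg h]
              exact subset_convexHull ℝ _ (mem_insert _ _))
    have hx : ∑ o : Option (Fin N), (o.elim (1 - ∑ i, x i) x) •
        (o.elim 0 (fun i => if p i then Pi.single i (1:ℝ) else 0)) = x := by
      rw [Fintype.sum_option]
      simp only [Option.elim, smul_zero, zero_add]
      have h1 : ∀ i, x i • (if p i then (Pi.single i (1:ℝ) : Fin N → ℝ) else 0)
          = Pi.single i (x i) := by
        intro i
        by_cases h : p i
        · rw [if_pos h, single_smul']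
        · rw [if_neg h, smul_zero, hp i h, Pi.single_zero]
      simp_rw [h1]
      exact Finset.univ_sum_single x
    rwa [hx] at key

lemma mem_add_range {N : ℕ} (A : Set (Fin N → ℝ)) (v x : Fin N → ℝ) :
    x ∈ A + Set.range (fun c : ℝ => c • v) ↔ ∃ c : ℝ, x - c • v ∈ A := by
  constructor
  · rintro ⟨y, hy, _, ⟨c, rfl⟩, rfl⟩
    exact ⟨c, by simpa using hy⟩
  · rintro ⟨c, hc⟩
    exact ⟨x - c • v, hc, c • v, ⟨c, rfl⟩, sub_add_cancel x (c • v)⟩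

/-- The intersection of the prisms `conv(0,e₂,…,eₙ) + ℝe₁` and
`conv(0,e₁,e₃,…,eₙ) + ℝ(e₂ − e₃)` is the standard unimodular simplex
`Δₙ = conv(0,e₁,…,eₙ)` (here `n ≥ 3`). -/
theorem prisms_intersection_simplex (n : ℕ) :
    (convexHull ℝ
        (insert (0 : Fin (n + 3) → ℝ)
          {x | ∃ i : Fin (n + 3), i ≠ 0 ∧ x = Pi.single i (1 : ℝ)}) +
      Set.range (fun c : ℝ => c • (Pi.single 0 1 : Fin (n + 3) → ℝ))) ∩
    (convexHull ℝ
        (insert (0 : Fin (n + 3) → ℝ)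
          {x | ∃ i : Fin (n + 3), i ≠ 1 ∧ x = Pi.single i (1 : ℝ)}) +
      Set.range (fun c : ℝ =>
        c • ((Pi.single 1 1 : Fin (n + 3) → ℝ) - (Pi.single 2 1 : Fin (n + 3) → ℝ)))) =
    convexHull ℝ
      (insert (0 : Fin (n + 3) → ℝ)
        (Set.range fun i : Fin (n + 3) => Pi.single i (1 : ℝ))) := by
  classical
  have h01 : (0 : Fin (n+3)) ≠ 1 := by simp [Fin.ext_iff]
  have h02 : (0 : Fin (n+3)) ≠ 2 := by simp [Fin.ext_iff, Nat.mod_eq_of_lt (show 2 < n + 3 by omega)]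
  have h12 : (1 : Fin (n+3)) ≠ 2 := by simp [Fin.ext_iff, Nat.mod_eq_of_lt (show 2 < n + 3 by omega)]
  -- rewrite the RHS generator set
  have hr : (Set.range fun i : Fin (n+3) => Pi.single i (1:ℝ)) =
      {x : Fin (n+3) → ℝ | ∃ i, (fun _ : Fin (n+3) => True) i ∧ x = Pi.single i 1} := by
    ext y; simp [eq_comm, Set.mem_range]
  rw [hr, conv_char (fun i : Fin (n+3) => i ≠ 0), conv_char (fun i : Fin (n+3) => i ≠ 1),
    conv_char (fun _ : Fin (n+3) => True)]
  -- component values of the direction vectors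
  set e0 : Fin (n+3) → ℝ := Pi.single 0 1 with he0
  set v : Fin (n+3) → ℝ := Pi.single 1 1 - Pi.single 2 1 with hv
  have hv0 : v 0 = 0 := by
    simp [hv, Pi.single_eq_of_ne h01, Pi.single_eq_of_ne h02]
  have hv1 : v 1 = 1 := by simp [hv, Pi.single_eq_of_ne h12]
  have hv2 : v 2 = -1 := by simp [hv, Pi.single_eq_of_ne (Ne.symm h12)]
  have hvi : ∀ i : Fin (n+3), i ≠ 1 → i ≠ 2 → v i = 0 := by
    intro i hi1 hi2
    simp [hv, Pi.single_eq_of_ne hi1, Pi.single_eq_of_ne hi2]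
  have he00 : e0 0 = 1 := by simp [he0]
  have he0i : ∀ i : Fin (n+3), i ≠ 0 → e0 i = 0 := by
    intro i hi; simp [he0, Pi.single_eq_of_ne hi]
  have hsume : ∑ i, e0 i = 1 := by simp [he0, Finset.sum_pi_single']
  have hsumv : ∑ i, v i = 0 := by simp [hv, Finset.sum_pi_single']
  ext x
  simp only [Set.mem_inter_iff, mem_add_range, Set.mem_setOf_eq, Pi.sub_apply,
    Pi.smul_apply, smul_eq_mul, not_not, not_true, forall_const]
  have hsum : ∀ (c : ℝ) (w : Fin (n+3) → ℝ),
      ∑ i, (x i - c * w i) = ∑ i, x i - c * ∑ i, w i := by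
    intro c w
    rw [Finset.sum_sub_distrib, ← Finset.mul_sum]
  constructor
  · rintro ⟨⟨c, h1a, h1b, h1c⟩, ⟨d, h2a, h2b, h2c⟩⟩
    refine ⟨fun i => ?_, fun i h => h.elim, ?_⟩
    · by_cases hi : i = 0
      · subst hi
        have := h2a 0
        rwa [hv0, mul_zero, sub_zero] at this
      · have := h1a i
        rwa [he0i i hi, mul_zero, sub_zero] at this
    · have := h2c
      rwa [hsum, hsumv, mul_zero, sub_zero] at this
  · rintro ⟨h0, -, hs⟩
    constructor
    · refine ⟨x 0, fun i => ?_, fun i hi => ?_, ?_⟩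
      · by_cases hi : i = 0
        · subst hi; rw [he00, mul_one, sub_self]
        · rw [he0i i hi, mul_zero, sub_zero]; exact h0 i
      · rw [hi, he00, mul_one, sub_self]
      · rw [hsum, hsume, mul_one]
        have := h0 0
        linarith
    · refine ⟨x 1, fun i => ?_, fun i hi => ?_, ?_⟩
      · by_cases hi1 : i = 1
        · subst hi1; rw [hv1, mul_one, sub_self]
        · by_cases hi2 : i = 2
          · subst hi2; rw [hv2]
            have := h0 1; have := h0 2
            linarith
          · rw [hvi i hi1 hi2, mul_zero, sub_zero]; exact h0 i
      · rw [hi, hv1, mul_one, sub_self]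
      · rw [hsum, hsumv, mul_zero, sub_zero]; exact hs
end

section
/- For the prisms C₁ = conv(0, e₂, …, eₙ) + ℝe₁ and C₂ = conv(0, e₁, e₃, …, eₙ) + ℝe₂ in ℝⁿ and a lattice vector w ∈ ℤⁿ, the intersection C₁ ∩ (C₂ + w) is n-dimensional if and only if w ∈ ℤe₁ + ℤe₂; and in that case C₁ ∩ (C₂ + w) is a lattice translate of C₁ ∩ C₂. -/
open Set Pointwise

lemma prism_subset (m : ℕ) (j : Fin m) (x : Fin m → ℝ)
    (hx : x ∈ convexHull ℝ
        (insert (0 : Fin m → ℝ) {y | ∃ i : Fin m, i ≠ j ∧ y = Pi.single i (1 : ℝ)}) +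
      Set.range (fun c : ℝ => c • (Pi.single j 1 : Fin m → ℝ))) :
    (∀ i, i ≠ j → 0 ≤ x i) ∧ ∑ i ∈ Finset.univ.erase j, x i ≤ 1 := by
  obtain ⟨h, hh, z, hz, rfl⟩ := hx
  obtain ⟨c, rfl⟩ := hz
  set K : Set (Fin m → ℝ) :=
    {y | (∀ i, i ≠ j → 0 ≤ y i) ∧ ∑ i ∈ Finset.univ.erase j, y i ≤ 1} with hK
  have hKconv : Convex ℝ K := by
    intro y hy u hu a b ha hb hab
    constructor
    · intro i hi
      have h1 := hy.1 i hi; have h2 := hu.1 i hi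
      have : 0 ≤ a * y i + b * u i := by positivity
      simpa using this
    · have h1 : ∑ i ∈ Finset.univ.erase j, (a • y + b • u) i
          = a * ∑ i ∈ Finset.univ.erase j, y i + b * ∑ i ∈ Finset.univ.erase j, u i := by
        simp only [Pi.add_apply, Pi.smul_apply, smul_eq_mul,
          Finset.sum_add_distrib, Finset.mul_sum]
      rw [h1]
      nlinarith [hy.2, hu.2]
  have hsub : insert (0 : Fin m → ℝ) {y | ∃ i : Fin m, i ≠ j ∧ y = Pi.single i (1 : ℝ)} ⊆ K := by
    rintro y (rfl | ⟨i, hij, rfl⟩)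
    · exact ⟨fun i _ => le_refl 0, by simp⟩
    · constructor
      · intro k _
        rcases eq_or_ne k i with rfl | hki
        · simp
        · simp [Pi.single_eq_of_ne hki]
      · rw [Finset.sum_pi_single']
        simp [hij]
  have hhK : h ∈ K := convexHull_min hsub hKconv hh
  have hcoord : ∀ i, i ≠ j → (h + c • (Pi.single j 1 : Fin m → ℝ)) i = h i := by
    intro i hi
    simp [Pi.single_eq_of_ne hi]
  refine ⟨fun i hi => ?_, ?_⟩
  · have := hhK.1 i hi
    simpa [Pi.single_eq_of_ne hi] using this
  · have hstep : ∑ i ∈ Finset.univ.erase j, (h + c • (Pi.single j 1 : Fin m → ℝ)) i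
        = ∑ i ∈ Finset.univ.erase j, h i :=
      Finset.sum_congr rfl fun i hi => hcoord i (Finset.ne_of_mem_erase hi)
    exact hstep.trans_le hhK.2

lemma line_absorb (m : ℕ) (j : Fin m) (H : Set (Fin m → ℝ)) (c : ℝ) :
    (H + Set.range (fun t : ℝ => t • (Pi.single j 1 : Fin m → ℝ)))
        + {c • (Pi.single j 1 : Fin m → ℝ)}
      = H + Set.range (fun t : ℝ => t • (Pi.single j 1 : Fin m → ℝ)) := by
  rw [add_assoc]
  congr 1
  ext x
  simp only [Set.add_singleton, Set.mem_image, Set.mem_range]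
  constructor
  · rintro ⟨y, ⟨t, rfl⟩, rfl⟩
    exact ⟨t + c, by rw [add_smul]⟩
  · rintro ⟨t, rfl⟩
    exact ⟨(t - c) • (Pi.single j 1 : Fin m → ℝ), ⟨t - c, rfl⟩, by rw [← add_smul]; ring_nf⟩

lemma zero_mem_prism (m : ℕ) (j : Fin m) :
    (0 : Fin m → ℝ) ∈ convexHull ℝ
        (insert (0 : Fin m → ℝ) {y | ∃ i : Fin m, i ≠ j ∧ y = Pi.single i (1 : ℝ)}) +
      Set.range (fun c : ℝ => c • (Pi.single j 1 : Fin m → ℝ)) := by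
  have h0 : (0 : Fin m → ℝ) ∈ convexHull ℝ
      (insert (0 : Fin m → ℝ) {y | ∃ i : Fin m, i ≠ j ∧ y = Pi.single i (1 : ℝ)}) :=
    subset_convexHull ℝ _ (Set.mem_insert _ _)
  have h1 : (0 : Fin m → ℝ) ∈ Set.range (fun c : ℝ => c • (Pi.single j 1 : Fin m → ℝ)) :=
    ⟨0, by simp⟩
  have := Set.add_mem_add h0 h1
  simpa using this

lemma single_mem_prism (m : ℕ) (j i : Fin m) :
    (Pi.single i 1 : Fin m → ℝ) ∈ convexHull ℝ
        (insert (0 : Fin m → ℝ) {y | ∃ k : Fin m, k ≠ j ∧ y = Pi.single k (1 : ℝ)}) +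
      Set.range (fun c : ℝ => c • (Pi.single j 1 : Fin m → ℝ)) := by
  rcases eq_or_ne i j with rfl | hij
  · have h0 : (0 : Fin m → ℝ) ∈ convexHull ℝ
        (insert (0 : Fin m → ℝ) {y | ∃ k : Fin m, k ≠ i ∧ y = Pi.single k (1 : ℝ)}) :=
      subset_convexHull ℝ _ (Set.mem_insert _ _)
    have h1 : (Pi.single i 1 : Fin m → ℝ) ∈
        Set.range (fun c : ℝ => c • (Pi.single i 1 : Fin m → ℝ)) := ⟨1, by simp⟩
    have := Set.add_mem_add h0 h1
    simpa using this
  · have h0 : (Pi.single i 1 : Fin m → ℝ) ∈ convexHull ℝ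
        (insert (0 : Fin m → ℝ) {y | ∃ k : Fin m, k ≠ j ∧ y = Pi.single k (1 : ℝ)}) :=
      subset_convexHull ℝ _ (Set.mem_insert_of_mem _ ⟨i, hij, rfl⟩)
    have h1 : (0 : Fin m → ℝ) ∈ Set.range (fun c : ℝ => c • (Pi.single j 1 : Fin m → ℝ)) :=
      ⟨0, by simp⟩
    have := Set.add_mem_add h0 h1
    simpa using this

lemma span_top_of_translate (n : ℕ) (S : Set (Fin (n + 2) → ℝ)) (v : Fin (n + 2) → ℝ)
    (hv : v ∈ S) (hs : ∀ i, Pi.single i 1 + v ∈ S) : affineSpan ℝ S = ⊤ := by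
  rw [AffineSubspace.affineSpan_eq_top_iff_vectorSpan_eq_top_of_nonempty ℝ
    (Fin (n + 2) → ℝ) (Fin (n + 2) → ℝ) ⟨v, hv⟩]
  have hsingle : ∀ i, (Pi.single i 1 : Fin (n + 2) → ℝ) ∈
      (vectorSpan ℝ S : Submodule ℝ (Fin (n + 2) → ℝ)) := by
    intro i
    have h2 : (Pi.single i 1 + v) -ᵥ v ∈ (vectorSpan ℝ S : Submodule ℝ (Fin (n + 2) → ℝ)) :=
      vsub_mem_vectorSpan (k := ℝ) (V := Fin (n + 2) → ℝ) (P := Fin (n + 2) → ℝ) (hs i) hv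
    simpa [vsub_eq_sub] using h2
  have hb : Submodule.span ℝ (Set.range (Pi.basisFun ℝ (Fin (n + 2)))) = ⊤ :=
    (Pi.basisFun ℝ (Fin (n + 2))).span_eq
  rw [eq_top_iff, ← hb]
  refine Submodule.span_le.mpr ?_
  rintro _ ⟨i, rfl⟩
  simpa [Pi.basisFun_apply] using hsingle i

lemma const_coord_not_span_top (n : ℕ) (S : Set (Fin (n + 2) → ℝ)) (j : Fin (n + 2)) (c : ℝ)
    (hc : ∀ x ∈ S, x j = c) (hspan : affineSpan ℝ S = ⊤) : False := by
  set f : (Fin (n + 2) → ℝ) →ᵃ[ℝ] ℝ :=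
    (LinearMap.proj j : (Fin (n + 2) → ℝ) →ₗ[ℝ] ℝ).toAffineMap with hf
  have hle : affineSpan ℝ S ≤
      AffineSubspace.comap f (affineSpan ℝ ({c} : Set ℝ)) := by
    rw [affineSpan_le]
    intro x hx
    have hfx : f x = c := hc x hx
    show f x ∈ affineSpan ℝ ({c} : Set ℝ)
    rw [hfx]
    exact subset_affineSpan ℝ _ rfl
  rw [hspan] at hle
  have h0 : (0 : Fin (n + 2) → ℝ) ∈ AffineSubspace.comap f (affineSpan ℝ ({c} : Set ℝ)) :=
    hle trivial
  have h1 : (Pi.single j 1 : Fin (n + 2) → ℝ) ∈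
      AffineSubspace.comap f (affineSpan ℝ ({c} : Set ℝ)) := hle trivial
  rw [AffineSubspace.mem_comap] at h0 h1
  rw [AffineSubspace.mem_affineSpan_singleton] at h0 h1
  have e0 : f 0 = 0 := by simp [hf]
  have e1 : f (Pi.single j 1) = 1 := by simp [hf]
  rw [e0] at h0; rw [e1] at h1
  exact zero_ne_one (h0.trans h1.symm)

/-- For the prisms `C₁ = conv(0,e₂,…,eₙ) + ℝe₁` and `C₂ = conv(0,e₁,e₃,…,eₙ) + ℝe₂`
and `w ∈ ℤⁿ`, the intersection `C₁ ∩ (C₂ + w)` is `n`-dimensional iff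
`w ∈ ℤe₁ + ℤe₂`, and in that case it is a lattice translate of `C₁ ∩ C₂`. -/
theorem prisms_translate_intersection (n : ℕ) (w : Fin (n + 2) → ℤ)
    (C₁ C₂ : Set (Fin (n + 2) → ℝ))
    (hC₁ : C₁ = convexHull ℝ
        (insert (0 : Fin (n + 2) → ℝ)
          {x | ∃ i : Fin (n + 2), i ≠ 0 ∧ x = Pi.single i (1 : ℝ)}) +
      Set.range (fun c : ℝ => c • (Pi.single 0 1 : Fin (n + 2) → ℝ)))
    (hC₂ : C₂ = convexHull ℝ
        (insert (0 : Fin (n + 2) → ℝ)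
          {x | ∃ i : Fin (n + 2), i ≠ 1 ∧ x = Pi.single i (1 : ℝ)}) +
      Set.range (fun c : ℝ => c • (Pi.single 1 1 : Fin (n + 2) → ℝ))) :
    (affineSpan ℝ (C₁ ∩ (C₂ + {fun i => (w i : ℝ)})) = ⊤ ↔
        ∃ a b : ℤ, w = a • (Pi.single 0 1 : Fin (n + 2) → ℤ) +
          b • (Pi.single 1 1 : Fin (n + 2) → ℤ)) ∧
      (affineSpan ℝ (C₁ ∩ (C₂ + {fun i => (w i : ℝ)})) = ⊤ →
        ∃ t : Fin (n + 2) → ℤ,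
          C₁ ∩ (C₂ + {fun i => (w i : ℝ)}) =
            (C₁ ∩ C₂) + {fun i => (t i : ℝ)}) := by
  -- Step 1: if the span is top then `w j = 0` for `j ∉ {0,1}`.
  have hkey1 : affineSpan ℝ (C₁ ∩ (C₂ + {fun i => (w i : ℝ)})) = ⊤ →
      ∀ j : Fin (n + 2), j ≠ 0 → j ≠ 1 → w j = 0 := by
    intro hspan j hj0 hj1
    by_contra hwj
    obtain ⟨c, hc⟩ : ∃ c : ℝ, ∀ x ∈ C₁ ∩ (C₂ + {fun i => (w i : ℝ)}), x j = c := by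
      rcases lt_or_ge (w j) 0 with hneg | hpos
      · refine ⟨0, ?_⟩
        rintro x ⟨hx1, hx2⟩
        rw [Set.add_singleton] at hx2
        obtain ⟨y, hy, rfl⟩ := hx2
        rw [hC₁] at hx1
        obtain ⟨h1, _⟩ := prism_subset _ 0 _ hx1
        rw [hC₂] at hy
        obtain ⟨h3, h4⟩ := prism_subset _ 1 y hy
        have hyj : y j ≤ 1 :=
          le_trans (Finset.single_le_sum (fun i hi => h3 i (Finset.ne_of_mem_erase hi))
            (Finset.mem_erase.mpr ⟨hj1, Finset.mem_univ _⟩)) h4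
        have hwle : (w j : ℝ) ≤ -1 := by
          have : w j ≤ -1 := by omega
          exact_mod_cast this
        have hge : (0 : ℝ) ≤ y j + (w j : ℝ) := h1 j hj0
        show y j + (w j : ℝ) = 0
        linarith
      · have hpos1 : (1 : ℤ) ≤ w j := lt_of_le_of_ne hpos (Ne.symm hwj)
        refine ⟨1, ?_⟩
        rintro x ⟨hx1, hx2⟩
        rw [Set.add_singleton] at hx2
        obtain ⟨y, hy, rfl⟩ := hx2
        rw [hC₁] at hx1
        obtain ⟨h1, h2⟩ := prism_subset _ 0 _ hx1
        rw [hC₂] at hy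
        obtain ⟨h3, _⟩ := prism_subset _ 1 y hy
        have hxle : y j + (w j : ℝ) ≤ 1 :=
          le_trans (Finset.single_le_sum (fun i hi => h1 i (Finset.ne_of_mem_erase hi))
            (Finset.mem_erase.mpr ⟨hj0, Finset.mem_univ _⟩)) h2
        have hwge : (1 : ℝ) ≤ (w j : ℝ) := by exact_mod_cast hpos1
        have hyj : 0 ≤ y j := h3 j hj1
        show y j + (w j : ℝ) = 1
        linarith
    exact const_coord_not_span_top n _ j c hc hspan
  -- Step 2: if `w ∈ ℤe₀ + ℤe₁` then the intersection is a lattice translate.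
  have hkey2 : (∃ a b : ℤ, w = a • (Pi.single 0 1 : Fin (n + 2) → ℤ) +
        b • (Pi.single 1 1 : Fin (n + 2) → ℤ)) →
      C₁ ∩ (C₂ + {fun i => (w i : ℝ)}) =
        (C₁ ∩ C₂) + {fun i => (((w 0 • Pi.single 0 1 : Fin (n + 2) → ℤ)) i : ℝ)} := by
    rintro ⟨a, b, hw⟩
    have ha : w 0 = a := by rw [hw]; simp
    have hb : w 1 = b := by rw [hw]; simp [Pi.single_apply]
    set v : Fin (n + 2) → ℝ := (a : ℝ) • (Pi.single 0 1 : Fin (n + 2) → ℝ) with hv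
    have hwR : (fun i => (w i : ℝ)) =
        v + (b : ℝ) • (Pi.single 1 1 : Fin (n + 2) → ℝ) := by
      funext i
      rw [hw]
      simp [hv, Pi.single_apply]
    have htR : (fun i => (((w 0 • Pi.single 0 1 : Fin (n + 2) → ℤ)) i : ℝ)) = v := by
      funext i
      rw [ha]
      simp [hv, Pi.single_apply]
    have hC2w : C₂ + {fun i => (w i : ℝ)} = C₂ + {v} := by
      rw [hwR]
      have hsplit : ({v + (b : ℝ) • (Pi.single 1 1 : Fin (n + 2) → ℝ)} :
            Set (Fin (n + 2) → ℝ))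
          = {(b : ℝ) • (Pi.single 1 1 : Fin (n + 2) → ℝ)} + {v} := by
        rw [Set.singleton_add_singleton,
          add_comm ((b : ℝ) • (Pi.single 1 1 : Fin (n + 2) → ℝ)) v]
      rw [hsplit, ← add_assoc, hC₂, line_absorb]
    have hC1v : C₁ + {v} = C₁ := by rw [hC₁, hv]; exact line_absorb _ 0 _ _
    have hdist : (C₁ ∩ C₂) + {v} = (C₁ + {v}) ∩ (C₂ + {v}) := by
      simp only [Set.add_singleton]
      exact Set.image_inter (add_left_injective v)
    rw [htR, hC2w, hdist, hC1v]
  -- Step 3: if `w ∈ ℤe₀ + ℤe₁` then the span is top.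
  have hkey3 : (∃ a b : ℤ, w = a • (Pi.single 0 1 : Fin (n + 2) → ℤ) +
        b • (Pi.single 1 1 : Fin (n + 2) → ℤ)) →
      affineSpan ℝ (C₁ ∩ (C₂ + {fun i => (w i : ℝ)})) = ⊤ := by
    intro hab
    rw [hkey2 hab]
    set v : Fin (n + 2) → ℝ := fun i => (((w 0 • Pi.single 0 1 : Fin (n + 2) → ℤ)) i : ℝ)
    have h0mem : (0 : Fin (n + 2) → ℝ) ∈ C₁ ∩ C₂ := by
      rw [hC₁, hC₂]
      exact ⟨zero_mem_prism _ 0, zero_mem_prism _ 1⟩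
    have hsmem : ∀ i, (Pi.single i 1 : Fin (n + 2) → ℝ) ∈ C₁ ∩ C₂ := by
      intro i
      rw [hC₁, hC₂]
      exact ⟨single_mem_prism _ 0 i, single_mem_prism _ 1 i⟩
    refine span_top_of_translate n _ v ?_ ?_
    · have := Set.add_mem_add h0mem (Set.mem_singleton v)
      simpa using this
    · intro i
      exact Set.add_mem_add (hsmem i) (Set.mem_singleton v)
  constructor
  · constructor
    · intro hspan
      refine ⟨w 0, w 1, funext fun i => ?_⟩
      rcases eq_or_ne i 0 with rfl | hi0
      · simp
      rcases eq_or_ne i 1 with rfl | hi1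
      · simp [Pi.single_apply]
      · rw [hkey1 hspan i hi0 hi1]
        simp [Pi.single_apply, hi0, hi1]
    · exact hkey3
  · intro hspan
    refine ⟨w 0 • Pi.single 0 1, hkey2 ?_⟩
    refine ⟨w 0, w 1, funext fun i => ?_⟩
    rcases eq_or_ne i 0 with rfl | hi0
    · simp
    rcases eq_or_ne i 1 with rfl | hi1
    · simp [Pi.single_apply]
    · rw [hkey1 hspan i hi0 hi1]
      simp [Pi.single_apply, hi0, hi1]
end

section
/- Let k ∈ ℤ_{≥0} and define in ℝ³ the polytopes P₁ᵏ = conv(e₁, e₂, e₁+e₂, 2e₂, k·e₂+e₃), P₂ᵏ = conv(e₁, e₂, e₁+e₂, 2e₁, k·e₁+e₃), and P₃ = conv(0, e₁, e₂, e₁+e₂, e₃). Then each of the three pairwise Minkowski sums P₁ᵏ+P₂ᵏ, P₁ᵏ+P₃, P₂ᵏ+P₃ is hollow (contains no interior lattice point), and each single polytope P₁ᵏ, P₂ᵏ, P₃ is hollow; consequently the triple (P₁ᵏ, P₂ᵏ, P₃) has mixed degree at most one. -/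
open Set Pointwise

/-- The lattice points of `ℝ³` (points with integer coordinates). -/
def intLat3 : Set (Fin 3 → ℝ) := {x | ∀ i, ∃ m : ℤ, x i = (m : ℝ)}

/-- A set is hollow if its interior contains no lattice point. -/
def IsHollow3 (P : Set (Fin 3 → ℝ)) : Prop := interior P ∩ intLat3 = ∅

noncomputable def e₁ : Fin 3 → ℝ := Pi.single 0 1
noncomputable def e₂ : Fin 3 → ℝ := Pi.single 1 1
noncomputable def e₃ : Fin 3 → ℝ := Pi.single 2 1

/-- `P₁ᵏ = conv(e₁, e₂, e₁+e₂, 2e₂, k·e₂+e₃)`. -/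
noncomputable def P₁ (k : ℕ) : Set (Fin 3 → ℝ) :=
  convexHull ℝ {e₁, e₂, e₁ + e₂, (2 : ℝ) • e₂, (k : ℝ) • e₂ + e₃}

/-- `P₂ᵏ = conv(e₁, e₂, e₁+e₂, 2e₁, k·e₁+e₃)`. -/
noncomputable def P₂ (k : ℕ) : Set (Fin 3 → ℝ) :=
  convexHull ℝ {e₁, e₂, e₁ + e₂, (2 : ℝ) • e₁, (k : ℝ) • e₁ + e₃}

/-- `P₃ = conv(0, e₁, e₂, e₁+e₂, e₃)`. -/
noncomputable def P₃ : Set (Fin 3 → ℝ) :=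
  convexHull ℝ {0, e₁, e₂, e₁ + e₂, e₃}

/- ### Auxiliary machinery -/

/-- A linear functional on `ℝ³` given by coefficient vector `c`. -/
def Ff (c x : Fin 3 → ℝ) : ℝ := c 0 * x 0 + c 1 * x 1 + c 2 * x 2

lemma Ff_add (c x y : Fin 3 → ℝ) : Ff c (x + y) = Ff c x + Ff c y := by
  simp [Ff]; ring

lemma Ff_combo (c x y : Fin 3 → ℝ) (s t : ℝ) :
    Ff c (s • x + t • y) = s * Ff c x + t * Ff c y := by
  simp [Ff, smul_eq_mul]; ring

lemma slab_convex (c : Fin 3 → ℝ) (a b : ℝ) :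
    Convex ℝ {x : Fin 3 → ℝ | Ff c x ∈ Icc a b} := by
  intro x hx y hy s t hs ht hst
  simp only [mem_setOf_eq, mem_Icc] at *
  rw [Ff_combo]
  have h1 : s * a ≤ s * Ff c x := mul_le_mul_of_nonneg_left hx.1 hs
  have h2 : t * a ≤ t * Ff c y := mul_le_mul_of_nonneg_left hy.1 ht
  have h3 : s * Ff c x ≤ s * b := mul_le_mul_of_nonneg_left hx.2 hs
  have h4 : t * Ff c y ≤ t * b := mul_le_mul_of_nonneg_left hy.2 ht
  have ha : s * a + t * a = a := by rw [← add_mul, hst, one_mul]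
  have hb : s * b + t * b = b := by rw [← add_mul, hst, one_mul]
  constructor <;> linarith

lemma sum_bound {P Q : Set (Fin 3 → ℝ)} {c : Fin 3 → ℝ} {a b a' b' : ℝ}
    (hP : ∀ x ∈ P, Ff c x ∈ Icc a b) (hQ : ∀ x ∈ Q, Ff c x ∈ Icc a' b') :
    ∀ x ∈ P + Q, Ff c x ∈ Icc (a + a') (b + b') := by
  intro x hx
  rcases Set.mem_add.mp hx with ⟨p, hp, q, hq, rfl⟩
  obtain ⟨h1, h2⟩ := hP p hp
  obtain ⟨h3, h4⟩ := hQ q hq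
  rw [Ff_add]
  exact ⟨by linarith, by linarith⟩

lemma Ff_single (c : Fin 3 → ℝ) (j : Fin 3) :
    Ff c (Pi.single j 1) = c j := by
  fin_cases j <;> simp [Ff, Pi.single_apply]

/-- Interiors of sets in a slab satisfy the strict slab inequalities. -/
lemma interior_strict {P : Set (Fin 3 → ℝ)} {c : Fin 3 → ℝ} {a b : ℝ}
    (hP : ∀ x ∈ P, Ff c x ∈ Icc a b) (j : Fin 3) (hj : c j ≠ 0)
    {x : Fin 3 → ℝ} (hx : x ∈ interior P) : Ff c x ∈ Ioo a b := by
  obtain ⟨ε, hε, hball⟩ := Metric.isOpen_iff.mp isOpen_interior x hx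
  set v : Fin 3 → ℝ := Pi.single j 1 with hv
  set t : ℝ := ε / (2 * (‖v‖ + 1)) with ht
  have hvnorm : (0:ℝ) ≤ ‖v‖ := norm_nonneg v
  have htpos : 0 < t := by positivity
  have hdist : ∀ s : ℝ, |s| = t → x + s • v ∈ P := by
    intro s hs
    have : dist (x + s • v) x < ε := by
      rw [dist_eq_norm]
      have : x + s • v - x = s • v := by abel
      rw [this, norm_smul, Real.norm_eq_abs, hs]
      calc t * ‖v‖ ≤ t * (‖v‖ + 1) := by nlinarith
        _ = ε / 2 := by rw [ht]; field_simp
        _ < ε := by linarith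
    exact interior_subset (hball this)
  have h1 := hP _ (hdist t (abs_of_pos htpos))
  have h2 := hP _ (hdist (-t) (by rw [abs_neg, abs_of_pos htpos]))
  have e1 : Ff c (x + t • v) = Ff c x + t * c j := by
    have := Ff_combo c x v 1 t
    simp only [one_smul] at this
    rw [this, Ff_single, one_mul]
  have e2 : Ff c (x + (-t) • v) = Ff c x - t * c j := by
    have := Ff_combo c x v 1 (-t)
    simp only [one_smul] at this
    rw [this, Ff_single, one_mul]; ring
  rw [e1, mem_Icc] at h1
  rw [e2, mem_Icc] at h2
  rcases lt_or_gt_of_ne hj with h | h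
  · constructor
    · nlinarith [h1.1]
    · nlinarith [h2.2]
  · constructor
    · nlinarith [h2.1]
    · nlinarith [h1.2]

/- Rewriting the vertices as explicit vectors. -/

lemma he₁ : e₁ = ![1,0,0] := by
  funext i; fin_cases i <;> simp [e₁, Pi.single_apply]
lemma he₂ : e₂ = ![0,1,0] := by
  funext i; fin_cases i <;> simp [e₂, Pi.single_apply]
lemma he₃ : e₃ = ![0,0,1] := by
  funext i; fin_cases i <;> simp [e₃, Pi.single_apply]
lemma he₁₂ : e₁ + e₂ = ![1,1,0] := by
  funext i; fin_cases i <;> simp [e₁, e₂, Pi.single_apply]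
lemma h2e₂ : (2:ℝ) • e₂ = ![0,2,0] := by
  funext i; fin_cases i <;> simp [e₂, Pi.single_apply]
lemma h2e₁ : (2:ℝ) • e₁ = ![2,0,0] := by
  funext i; fin_cases i <;> simp [e₁, Pi.single_apply]
lemma hke₂ (k : ℕ) : (k:ℝ) • e₂ + e₃ = ![0,(k:ℝ),1] := by
  funext i; fin_cases i <;> simp [e₂, e₃, Pi.single_apply]
lemma hke₁ (k : ℕ) : (k:ℝ) • e₁ + e₃ = ![(k:ℝ),0,1] := by
  funext i; fin_cases i <;> simp [e₁, e₃, Pi.single_apply]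
lemma hzero : (0 : Fin 3 → ℝ) = ![0,0,0] := by
  funext i; fin_cases i <;> simp

lemma Ff_vec (c : Fin 3 → ℝ) (x0 x1 x2 : ℝ) :
    Ff c ![x0,x1,x2] = c 0 * x0 + c 1 * x1 + c 2 * x2 := by
  simp [Ff]

/-- A bound on the generators gives a bound on `P₁ k`. -/
lemma P1_bound (k : ℕ) (c : Fin 3 → ℝ) (a b : ℝ)
    (h1 : Ff c ![1,0,0] ∈ Icc a b) (h2 : Ff c ![0,1,0] ∈ Icc a b)
    (h3 : Ff c ![1,1,0] ∈ Icc a b) (h4 : Ff c ![0,2,0] ∈ Icc a b)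
    (h5 : Ff c ![0,(k:ℝ),1] ∈ Icc a b) :
    ∀ x ∈ P₁ k, Ff c x ∈ Icc a b := by
  intro x hx
  refine convexHull_min ?_ (slab_convex c a b) hx
  intro y hy
  simp only [Set.mem_insert_iff, Set.mem_singleton_iff] at hy
  rcases hy with rfl | rfl | rfl | rfl | rfl
  · rw [he₁]; exact h1
  · rw [he₂]; exact h2
  · rw [he₁₂]; exact h3
  · rw [h2e₂]; exact h4
  · rw [hke₂]; exact h5

lemma P2_bound (k : ℕ) (c : Fin 3 → ℝ) (a b : ℝ)
    (h1 : Ff c ![1,0,0] ∈ Icc a b) (h2 : Ff c ![0,1,0] ∈ Icc a b)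
    (h3 : Ff c ![1,1,0] ∈ Icc a b) (h4 : Ff c ![2,0,0] ∈ Icc a b)
    (h5 : Ff c ![(k:ℝ),0,1] ∈ Icc a b) :
    ∀ x ∈ P₂ k, Ff c x ∈ Icc a b := by
  intro x hx
  refine convexHull_min ?_ (slab_convex c a b) hx
  intro y hy
  simp only [Set.mem_insert_iff, Set.mem_singleton_iff] at hy
  rcases hy with rfl | rfl | rfl | rfl | rfl
  · rw [he₁]; exact h1
  · rw [he₂]; exact h2
  · rw [he₁₂]; exact h3
  · rw [h2e₁]; exact h4
  · rw [hke₁]; exact h5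

lemma P3_bound (c : Fin 3 → ℝ) (a b : ℝ)
    (h0 : Ff c ![0,0,0] ∈ Icc a b)
    (h1 : Ff c ![1,0,0] ∈ Icc a b) (h2 : Ff c ![0,1,0] ∈ Icc a b)
    (h3 : Ff c ![1,1,0] ∈ Icc a b) (h5 : Ff c ![0,0,1] ∈ Icc a b) :
    ∀ x ∈ P₃, Ff c x ∈ Icc a b := by
  intro x hx
  refine convexHull_min ?_ (slab_convex c a b) hx
  intro y hy
  simp only [Set.mem_insert_iff, Set.mem_singleton_iff] at hy
  rcases hy with rfl | rfl | rfl | rfl | rfl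
  · rw [hzero]; exact h0
  · rw [he₁]; exact h1
  · rw [he₂]; exact h2
  · rw [he₁₂]; exact h3
  · rw [he₃]; exact h5

/- ### The proofs of the individual slab bounds -/

lemma b1a (k : ℕ) : ∀ x ∈ P₁ k, Ff ![1,1,1-(k:ℝ)] x ∈ Icc 1 2 := by
  apply P1_bound <;> rw [Ff_vec] <;> norm_num [Matrix.cons_val_two]

lemma b1b (k : ℕ) : ∀ x ∈ P₁ k, Ff ![1,1,2-(k:ℝ)] x ∈ Icc 1 2 := by
  apply P1_bound <;> rw [Ff_vec] <;> norm_num [Matrix.cons_val_two]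

lemma b1x (k : ℕ) : ∀ x ∈ P₁ k, Ff ![1,0,0] x ∈ Icc 0 1 := by
  apply P1_bound <;> rw [Ff_vec] <;> norm_num [Matrix.cons_val_two]

lemma b1xz (k : ℕ) : ∀ x ∈ P₁ k, Ff ![1,0,1] x ∈ Icc 0 1 := by
  apply P1_bound <;> rw [Ff_vec] <;> norm_num [Matrix.cons_val_two]

lemma b1z (k : ℕ) : ∀ x ∈ P₁ k, Ff ![0,0,1] x ∈ Icc 0 1 := by
  apply P1_bound <;> rw [Ff_vec] <;> norm_num [Matrix.cons_val_two]

lemma b2a (k : ℕ) : ∀ x ∈ P₂ k, Ff ![1,1,1-(k:ℝ)] x ∈ Icc 1 2 := by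
  apply P2_bound <;> rw [Ff_vec] <;> norm_num [Matrix.cons_val_two]

lemma b2b (k : ℕ) : ∀ x ∈ P₂ k, Ff ![1,1,2-(k:ℝ)] x ∈ Icc 1 2 := by
  apply P2_bound <;> rw [Ff_vec] <;> norm_num [Matrix.cons_val_two]

lemma b2y (k : ℕ) : ∀ x ∈ P₂ k, Ff ![0,1,0] x ∈ Icc 0 1 := by
  apply P2_bound <;> rw [Ff_vec] <;> norm_num [Matrix.cons_val_two]

lemma b2yz (k : ℕ) : ∀ x ∈ P₂ k, Ff ![0,1,1] x ∈ Icc 0 1 := by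
  apply P2_bound <;> rw [Ff_vec] <;> norm_num [Matrix.cons_val_two]

lemma b2z (k : ℕ) : ∀ x ∈ P₂ k, Ff ![0,0,1] x ∈ Icc 0 1 := by
  apply P2_bound <;> rw [Ff_vec] <;> norm_num [Matrix.cons_val_two]

lemma b3x : ∀ x ∈ P₃, Ff ![1,0,0] x ∈ Icc 0 1 := by
  apply P3_bound <;> rw [Ff_vec] <;> norm_num [Matrix.cons_val_two]

lemma b3y : ∀ x ∈ P₃, Ff ![0,1,0] x ∈ Icc 0 1 := by
  apply P3_bound <;> rw [Ff_vec] <;> norm_num [Matrix.cons_val_two]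

lemma b3xz : ∀ x ∈ P₃, Ff ![1,0,1] x ∈ Icc 0 1 := by
  apply P3_bound <;> rw [Ff_vec] <;> norm_num [Matrix.cons_val_two]

lemma b3yz : ∀ x ∈ P₃, Ff ![0,1,1] x ∈ Icc 0 1 := by
  apply P3_bound <;> rw [Ff_vec] <;> norm_num [Matrix.cons_val_two]

lemma b3z : ∀ x ∈ P₃, Ff ![0,0,1] x ∈ Icc 0 1 := by
  apply P3_bound <;> rw [Ff_vec] <;> norm_num [Matrix.cons_val_two]

/- ### Evaluating the functionals at lattice points -/

lemma Ff_lat (c : Fin 3 → ℝ) {y : Fin 3 → ℝ} {m0 m1 m2 : ℤ}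
    (h0 : y 0 = (m0:ℝ)) (h1 : y 1 = (m1:ℝ)) (h2 : y 2 = (m2:ℝ)) :
    Ff c y = c 0 * m0 + c 1 * m1 + c 2 * m2 := by
  simp [Ff, h0, h1, h2]

lemma Ff_lat_vec (c0 c1 c2 : ℝ) {y : Fin 3 → ℝ} {m0 m1 m2 : ℤ}
    (h0 : y 0 = (m0:ℝ)) (h1 : y 1 = (m1:ℝ)) (h2 : y 2 = (m2:ℝ)) :
    Ff ![c0,c1,c2] y = c0 * m0 + c1 * m1 + c2 * m2 := by
  simp [Ff, h0, h1, h2]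

lemma hollow_of (P : Set (Fin 3 → ℝ))
    (h : ∀ y ∈ interior P, ∀ m0 m1 m2 : ℤ,
      y 0 = (m0:ℝ) → y 1 = (m1:ℝ) → y 2 = (m2:ℝ) → False) : IsHollow3 P := by
  rw [IsHollow3, Set.eq_empty_iff_forall_notMem]
  rintro y ⟨hy, hlat⟩
  obtain ⟨m0, hm0⟩ := hlat 0
  obtain ⟨m1, hm1⟩ := hlat 1
  obtain ⟨m2, hm2⟩ := hlat 2
  exact h y hy m0 m1 m2 hm0 hm1 hm2

/- ### Main theorem -/

/-- Each of `P₁ᵏ, P₂ᵏ, P₃` and each pairwise Minkowski sum is hollow; hence the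
triple has mixed degree at most one. -/
theorem family_mixed_degree_at_most_one (k : ℕ) :
    IsHollow3 (P₁ k) ∧ IsHollow3 (P₂ k) ∧ IsHollow3 P₃ ∧
      IsHollow3 (P₁ k + P₂ k) ∧ IsHollow3 (P₁ k + P₃) ∧
      IsHollow3 (P₂ k + P₃) := by
  have c0a : (![1,1,1-(k:ℝ)] : Fin 3 → ℝ) 0 ≠ 0 := by norm_num
  have c0b : (![1,1,2-(k:ℝ)] : Fin 3 → ℝ) 0 ≠ 0 := by norm_num
  have c0x : (![(1:ℝ),0,0] : Fin 3 → ℝ) 0 ≠ 0 := by norm_num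
  have c0y : (![(0:ℝ),1,0] : Fin 3 → ℝ) 1 ≠ 0 := by norm_num
  have c0z : (![(0:ℝ),0,1] : Fin 3 → ℝ) 2 ≠ 0 := by norm_num [Matrix.cons_val_two]
  refine ⟨?_, ?_, ?_, ?_, ?_, ?_⟩ <;> apply hollow_of <;>
    intro y hy m0 m1 m2 hm0 hm1 hm2
  · -- P₁ k
    have H := interior_strict (b1a k) 0 c0a hy
    rw [Ff_lat_vec _ _ _ hm0 hm1 hm2] at H
    obtain ⟨h1, h2⟩ := H
    have h3 : (1:ℝ) < ((m0 + m1 + (1 - (k:ℤ)) * m2 : ℤ) : ℝ) := by push_cast; nlinarith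
    have h4 : ((m0 + m1 + (1 - (k:ℤ)) * m2 : ℤ) : ℝ) < 2 := by push_cast; nlinarith
    have h5 : (1:ℤ) < m0 + m1 + (1 - (k:ℤ)) * m2 := by exact_mod_cast h3
    have h6 : m0 + m1 + (1 - (k:ℤ)) * m2 < 2 := by exact_mod_cast h4
    omega
  · -- P₂ k
    have H := interior_strict (b2a k) 0 c0a hy
    rw [Ff_lat_vec _ _ _ hm0 hm1 hm2] at H
    obtain ⟨h1, h2⟩ := H
    have h3 : (1:ℝ) < ((m0 + m1 + (1 - (k:ℤ)) * m2 : ℤ) : ℝ) := by push_cast; nlinarith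
    have h4 : ((m0 + m1 + (1 - (k:ℤ)) * m2 : ℤ) : ℝ) < 2 := by push_cast; nlinarith
    have h5 : (1:ℤ) < m0 + m1 + (1 - (k:ℤ)) * m2 := by exact_mod_cast h3
    have h6 : m0 + m1 + (1 - (k:ℤ)) * m2 < 2 := by exact_mod_cast h4
    omega
  · -- P₃
    have H := interior_strict b3z 2 c0z hy
    rw [Ff_lat_vec _ _ _ hm0 hm1 hm2] at H
    obtain ⟨h1, h2⟩ := H
    have h3 : (0:ℝ) < ((m2 : ℤ) : ℝ) := by push_cast; nlinarith
    have h4 : ((m2 : ℤ) : ℝ) < 1 := by push_cast; nlinarith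
    have h5 : (0:ℤ) < m2 := by exact_mod_cast h3
    have h6 : m2 < 1 := by exact_mod_cast h4
    omega
  · -- P₁ k + P₂ k
    have HA := interior_strict (sum_bound (b1a k) (b2a k)) 0 c0a hy
    have HB := interior_strict (sum_bound (b1b k) (b2b k)) 0 c0b hy
    have HZ := interior_strict (sum_bound (b1z k) (b2z k)) 2 c0z hy
    rw [Ff_lat_vec _ _ _ hm0 hm1 hm2] at HA HB HZ
    obtain ⟨a1, a2⟩ := HA
    obtain ⟨b1, b2⟩ := HB
    obtain ⟨z1, z2⟩ := HZ
    have hA1 : (2:ℝ) < ((m0 + m1 + (1 - (k:ℤ)) * m2 : ℤ) : ℝ) := by push_cast; nlinarith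
    have hA2 : ((m0 + m1 + (1 - (k:ℤ)) * m2 : ℤ) : ℝ) < 4 := by push_cast; nlinarith
    have hB1 : (2:ℝ) < ((m0 + m1 + (2 - (k:ℤ)) * m2 : ℤ) : ℝ) := by push_cast; nlinarith
    have hB2 : ((m0 + m1 + (2 - (k:ℤ)) * m2 : ℤ) : ℝ) < 4 := by push_cast; nlinarith
    have hZ1 : (0:ℝ) < ((m2 : ℤ) : ℝ) := by push_cast; nlinarith
    have hZ2 : ((m2 : ℤ) : ℝ) < 2 := by push_cast; nlinarith
    have hA1' : (2:ℤ) < m0 + m1 + (1 - (k:ℤ)) * m2 := by exact_mod_cast hA1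
    have hA2' : m0 + m1 + (1 - (k:ℤ)) * m2 < 4 := by exact_mod_cast hA2
    have hB1' : (2:ℤ) < m0 + m1 + (2 - (k:ℤ)) * m2 := by exact_mod_cast hB1
    have hB2' : m0 + m1 + (2 - (k:ℤ)) * m2 < 4 := by exact_mod_cast hB2
    have hZ1' : (0:ℤ) < m2 := by exact_mod_cast hZ1
    have hZ2' : m2 < 2 := by exact_mod_cast hZ2
    have e1 : m0 + m1 + (1 - (k:ℤ)) * m2 = 3 := by omega
    have e2 : m0 + m1 + (2 - (k:ℤ)) * m2 = 3 := by omega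
    have e3 : m2 = 0 := by nlinarith [e1, e2]
    omega
  · -- P₁ k + P₃
    have HX := interior_strict (sum_bound (b1x k) b3x) 0 c0x hy
    have HXZ := interior_strict (sum_bound (b1xz k) b3xz) 0 c0x hy
    have HZ := interior_strict (sum_bound (b1z k) b3z) 2 c0z hy
    rw [Ff_lat_vec _ _ _ hm0 hm1 hm2] at HX HXZ HZ
    obtain ⟨a1, a2⟩ := HX
    obtain ⟨b1, b2⟩ := HXZ
    obtain ⟨z1, z2⟩ := HZ
    have hA1 : (0:ℝ) < ((m0 : ℤ) : ℝ) := by push_cast; nlinarith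
    have hA2 : ((m0 : ℤ) : ℝ) < 2 := by push_cast; nlinarith
    have hB1 : (0:ℝ) < ((m0 + m2 : ℤ) : ℝ) := by push_cast; nlinarith
    have hB2 : ((m0 + m2 : ℤ) : ℝ) < 2 := by push_cast; nlinarith
    have hZ1 : (0:ℝ) < ((m2 : ℤ) : ℝ) := by push_cast; nlinarith
    have hZ2 : ((m2 : ℤ) : ℝ) < 2 := by push_cast; nlinarith
    have hA1' : (0:ℤ) < m0 := by exact_mod_cast hA1
    have hA2' : m0 < 2 := by exact_mod_cast hA2
    have hB1' : (0:ℤ) < m0 + m2 := by exact_mod_cast hB1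
    have hB2' : m0 + m2 < 2 := by exact_mod_cast hB2
    have hZ1' : (0:ℤ) < m2 := by exact_mod_cast hZ1
    have hZ2' : m2 < 2 := by exact_mod_cast hZ2
    omega
  · -- P₂ k + P₃
    have HX := interior_strict (sum_bound (b2y k) b3y) 1 c0y hy
    have HXZ := interior_strict (sum_bound (b2yz k) b3yz) 1 c0y hy
    have HZ := interior_strict (sum_bound (b2z k) b3z) 2 c0z hy
    rw [Ff_lat_vec _ _ _ hm0 hm1 hm2] at HX HXZ HZ
    obtain ⟨a1, a2⟩ := HX
    obtain ⟨b1, b2⟩ := HXZ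
    obtain ⟨z1, z2⟩ := HZ
    have hA1 : (0:ℝ) < ((m1 : ℤ) : ℝ) := by push_cast; nlinarith
    have hA2 : ((m1 : ℤ) : ℝ) < 2 := by push_cast; nlinarith
    have hB1 : (0:ℝ) < ((m1 + m2 : ℤ) : ℝ) := by push_cast; nlinarith
    have hB2 : ((m1 + m2 : ℤ) : ℝ) < 2 := by push_cast; nlinarith
    have hZ1 : (0:ℝ) < ((m2 : ℤ) : ℝ) := by push_cast; nlinarith
    have hZ2 : ((m2 : ℤ) : ℝ) < 2 := by push_cast; nlinarith
    have hA1' : (0:ℤ) < m1 := by exact_mod_cast hA1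
    have hA2' : m1 < 2 := by exact_mod_cast hA2
    have hB1' : (0:ℤ) < m1 + m2 := by exact_mod_cast hB1
    have hB2' : m1 + m2 < 2 := by exact_mod_cast hB2
    have hZ1' : (0:ℤ) < m2 := by exact_mod_cast hZ1
    have hZ2' : m2 < 2 := by exact_mod_cast hZ2
    omega
end
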